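/- arXiv:2005.14125 — 8 statements merged into one kernel-verified Lean document; each statement's English description precedes it below -/
import Mathlib

section
/- Let X be an arbitrary set and h_1, ..., h_r : X → ℝ be arbitrarily fixed functions. A function f : X → ℝ belongs to B(h_1, ..., h_r; X) if and only if for every cycle {x_1, ..., x_n} ⊆ X with respect to h_1, ..., h_r and every associated vector of nonzero reals λ_1, ..., λ_n, one has ∑_{j=1}^n λ_j f(x_j) = 0. -/
/-!
Encode a weighted family `(xⱼ, λⱼ)` as the finitely supported function `l = ∑ⱼ λⱼ δ_{xⱼ}` on `X`.
It is a cycle iff every marginal `(hᵢ)_* l` vanishes, and `∑ⱼ λⱼ f(xⱼ)` is the pairing of `f`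
with `l`. A function `f` lies in `B(h₁, …, h_r; X)` iff this pairing factors through the
marginal map, and over a field a functional factors through a linear map iff it vanishes on
its kernel (the range of the dual map is the annihilator of the kernel).
-/

open Finsupp LinearMap

section

variable {X Y ι K : Type*}

theorem Finsupp.exists_injective_eq_sum_single {M : Type*} [AddCommMonoid M] (l : X →₀ M) :
    ∃ (n : ℕ) (x : Fin n → X) (c : Fin n → M),
      Function.Injective x ∧ (∀ j, c j ≠ 0) ∧ ∑ j, single (x j) (c j) = l := by
  let e := l.support.equivFin
  refine ⟨_, fun j => e.symm j, fun j => l (e.symm j),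
    Subtype.val_injective.comp e.symm.injective, fun j => mem_support_iff.mp (e.symm j).2, ?_⟩
  conv_rhs => rw [← l.sum_single, Finsupp.sum, ← Finset.sum_coe_sort]
  exact e.symm.sum_comp fun a => single (a : X) (l a)

theorem Finsupp.sum_single_apply {M : Type*} [AddCommMonoid M] [DecidableEq Y] {n : ℕ}
    (y : Fin n → Y) (c : Fin n → M) (t : Y) :
    (∑ j, single (y j) (c j)) t = ∑ j ∈ Finset.univ.filter (fun j => y j = t), c j := by
  simp [finsetSum_apply, single_apply, Finset.sum_filter]

section Marginals

variable (K) [CommSemiring K]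

noncomputable def marginals (h : ι → X → Y) : (X →₀ K) →ₗ[K] ι → Y →₀ K :=
  LinearMap.pi fun i => lmapDomain K K (h i)

theorem sum_single_mem_ker_marginals_iff [DecidableEq Y] (h : ι → X → Y) {n : ℕ}
    (x : Fin n → X) (c : Fin n → K) :
    ∑ j, single (x j) (c j) ∈ ker (marginals K h) ↔
      ∀ i t, ∑ j ∈ Finset.univ.filter (fun j => h i (x j) = t), c j = 0 := by
  simp only [marginals, mem_ker, pi_apply, lmapDomain_apply, mapDomain_finsetSum,
    mapDomain_single, funext_iff, Pi.zero_apply, Finsupp.ext_iff, coe_zero,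
    sum_single_apply (fun j => h _ (x j))]

theorem lsum_comp_marginals [Fintype ι] [DecidableEq ι] (h : ι → X → Y)
    (g : ι → (Y →₀ K) →ₗ[K] K) :
    LinearMap.lsum K (fun _ => Y →₀ K) K g ∘ₗ marginals K h =
      linearCombination K (fun x => ∑ i, g i (single (h i x) 1)) := by
  ext x
  simp [marginals]

end Marginals

theorem LinearMap.exists_dual_comp_eq_iff_ker_le [Field K] {V W : Type*} [AddCommGroup V]
    [Module K V] [AddCommGroup W] [Module K W] (T : V →ₗ[K] W) (φ : Module.Dual K V) :
    (∃ ψ : Module.Dual K W, ψ ∘ₗ T = φ) ↔ ker T ≤ ker φ :=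
  calc (∃ ψ, ψ ∘ₗ T = φ) ↔ φ ∈ range T.dualMap := Iff.rfl
    _ ↔ φ ∈ (ker T).dualAnnihilator := by rw [range_dualMap_eq_dualAnnihilator_ker]
    _ ↔ ker T ≤ ker φ := Submodule.mem_dualAnnihilator φ

theorem exists_eq_sum_comp_iff_ker_marginals_le [Field K] [Fintype ι] [DecidableEq ι]
    (h : ι → X → Y) (f : X → K) :
    (∃ g : ι → Y → K, ∀ x, f x = ∑ i, g i (h i x)) ↔
      ker (marginals K h) ≤ ker (linearCombination K f) := by
  rw [← exists_dual_comp_eq_iff_ker_le]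
  constructor
  · rintro ⟨g, hg⟩
    obtain rfl : f = fun x => ∑ i, g i (h i x) := funext hg
    exact ⟨LinearMap.lsum K _ K fun i => linearCombination K (g i), by
      rw [lsum_comp_marginals]; simp⟩
  · rintro ⟨ψ, hψ⟩
    refine ⟨fun i y => ψ (Pi.single i (single y 1)), fun x => ?_⟩
    rw [← (LinearMap.lsum K _ K).apply_symm_apply ψ, lsum_comp_marginals] at hψ
    simpa using congr($hψ (single x 1)).symm

theorem ker_marginals_le_iff [CommSemiring K] [DecidableEq Y] (h : ι → X → Y) (f : X → K) :
    ker (marginals K h) ≤ ker (linearCombination K f) ↔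
      ∀ (n : ℕ) (x : Fin n → X) (c : Fin n → K), Function.Injective x → (∀ j, c j ≠ 0) →
        (∀ i t, ∑ j ∈ Finset.univ.filter (fun j => h i (x j) = t), c j = 0) →
        ∑ j, c j * f (x j) = 0 := by
  have linearCombination_sum_single : ∀ {n : ℕ} (x : Fin n → X) (c : Fin n → K),
      linearCombination K f (∑ j, single (x j) (c j)) = ∑ j, c j * f (x j) := by
    simp
  constructor
  · intro hle n x c _ _ hcycle
    rw [← linearCombination_sum_single]
    exact hle ((sum_single_mem_ker_marginals_iff K h x c).mpr hcycle)
  · intro H l hl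
    obtain ⟨n, x, c, hx, hc, rfl⟩ := l.exists_injective_eq_sum_single
    rw [mem_ker, linearCombination_sum_single]
    exact H n x c hx hc ((sum_single_mem_ker_marginals_iff K h x c).mp hl)

end

/-- A function `f : X → ℝ` is a sum `∑ᵢ gᵢ ∘ hᵢ` (i.e. belongs to
`B(h₁,...,h_r; X)`) if and only if `∑ⱼ λⱼ f(xⱼ) = 0` for every cycle
`{x₁,...,x_n} ⊆ X` with respect to `h₁,...,h_r` and every associated vector
of nonzero reals `λ₁,...,λ_n`. -/
theorem stmt0 {X : Type*} {r : ℕ} (h : Fin r → X → ℝ) (f : X → ℝ) :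
    (∃ g : Fin r → ℝ → ℝ, ∀ x : X, f x = ∑ i, g i (h i x)) ↔
    (∀ (n : ℕ) (x : Fin n → X) (lam : Fin n → ℝ),
      Function.Injective x → (∀ j, lam j ≠ 0) →
      (∀ (i : Fin r) (t : ℝ),
        ∑ j ∈ Finset.univ.filter (fun j => h i (x j) = t), lam j = 0) →
      ∑ j, lam j * f (x j) = 0) :=
  (exists_eq_sum_comp_iff_ker_marginals_le h f).trans (ker_marginals_le_iff h f)
end

section
/- Let X be a compact subset of ℝ^d and a^1, ..., a^r be nonzero vectors (directions) in ℝ^d. If every continuous function on X can be written as ∑_{i=1}^r g_i(a^i·x) with each summand g_i(a^i·x) continuous on X (i.e., R_c(a^1, ..., a^r; X) = C(X)), then every real-valued function on X, without any regularity assumption, can be written as ∑_{i=1}^r g_i(a^i·x) for some functions g_i : ℝ → ℝ (i.e., R(a^1, ..., a^r; X) = T(X)). -/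
/-!
Every function on a finite set is the restriction of a continuous one, so by hypothesis every
`f` is a sum of ridge functions on each finite subset of `X`. Writing `f` as
`∑ i, g i (a i ⬝ᵥ x)` is a linear system in the unknowns `g i t`, with one equation per point of
`X`, each involving only `r` unknowns. Such a system is solvable as soon as every finite
subsystem is: the functional `c ↦ ∑ c x * f x` on `X →₀ ℝ` then vanishes on the kernel of the
coefficient map, hence factors through it, and a functional on its range extends to the whole
space.
-/

open Finsupp

theorem LinearMap.exists_comp_eq_of_ker_le {K M V W : Type*} [Field K]
    [AddCommGroup M] [Module K M] [AddCommGroup V] [Module K V] [AddCommGroup W] [Module K W]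
    {T : M →ₗ[K] V} {φ : M →ₗ[K] W} (h : ker T ≤ ker φ) : ∃ L : V →ₗ[K] W, L ∘ₗ T = φ := by
  obtain ⟨L, hL⟩ := IsSemisimpleModule.extension_property ((ker T).liftQ T le_rfl)
    (LinearMap.ker_eq_bot.mp (Submodule.ker_liftQ_eq_bot _ _ _ le_rfl)) ((ker T).liftQ φ h)
  exact ⟨L, LinearMap.ext fun m => congrArg (· (Submodule.Quotient.mk m)) hL⟩

theorem Finsupp.exists_linearCombination_eq_of_forall_finset {K S κ : Type*} [Field K]
    (w : S → κ →₀ K) (f : S → K)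
    (hfin : ∀ F : Finset S, ∃ g : κ → K, ∀ s ∈ F, linearCombination K g (w s) = f s) :
    ∃ g : κ → K, ∀ s, linearCombination K g (w s) = f s := by
  have hker : LinearMap.ker (linearCombination K w) ≤ LinearMap.ker (linearCombination K f) := by
    intro c hc
    obtain ⟨g, hg⟩ := hfin c.support
    calc linearCombination K f c
        = linearCombination K (fun s => linearCombination K g (w s)) c := by
          rw [linearCombination_apply, linearCombination_apply]
          exact Finsupp.sum_congr fun s hs => by rw [hg s hs]
      _ = linearCombination K g (linearCombination K w c) :=
          (linearCombination_linearCombination (R := K) g w c).symm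
      _ = 0 := by rw [LinearMap.mem_ker.mp hc, map_zero]
  obtain ⟨L, hL⟩ := LinearMap.exists_comp_eq_of_ker_le hker
  have hLg : linearCombination K (fun k => L (single k 1)) = L := lhom_ext' fun k =>
    LinearMap.ext_ring (linearCombination_single K 1 k |>.trans (one_smul K _))
  refine ⟨fun k => L (single k 1), fun s => ?_⟩
  simpa [hLg, linearCombination_single] using LinearMap.congr_fun hL (single s 1)

theorem exists_sum_comp_eq_of_forall_finset {K S ι β : Type*} [Field K] [Fintype ι]
    (π : ι → S → β) (f : S → K)
    (hfin : ∀ F : Finset S, ∃ g : ι → β → K, ∀ s ∈ F, f s = ∑ i, g i (π i s)) :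
    ∃ g : ι → β → K, ∀ s, f s = ∑ i, g i (π i s) := by
  have hsum (g : ι × β → K) (s : S) :
      linearCombination K g (∑ i, single (i, π i s) 1) = ∑ i, g (i, π i s) := by
    simp [map_sum, linearCombination_single]
  obtain ⟨g, hg⟩ := exists_linearCombination_eq_of_forall_finset
    (fun s => ∑ i, single (i, π i s) (1 : K)) f fun F => by
      obtain ⟨g, hg⟩ := hfin F
      exact ⟨fun p => g p.1 p.2, fun s hs => (hsum _ s).trans (hg s hs).symm⟩
  exact ⟨fun i b => g (i, b), fun s => (hg s).symm.trans (hsum g s)⟩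

theorem exists_continuous_eqOn_of_finite {X : Type*} [TopologicalSpace X] [T1Space X]
    [NormalSpace X] {s : Set X} (hs : s.Finite) (f : X → ℝ) :
    ∃ h : C(X, ℝ), Set.EqOn h f s := by
  have : DiscreteTopology s := hs.isDiscrete.to_subtype
  obtain ⟨h, hh⟩ := ContinuousMap.exists_restrict_eq hs.isClosed
    ⟨s.domRestrict f, continuous_of_discreteTopology⟩
  exact ⟨h, fun x hx => congrArg (· ⟨x, hx⟩) hh⟩

theorem stmt2_general {d r : ℕ} (X : Set (Fin d → ℝ))
    (a : Fin r → Fin d → ℝ)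
    (hyp : ∀ f : (Fin d → ℝ) → ℝ, ContinuousOn f X →
      ∃ g : Fin r → ℝ → ℝ,
        (∀ i, ContinuousOn (fun x : Fin d → ℝ => g i (∑ t, a i t * x t)) X) ∧
        ∀ x ∈ X, f x = ∑ i, g i (∑ t, a i t * x t)) :
    ∀ f : (Fin d → ℝ) → ℝ, ∃ g : Fin r → ℝ → ℝ,
      ∀ x ∈ X, f x = ∑ i, g i (∑ t, a i t * x t) := by
  intro f
  obtain ⟨g, hg⟩ := exists_sum_comp_eq_of_forall_finset (S := X)
    (fun i x => ∑ t, a i t * x.1 t) (fun x => f x) fun F => by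
      obtain ⟨h, hh⟩ := exists_continuous_eqOn_of_finite (F.finite_toSet.image Subtype.val) f
      obtain ⟨g, -, hg⟩ := hyp h h.continuous.continuousOn
      exact ⟨g, fun x hx => (hh ⟨x, hx, rfl⟩).symm.trans (hg x x.2)⟩
  exact ⟨g, fun x hx => hg ⟨x, hx⟩⟩

/-- If every continuous function on a compact set `X ⊆ ℝᵈ` is a sum of ridge
functions with fixed directions `a¹,...,aʳ` and continuous summands
(`R_c(a¹,...,aʳ; X) = C(X)`), then every real-valued function on `X` is a sum
of ridge functions with these directions (`R(a¹,...,aʳ; X) = T(X)`). -/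
theorem stmt2 {d r : ℕ} (X : Set (Fin d → ℝ)) (hX : IsCompact X)
    (a : Fin r → Fin d → ℝ) (ha : ∀ i, a i ≠ 0)
    (hyp : ∀ f : (Fin d → ℝ) → ℝ, ContinuousOn f X →
      ∃ g : Fin r → ℝ → ℝ,
        (∀ i, ContinuousOn (fun x : Fin d → ℝ => g i (∑ t, a i t * x t)) X) ∧
        ∀ x ∈ X, f x = ∑ i, g i (∑ t, a i t * x t)) :
    ∀ f : (Fin d → ℝ) → ℝ, ∃ g : Fin r → ℝ → ℝ,
      ∀ x ∈ X, f x = ∑ i, g i (∑ t, a i t * x t) :=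
  stmt2_general X a hyp
end

section
/- Let a = (a_1, a_2) and b = (b_1, b_2) be linearly independent vectors in ℝ², let c_1 < d_1 and c_2 < d_2, and let Ω = {x ∈ ℝ² : c_1 ≤ a·x ≤ d_1, c_2 ≤ b·x ≤ d_2}. Suppose f ∈ C(Ω) has continuous second partial derivatives ∂²f/∂x_1², ∂²f/∂x_1∂x_2, ∂²f/∂x_2² on Ω and that for all x ∈ Ω, (∂²f/∂x_1∂x_2)(a_1b_2 + a_2b_1) − (∂²f/∂x_1²)a_2b_2 − (∂²f/∂x_2²)a_1b_1 ≥ 0. Then E(f, R(a, b)) = (1/4)(f_1(c_1, c_2) + f_1(d_1, d_2) − f_1(c_1, d_2) − f_1(d_1, c_2)), where f_1(y_1, y_2) = f((y_1b_2 − y_2a_2)/(a_1b_2 − a_2b_1), (y_2a_1 − y_1b_1)/(a_1b_2 − a_2b_1)). -/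
/-!
In the coordinates `y = (a·x, b·x)` the domain becomes the rectangle `[c₁, d₁] × [c₂, d₂]`,
ridge functions become functions of a single coordinate, and the differential inequality says
that `F = f₁` has nonnegative mixed derivative `∂²F/∂y₁∂y₂`, hence nonnegative increments
`F(s,t) + F(s',t') - F(s,t') - F(s',t)` over every subrectangle. Let `L` be the increment over the
whole rectangle. For any `g₁, g₂` the errors at the four corners have alternating sum `L`, so one
of them is at least `L / 4`. Conversely, taking for `g₁(σ)` the mean of `F(σ,c₂), F(σ,d₂)` and for
`g₂(τ)` the mean of `F(c₁,τ), F(d₁,τ)` minus the mean of the corner values, the error at `(σ,τ)`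
is a quarter of a signed sum of the increments over the four subrectangles cut out by `(σ,τ)`,
whose total is `L`.
-/

open Set

def rectIncrement (F : ℝ → ℝ → ℝ) (s s' t t' : ℝ) : ℝ :=
  F s t + F s' t' - F s t' - F s' t

def RectIncrementNonneg (F : ℝ → ℝ → ℝ) (c1 d1 c2 d2 : ℝ) : Prop :=
  ∀ s s' t t', c1 ≤ s → s ≤ s' → s' ≤ d1 → c2 ≤ t → t ≤ t' → t' ≤ d2 →
    0 ≤ rectIncrement F s s' t t'

theorem ContinuousOn.continuous_comp_projIcc {φ : ℝ → ℝ} {a b : ℝ} (h : a ≤ b)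
    (hφ : ContinuousOn φ (Icc a b)) : Continuous fun x => φ (projIcc a b h x) :=
  hφ.comp_continuous (continuous_subtype_val.comp continuous_projIcc) fun x => (projIcc a b h x).2

theorem monotoneOn_Icc_of_hasDerivWithinAt_nonneg {φ φ' : ℝ → ℝ} {a b : ℝ}
    (hφ : ∀ x ∈ Icc a b, HasDerivWithinAt φ (φ' x) (Icc a b) x) (hφ' : ∀ x ∈ Icc a b, 0 ≤ φ' x) :
    MonotoneOn φ (Icc a b) :=
  monotoneOn_of_hasDerivWithinAt_nonneg (convex_Icc a b)
    (fun x hx => (hφ x hx).continuousWithinAt)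
    (fun x hx => (hφ x (interior_subset hx)).mono interior_subset)
    (fun x hx => hφ' x (interior_subset hx))

section Derivatives

variable {E : Type*} [NormedAddCommGroup E] [NormedSpace ℝ E] {g : ℝ × ℝ → E}
  {g' : ℝ × ℝ →L[ℝ] E} {s : Set (ℝ × ℝ)} {I : Set ℝ} {σ τ : ℝ}

theorem HasFDerivWithinAt.hasDerivWithinAt_prodMk_const_right
    (hg : HasFDerivWithinAt g g' s (σ, τ)) (hI : MapsTo (fun σ => (σ, τ)) I s) :
    HasDerivWithinAt (fun σ => g (σ, τ)) (g' (1, 0)) I σ :=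
  hg.comp_hasDerivWithinAt σ ((hasDerivWithinAt_id σ I).prodMk (hasDerivWithinAt_const σ I τ)) hI

theorem HasFDerivWithinAt.hasDerivWithinAt_prodMk_const_left
    (hg : HasFDerivWithinAt g g' s (σ, τ)) (hI : MapsTo (fun τ => (σ, τ)) I s) :
    HasDerivWithinAt (fun τ => g (σ, τ)) (g' (0, 1)) I τ :=
  hg.comp_hasDerivWithinAt τ ((hasDerivWithinAt_const τ I σ).prodMk (hasDerivWithinAt_id τ I)) hI

end Derivatives

theorem iteratedFDerivWithin_two_comp_continuousLinearEquiv {E F : Type*}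
    [NormedAddCommGroup E] [NormedSpace ℝ E] [NormedAddCommGroup F] [NormedSpace ℝ F]
    (e : F ≃L[ℝ] E) {f : E → ℝ} {s : Set E} (hs : UniqueDiffOn ℝ s) {x : F} (hx : e x ∈ s)
    (v w : F) :
    iteratedFDerivWithin ℝ 2 (f ∘ e) (e ⁻¹' s) x ![v, w] =
      fderivWithin ℝ (fderivWithin ℝ f s) s (e x) (e v) (e w) := by
  rw [e.iteratedFDerivWithin_comp_right f hs hx,
    ContinuousMultilinearMap.compContinuousLinearMap_apply, iteratedFDerivWithin_two_apply f hs hx]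
  rfl

theorem Homeomorph.preimage_subset_closure_interior {X Y : Type*} [TopologicalSpace X]
    [TopologicalSpace Y] (h : X ≃ₜ Y) {s : Set Y} (hs : s ⊆ closure (interior s)) :
    h ⁻¹' s ⊆ closure (interior (h ⁻¹' s)) := by
  rw [← h.preimage_interior, ← h.preimage_closure]
  exact preimage_mono hs

section Rectangle

variable {c1 d1 c2 d2 : ℝ}

theorem rectIncrement_le_of_abs_le_on_corners {F : ℝ → ℝ → ℝ} {g1 g2 : ℝ → ℝ} {M : ℝ}
    (h : ∀ σ ∈ ({c1, d1} : Set ℝ), ∀ τ ∈ ({c2, d2} : Set ℝ), |F σ τ - g1 σ - g2 τ| ≤ M) :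
    rectIncrement F c1 d1 c2 d2 ≤ 4 * M := by
  have h11 := (abs_le.1 (h c1 (by simp) c2 (by simp))).2
  have h22 := (abs_le.1 (h d1 (by simp) d2 (by simp))).2
  have h12 := (abs_le.1 (h c1 (by simp) d2 (by simp))).1
  have h21 := (abs_le.1 (h d1 (by simp) c2 (by simp))).1
  unfold rectIncrement
  linarith

theorem abs_sub_averages_le_rectIncrement {F : ℝ → ℝ → ℝ}
    (hinc : RectIncrementNonneg F c1 d1 c2 d2)
    {σ τ : ℝ} (hσ : σ ∈ Icc c1 d1) (hτ : τ ∈ Icc c2 d2) :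
    |F σ τ - (F σ c2 + F σ d2) / 2 -
        ((F c1 τ + F d1 τ) / 2 - (F c1 c2 + F c1 d2 + F d1 c2 + F d1 d2) / 4)| ≤
      rectIncrement F c1 d1 c2 d2 / 4 := by
  have h1 := hinc c1 σ c2 τ le_rfl hσ.1 hσ.2 le_rfl hτ.1 hτ.2
  have h2 := hinc σ d1 τ d2 hσ.1 hσ.2 le_rfl hτ.1 hτ.2 le_rfl
  have h3 := hinc c1 σ τ d2 le_rfl hσ.1 hσ.2 hτ.1 hτ.2 le_rfl
  have h4 := hinc σ d1 c2 τ hσ.1 hσ.2 le_rfl le_rfl hτ.1 hτ.2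
  unfold rectIncrement at *
  rw [abs_le]
  constructor <;> linarith

theorem rectIncrement_div_four_le_sSup {F : ℝ → ℝ → ℝ} (hc1 : c1 ≤ d1) (hc2 : c2 ≤ d2)
    (hF : ContinuousOn (Function.uncurry F) (Icc c1 d1 ×ˢ Icc c2 d2)) {g1 g2 : ℝ → ℝ}
    (hg1 : Continuous g1) (hg2 : Continuous g2) :
    rectIncrement F c1 d1 c2 d2 / 4 ≤
      sSup ((fun q : ℝ × ℝ => |F q.1 q.2 - g1 q.1 - g2 q.2|) '' Icc c1 d1 ×ˢ Icc c2 d2) := by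
  have hbdd := (isCompact_Icc.prod isCompact_Icc).bddAbove_image
    ((hF.sub (hg1.comp continuous_fst).continuousOn).sub (hg2.comp continuous_snd).continuousOn).abs
  suffices rectIncrement F c1 d1 c2 d2 ≤ 4 * sSup _ by linarith
  refine rectIncrement_le_of_abs_le_on_corners fun σ hσ τ hτ => le_csSup hbdd ⟨(σ, τ), ?_, rfl⟩
  have hc1R : c1 ∈ Icc c1 d1 := left_mem_Icc.2 hc1
  have hd1R : d1 ∈ Icc c1 d1 := right_mem_Icc.2 hc1
  have hc2R : c2 ∈ Icc c2 d2 := left_mem_Icc.2 hc2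
  have hd2R : d2 ∈ Icc c2 d2 := right_mem_Icc.2 hc2
  rcases hσ with rfl | rfl <;> rcases hτ with rfl | rfl <;> exact ⟨‹_›, ‹_›⟩

theorem exists_continuous_sSup_le_rectIncrement_div_four {F : ℝ → ℝ → ℝ} (hc1 : c1 ≤ d1)
    (hc2 : c2 ≤ d2) (hF : ContinuousOn (Function.uncurry F) (Icc c1 d1 ×ˢ Icc c2 d2))
    (hinc : RectIncrementNonneg F c1 d1 c2 d2) :
    ∃ g1 g2 : ℝ → ℝ, Continuous g1 ∧ Continuous g2 ∧
      sSup ((fun q : ℝ × ℝ => |F q.1 q.2 - g1 q.1 - g2 q.2|) '' Icc c1 d1 ×ˢ Icc c2 d2) ≤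
        rectIncrement F c1 d1 c2 d2 / 4 := by
  have hrow : ∀ τ ∈ Icc c2 d2, ContinuousOn (fun σ => F σ τ) (Icc c1 d1) := fun τ hτ =>
    hF.comp (continuousOn_id.prodMk continuousOn_const) fun σ hσ => ⟨hσ, hτ⟩
  have hcol : ∀ σ ∈ Icc c1 d1, ContinuousOn (fun τ => F σ τ) (Icc c2 d2) := fun σ hσ =>
    hF.comp (continuousOn_const.prodMk continuousOn_id) fun τ hτ => ⟨hσ, hτ⟩
  -- `projIcc` extends the boundary averages continuously from the rectangle's sides to `ℝ`.
  refine ⟨fun σ => (F (projIcc c1 d1 hc1 σ) c2 + F (projIcc c1 d1 hc1 σ) d2) / 2,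
    fun τ => (F c1 (projIcc c2 d2 hc2 τ) + F d1 (projIcc c2 d2 hc2 τ)) / 2 -
      (F c1 c2 + F c1 d2 + F d1 c2 + F d1 d2) / 4, ?_, ?_, ?_⟩
  · exact (((hrow c2 (left_mem_Icc.2 hc2)).continuous_comp_projIcc hc1).add
      ((hrow d2 (right_mem_Icc.2 hc2)).continuous_comp_projIcc hc1)).div_const 2
  · exact ((((hcol c1 (left_mem_Icc.2 hc1)).continuous_comp_projIcc hc2).add
      ((hcol d1 (right_mem_Icc.2 hc1)).continuous_comp_projIcc hc2)).div_const 2).sub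
      continuous_const
  refine csSup_le ((nonempty_Icc.2 hc1).prod (nonempty_Icc.2 hc2) |>.image _) ?_
  rintro _ ⟨⟨σ, τ⟩, ⟨hσ, hτ⟩, rfl⟩
  simpa [projIcc_of_mem hc1 hσ, projIcc_of_mem hc2 hτ] using
    abs_sub_averages_le_rectIncrement hinc hσ hτ

theorem isLeast_ridgeApproxError_Icc_prod_Icc {F : ℝ → ℝ → ℝ} (hc1 : c1 ≤ d1) (hc2 : c2 ≤ d2)
    (hF : ContinuousOn (Function.uncurry F) (Icc c1 d1 ×ˢ Icc c2 d2))
    (hinc : RectIncrementNonneg F c1 d1 c2 d2) :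
    IsLeast {e : ℝ | ∃ g1 g2 : ℝ → ℝ, Continuous g1 ∧ Continuous g2 ∧
        e = sSup ((fun q : ℝ × ℝ => |F q.1 q.2 - g1 q.1 - g2 q.2|) '' Icc c1 d1 ×ˢ Icc c2 d2)}
      (rectIncrement F c1 d1 c2 d2 / 4) := by
  have lower := fun {g1 g2 : ℝ → ℝ} =>
    rectIncrement_div_four_le_sSup (g1 := g1) (g2 := g2) hc1 hc2 hF
  obtain ⟨g1, g2, hg1, hg2, hle⟩ := exists_continuous_sSup_le_rectIncrement_div_four hc1 hc2 hF hinc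
  exact ⟨⟨g1, g2, hg1, hg2, (hle.antisymm (lower hg1 hg2)).symm⟩,
    fun _ ⟨_, _, hg1, hg2, he⟩ => he ▸ lower hg1 hg2⟩

theorem rectIncrementNonneg_of_iteratedFDerivWithin_nonneg (hc1 : c1 < d1) (hc2 : c2 < d2)
    {G : ℝ × ℝ → ℝ} (hG : ContDiffOn ℝ 2 G (Icc c1 d1 ×ˢ Icc c2 d2))
    (hmixed : ∀ q ∈ Icc c1 d1 ×ˢ Icc c2 d2,
      0 ≤ iteratedFDerivWithin ℝ 2 G (Icc c1 d1 ×ˢ Icc c2 d2) q ![(1, 0), (0, 1)]) :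
    RectIncrementNonneg (Function.curry G) c1 d1 c2 d2 := by
  intro s s' t t' hs hss' hs' ht htt' ht'
  set R := Icc c1 d1 ×ˢ Icc c2 d2
  have hR : UniqueDiffOn ℝ R := (uniqueDiffOn_Icc hc1).prod (uniqueDiffOn_Icc hc2)
  have hG' : DifferentiableOn ℝ (fderivWithin ℝ G R) R :=
    (hG.fderivWithin hR (m := 1) (by norm_num)).differentiableOn (by norm_num)
  have hG'' : ∀ q ∈ R, HasFDerivWithinAt (fun q => fderivWithin ℝ G R q (0, 1))
      ((fderivWithin ℝ (fderivWithin ℝ G R) R q).flip (0, 1)) R q := fun q hq => by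
    simpa using (hG' q hq).hasFDerivWithinAt.clm_apply (hasFDerivWithinAt_const (0, 1) q R)
  have vertical_slope_mono : ∀ τ ∈ Icc c2 d2,
      MonotoneOn (fun σ => fderivWithin ℝ G R (σ, τ) (0, 1)) (Icc c1 d1) := fun τ hτ =>
    monotoneOn_Icc_of_hasDerivWithinAt_nonneg
      (fun σ hσ => (hG'' (σ, τ) ⟨hσ, hτ⟩).hasDerivWithinAt_prodMk_const_right
        fun _ hσ' => mk_mem_prod hσ' hτ)
      (fun σ hσ => by
        have := hmixed (σ, τ) (mk_mem_prod hσ hτ)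
        rw [iteratedFDerivWithin_two_apply G hR (mk_mem_prod hσ hτ)] at this
        simpa using this)
  have hsR : s ∈ Icc c1 d1 := ⟨hs, hss'.trans hs'⟩
  have hs'R : s' ∈ Icc c1 d1 := ⟨hs.trans hss', hs'⟩
  have vertical_gap_mono : MonotoneOn (fun τ => G (s', τ) - G (s, τ)) (Icc c2 d2) := by
    refine monotoneOn_Icc_of_hasDerivWithinAt_nonneg
      (fun τ hτ => ?_) (fun τ hτ => sub_nonneg.2 (vertical_slope_mono τ hτ hsR hs'R hss'))
    have hGd : ∀ σ ∈ Icc c1 d1, HasDerivWithinAt (fun τ => G (σ, τ))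
        (fderivWithin ℝ G R (σ, τ) (0, 1)) (Icc c2 d2) τ := fun σ hσ =>
      (hG.differentiableOn (by norm_num) _ ⟨hσ, hτ⟩).hasFDerivWithinAt
        |>.hasDerivWithinAt_prodMk_const_left fun _ hτ' => mk_mem_prod hσ hτ'
    exact (hGd s' hs'R).sub (hGd s hsR)
  have := vertical_gap_mono ⟨ht, htt'.trans ht'⟩ ⟨ht.trans htt', ht'⟩ htt'
  simp only [rectIncrement, Function.curry_apply]
  linarith

theorem closure_interior_Icc_prod_Icc (hc1 : c1 < d1) (hc2 : c2 < d2) :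
    closure (interior (Icc c1 d1 ×ˢ Icc c2 d2)) = Icc c1 d1 ×ˢ Icc c2 d2 := by
  rw [interior_prod_eq, interior_Icc, interior_Icc, closure_prod_eq, closure_Ioo hc1.ne,
    closure_Ioo hc2.ne]

end Rectangle

theorem det_ne_zero_of_linearIndependent_pair {a1 a2 b1 b2 : ℝ}
    (h : LinearIndependent ℝ ![((a1, a2) : ℝ × ℝ), ((b1, b2) : ℝ × ℝ)]) :
    a1 * b2 - a2 * b1 ≠ 0 := by
  intro hD
  have hcomb : ∀ s t : ℝ, s • ((a1, a2) : ℝ × ℝ) + t • (b1, b2) =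
      (s * a1 + t * b1, s * a2 + t * b2) := fun s t => by simp
  rw [LinearIndependent.pair_iff] at h
  obtain ⟨hb2, ha2⟩ := h b2 (-a2) (by rw [hcomb, Prod.mk_eq_zero]; constructor <;> linarith)
  obtain ⟨hb1, ha1⟩ := h (-b1) a1 (by rw [hcomb, Prod.mk_eq_zero]; constructor <;> linarith)
  exact one_ne_zero (h 1 0 (by rw [hcomb, Prod.mk_eq_zero]; constructor <;> linarith)).1

/-- `x ↦ (a·x, b·x)`; its inverse is the substitution defining `f₁` in the paper. -/
noncomputable def ridgeCoords (a1 a2 b1 b2 : ℝ) (hD : a1 * b2 - a2 * b1 ≠ 0) :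
    (ℝ × ℝ) ≃L[ℝ] ℝ × ℝ :=
  LinearEquiv.toContinuousLinearEquiv
    { toFun := fun x => (a1 * x.1 + a2 * x.2, b1 * x.1 + b2 * x.2)
      invFun := fun y => ((y.1 * b2 - y.2 * a2) / (a1 * b2 - a2 * b1),
        (y.2 * a1 - y.1 * b1) / (a1 * b2 - a2 * b1))
      map_add' := fun x y => by ext <;> simp only [Prod.fst_add, Prod.snd_add] <;> ring
      map_smul' := fun c x => by
        ext <;> simp only [Prod.smul_fst, Prod.smul_snd, smul_eq_mul, RingHom.id_apply] <;> ring
      left_inv := fun x => by ext <;> dsimp <;> rw [div_eq_iff hD] <;> ring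
      right_inv := fun y => by
        ext <;> dsimp <;> rw [mul_div_assoc', mul_div_assoc', ← add_div, div_eq_iff hD] <;> ring }

section RidgeCoords

variable {a1 a2 b1 b2 : ℝ} (hD : a1 * b2 - a2 * b1 ≠ 0)

@[simp]
theorem ridgeCoords_apply (x : ℝ × ℝ) :
    ridgeCoords a1 a2 b1 b2 hD x = (a1 * x.1 + a2 * x.2, b1 * x.1 + b2 * x.2) := rfl

@[simp]
theorem ridgeCoords_symm_apply (y : ℝ × ℝ) :
    (ridgeCoords a1 a2 b1 b2 hD).symm y = ((y.1 * b2 - y.2 * a2) / (a1 * b2 - a2 * b1),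
        (y.2 * a1 - y.1 * b1) / (a1 * b2 - a2 * b1)) := rfl

theorem preimage_ridgeCoords_Icc_prod_Icc (c1 d1 c2 d2 : ℝ) :
    ridgeCoords a1 a2 b1 b2 hD ⁻¹' (Icc c1 d1 ×ˢ Icc c2 d2) =
      {p : ℝ × ℝ | c1 ≤ a1 * p.1 + a2 * p.2 ∧ a1 * p.1 + a2 * p.2 ≤ d1 ∧
        c2 ≤ b1 * p.1 + b2 * p.2 ∧ b1 * p.1 + b2 * p.2 ≤ d2} := by
  ext p
  simp only [mem_preimage, ridgeCoords_apply, mem_prod, mem_Icc, mem_ofPred_eq]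
  tauto

theorem image_ridgeError_preimage_ridgeCoords (f : ℝ × ℝ → ℝ) (g1 g2 : ℝ → ℝ)
    (S : Set (ℝ × ℝ)) :
    (fun p : ℝ × ℝ => |f p - g1 (a1 * p.1 + a2 * p.2) - g2 (b1 * p.1 + b2 * p.2)|) ''
        (ridgeCoords a1 a2 b1 b2 hD ⁻¹' S) =
      (fun q : ℝ × ℝ => |f ((ridgeCoords a1 a2 b1 b2 hD).symm q) - g1 q.1 - g2 q.2|) '' S := by
  rw [← ContinuousLinearEquiv.image_symm_eq_preimage, image_image]
  refine image_congr fun q _ => ?_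
  have hq := (ridgeCoords a1 a2 b1 b2 hD).apply_symm_apply q
  simp only [ridgeCoords_apply, Prod.ext_iff] at hq
  rw [hq.1, hq.2]

theorem bilin_ridgeCoords_symm_apply (B : ℝ × ℝ →L[ℝ] ℝ × ℝ →L[ℝ] ℝ)
    (hB : B (0, 1) (1, 0) = B (1, 0) (0, 1)) :
    B ((ridgeCoords a1 a2 b1 b2 hD).symm (1, 0)) ((ridgeCoords a1 a2 b1 b2 hD).symm (0, 1)) =
      (B (1, 0) (0, 1) * (a1 * b2 + a2 * b1) - B (1, 0) (1, 0) * (a2 * b2)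
        - B (0, 1) (0, 1) * (a1 * b1)) / (a1 * b2 - a2 * b1) ^ 2 := by
  have hsplit : ∀ x : ℝ × ℝ, x = x.1 • ((1 : ℝ), (0 : ℝ)) + x.2 • ((0 : ℝ), (1 : ℝ)) := fun x => by
    ext <;> simp
  rw [hsplit ((ridgeCoords a1 a2 b1 b2 hD).symm (1, 0)),
    hsplit ((ridgeCoords a1 a2 b1 b2 hD).symm (0, 1))]
  simp only [map_add, map_smul, add_apply, smul_apply, smul_eq_mul, ridgeCoords_symm_apply, hB]
  field_simp
  ring

theorem iteratedFDerivWithin_two_comp_ridgeCoords_symm {f : ℝ × ℝ → ℝ} {s : Set (ℝ × ℝ)}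
    (hs : UniqueDiffOn ℝ s) {q : ℝ × ℝ} (hq : (ridgeCoords a1 a2 b1 b2 hD).symm q ∈ s)
    (hf : ContDiffWithinAt ℝ 2 f s ((ridgeCoords a1 a2 b1 b2 hD).symm q))
    (hcl : (ridgeCoords a1 a2 b1 b2 hD).symm q ∈ closure (interior s)) :
    iteratedFDerivWithin ℝ 2 (f ∘ (ridgeCoords a1 a2 b1 b2 hD).symm)
        ((ridgeCoords a1 a2 b1 b2 hD).symm ⁻¹' s) q ![(1, 0), (0, 1)] =
      (iteratedFDerivWithin ℝ 2 f s ((ridgeCoords a1 a2 b1 b2 hD).symm q) ![(1, 0), (0, 1)] *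
            (a1 * b2 + a2 * b1)
          - iteratedFDerivWithin ℝ 2 f s ((ridgeCoords a1 a2 b1 b2 hD).symm q) ![(1, 0), (1, 0)] *
            (a2 * b2)
          - iteratedFDerivWithin ℝ 2 f s ((ridgeCoords a1 a2 b1 b2 hD).symm q) ![(0, 1), (0, 1)] *
            (a1 * b1)) / (a1 * b2 - a2 * b1) ^ 2 := by
  have hsymm := hf.isSymmSndFDerivWithinAt (by simp) hs hcl hq
  simp only [iteratedFDerivWithin_two_apply f hs hq]
  rw [iteratedFDerivWithin_two_comp_continuousLinearEquiv _ hs hq,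
    bilin_ridgeCoords_symm_apply hD _ (hsymm _ _)]
  simp

end RidgeCoords

/-- Explicit formula for the error of best uniform approximation of a function
`f` satisfying a second-order differential inequality on the parallelogram
`Ω = {x : c₁ ≤ a·x ≤ d₁, c₂ ≤ b·x ≤ d₂}` by sums `g₁(a·x) + g₂(b·x)` of ridge
functions with linearly independent directions `a = (a₁,a₂)`, `b = (b₁,b₂)`. -/
theorem stmt4 (a1 a2 b1 b2 c1 d1 c2 d2 : ℝ) (hc1 : c1 < d1) (hc2 : c2 < d2)
    (hind : LinearIndependent ℝ ![((a1, a2) : ℝ × ℝ), ((b1, b2) : ℝ × ℝ)])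
    (Ω : Set (ℝ × ℝ))
    (hΩ : Ω = {p : ℝ × ℝ | c1 ≤ a1 * p.1 + a2 * p.2 ∧ a1 * p.1 + a2 * p.2 ≤ d1 ∧
        c2 ≤ b1 * p.1 + b2 * p.2 ∧ b1 * p.1 + b2 * p.2 ≤ d2})
    (f : ℝ × ℝ → ℝ) (hf : ContDiffOn ℝ 2 f Ω)
    (hconv : ∀ p ∈ Ω,
      0 ≤ (iteratedFDerivWithin ℝ 2 f Ω p ![((1 : ℝ), (0 : ℝ)), ((0 : ℝ), (1 : ℝ))]) *
            (a1 * b2 + a2 * b1)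
          - (iteratedFDerivWithin ℝ 2 f Ω p ![((1 : ℝ), (0 : ℝ)), ((1 : ℝ), (0 : ℝ))]) *
            (a2 * b2)
          - (iteratedFDerivWithin ℝ 2 f Ω p ![((0 : ℝ), (1 : ℝ)), ((0 : ℝ), (1 : ℝ))]) *
            (a1 * b1))
    (f1 : ℝ → ℝ → ℝ)
    (hf1 : ∀ y1 y2 : ℝ, f1 y1 y2 =
      f ((y1 * b2 - y2 * a2) / (a1 * b2 - a2 * b1),
         (y2 * a1 - y1 * b1) / (a1 * b2 - a2 * b1))) :
    sInf {e : ℝ | ∃ g1 g2 : ℝ → ℝ, Continuous g1 ∧ Continuous g2 ∧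
        e = sSup ((fun p : ℝ × ℝ =>
          |f p - g1 (a1 * p.1 + a2 * p.2) - g2 (b1 * p.1 + b2 * p.2)|) '' Ω)} =
      (1 / 4) * (f1 c1 c2 + f1 d1 d2 - f1 c1 d2 - f1 d1 c2) := by
  have hD := det_ne_zero_of_linearIndependent_pair hind
  have hΩR := hΩ.trans (preimage_ridgeCoords_Icc_prod_Icc hD c1 d1 c2 d2).symm
  simp_rw [hΩR, image_ridgeError_preimage_ridgeCoords]
  set e := ridgeCoords a1 a2 b1 b2 hD
  set R := Icc c1 d1 ×ˢ Icc c2 d2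
  have hRΩ : e.symm ⁻¹' Ω = R := by rw [hΩR, ← preimage_comp, e.self_comp_symm, preimage_id]
  obtain rfl : f1 = Function.curry (f ∘ e.symm) := funext₂ hf1
  have hΩuni : UniqueDiffOn ℝ Ω :=
    hΩR ▸ e.uniqueDiffOn_preimage_iff.2 ((uniqueDiffOn_Icc hc1).prod (uniqueDiffOn_Icc hc2))
  have hΩcl : Ω ⊆ closure (interior Ω) := hΩR ▸
    e.toHomeomorph.preimage_subset_closure_interior (closure_interior_Icc_prod_Icc hc1 hc2).ge
  have hG : ContDiffOn ℝ 2 (f ∘ e.symm) R :=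
    hRΩ ▸ hf.comp_continuousLinearMap (e.symm : (ℝ × ℝ) →L[ℝ] ℝ × ℝ)
  have hmixed : ∀ q ∈ R, 0 ≤ iteratedFDerivWithin ℝ 2 (f ∘ e.symm) R q ![(1, 0), (0, 1)] := by
    intro q hq
    have hp : e.symm q ∈ Ω := by rwa [← hRΩ] at hq
    rw [← hRΩ, iteratedFDerivWithin_two_comp_ridgeCoords_symm hD hΩuni hp (hf _ hp) (hΩcl hp)]
    exact div_nonneg (hconv _ hp) (sq_nonneg _)
  refine (isLeast_ridgeApproxError_Icc_prod_Icc hc1.le hc2.le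
    (Function.uncurry_curry (f ∘ e.symm) ▸ hG.continuousOn)
    (rectIncrementNonneg_of_iteratedFDerivWithin_nonneg hc1 hc2 hG hmixed)).csInf_eq.trans ?_
  unfold rectIncrement
  ring
end

section
/- Let k ∈ ℕ and let f : ℝ → ℝ be a function such that for every choice of h_1, ..., h_k ∈ ℝ the function x ↦ Δ_{h_1...h_k} f(x) is continuous on ℝ. Then there exist a continuous function g : ℝ → ℝ and a polynomial function H of order k with H(0) = 0 such that f = g + H. -/
/-!
For `k = 1` this is de Bruijn's theorem. The additive part
`A u x = ∫₀¹ Δₓu - ∫₀ˣ Δ₁u` of a function with continuous differences is additive and vanishes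
at `1`, and `u - A u` is continuous: by Baire's theorem, integrating the separately continuous
`(x, s) ↦ Δₓu s - Δₓu 0` over `s ∈ [0, 1]` gives a function of `x` that is continuous at some
point, and additivity of `A u` moves the continuity of `u - A u` to every point.

For higher `k`, let `P_{k+1} f x = A (Δₓᵏ f) x + x P_k (Δ₁ f) x` (this is `(k+1)!` times a
polynomial function of order `k + 1`). The swap rule
`A (Δₓu) t - A (Δₜu) x = x A (Δ₁u) t - t A (Δ₁u) x` shows that `Δₜ P_{k+1} f - (k+1) P_k (Δₜ f)`
has continuous `(k-1)`-st differences, so `f - P_{k+1} f / (k+1)!` has continuous `k`-th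
differences, and induction on `k` finishes the proof.
-/

open Set Filter fwdDiff

noncomputable section

namespace DeBruijn

def fwdDiffₗ (h : ℝ) : (ℝ → ℝ) →ₗ[ℝ] ℝ → ℝ where
  toFun := fwdDiff h
  map_add' := fwdDiff_add h
  map_smul' := fwdDiff_const_smul h

def diffClass (S : Submodule ℝ (ℝ → ℝ)) : ℕ → Submodule ℝ (ℝ → ℝ)
  | 0 => S
  | k + 1 => ⨅ h, (diffClass S k).comap (fwdDiffₗ h)

def continuousFns : Submodule ℝ (ℝ → ℝ) where
  carrier := {f | Continuous f}
  add_mem' := Continuous.add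
  zero_mem' := continuous_const
  smul_mem' _ _ hf := continuous_const.mul hf

abbrev continuousDiffs (k : ℕ) : Submodule ℝ (ℝ → ℝ) := diffClass continuousFns k

/-- Polynomial functions of order `k` in the mixed sense `Δ_{h₁…h_{k+1}} H = 0`, which is
stronger than `Δ_h^{k+1} H = 0`. -/
abbrev polyFns (k : ℕ) : Submodule ℝ (ℝ → ℝ) := diffClass ⊥ (k + 1)

variable {S T : Submodule ℝ (ℝ → ℝ)} {f : ℝ → ℝ} {k : ℕ}

@[simp] lemma diffClass_zero : diffClass S 0 = S := rfl

lemma mem_diffClass_succ : f ∈ diffClass S (k + 1) ↔ ∀ h, Δ_[h] f ∈ diffClass S k := by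
  simp [diffClass, Submodule.mem_iInf, fwdDiffₗ]

@[simp] lemma mem_continuousFns : f ∈ continuousFns ↔ Continuous f := Iff.rfl

lemma fwdDiff_apply (h : ℝ) (f : ℝ → ℝ) (x : ℝ) : Δ_[h] f x = f (x + h) - f x := rfl

lemma fwdDiff_comm (a b : ℝ) (f : ℝ → ℝ) : Δ_[a] (Δ_[b] f) = Δ_[b] (Δ_[a] f) := by
  ext x; simp only [fwdDiff]; ring_nf

lemma fwdDiff_iterate_comm (a b : ℝ) (n : ℕ) (f : ℝ → ℝ) :
    Δ_[a] ((Δ_[b])^[n] f) = (Δ_[b])^[n] (Δ_[a] f) :=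
  Function.Commute.iterate_right (fun f => fwdDiff_comm a b f) n f

lemma fwdDiff_add_step (a b : ℝ) (f : ℝ → ℝ) :
    Δ_[a + b] f = Δ_[a] f + fun x => Δ_[b] f (x + a) := by
  ext x; simp only [fwdDiff, Pi.add_apply]; ring_nf

lemma fwdDiff_comp_add_right (h a : ℝ) (f : ℝ → ℝ) :
    Δ_[h] (fun x => f (x + a)) = fun x => Δ_[h] f (x + a) := by
  ext x; simp only [fwdDiff]; ring_nf

lemma fwdDiff_mul_id (h : ℝ) (f : ℝ → ℝ) :
    Δ_[h] (fun x => x * f x) = (fun x => x * Δ_[h] f x) + h • fun x => f (x + h) := by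
  ext x; simp only [fwdDiff, Pi.add_apply, Pi.smul_apply, smul_eq_mul]; ring

section Closure

variable (hΔ : ∀ f ∈ S, ∀ h, Δ_[h] f ∈ S)
include hΔ

lemma diffClass_le_succ : diffClass S k ≤ diffClass S (k + 1) := by
  induction k with
  | zero => exact fun f hf => mem_diffClass_succ.2 (hΔ f hf)
  | succ k ih => exact fun f hf => mem_diffClass_succ.2 fun h => ih (mem_diffClass_succ.1 hf h)

lemma diffClass_mono : Monotone (diffClass S) :=
  monotone_nat_of_le_succ fun _ => diffClass_le_succ hΔ

end Closure

lemma diffClass_succ_le (hST : diffClass S 1 ≤ T) : diffClass S (k + 1) ≤ diffClass T k := by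
  induction k with
  | zero => exact hST
  | succ k ih => exact fun f hf => mem_diffClass_succ.2 fun h => ih (mem_diffClass_succ.1 hf h)

lemma iterate_fwdDiff_mem (h : ℝ) {n : ℕ} (hf : f ∈ diffClass S (n + k)) :
    (Δ_[h])^[n] f ∈ diffClass S k := by
  induction n generalizing f with
  | zero => simpa using hf
  | succ n ih =>
    rw [Function.iterate_succ_apply]
    exact ih (mem_diffClass_succ.1 (by rwa [Nat.add_right_comm] at hf) h)

lemma comp_add_right_mem (hS : ∀ f ∈ S, ∀ a, (fun x => f (x + a)) ∈ S) (a : ℝ)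
    (hf : f ∈ diffClass S k) : (fun x => f (x + a)) ∈ diffClass S k := by
  induction k generalizing f with
  | zero => exact hS f hf a
  | succ k ih =>
    refine mem_diffClass_succ.2 fun h => ?_
    rw [fwdDiff_comp_add_right]
    exact ih (mem_diffClass_succ.1 hf h)

lemma mul_id_mem (hS : ∀ f ∈ S, ∀ a, (fun x => f (x + a)) ∈ S)
    (hΔ : ∀ f ∈ S, ∀ h, Δ_[h] f ∈ S) (hmul : ∀ f ∈ S, (fun x => x * f x) ∈ S)
    (hf : f ∈ diffClass S k) : (fun x => x * f x) ∈ diffClass S (k + 1) := by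
  induction k generalizing f with
  | zero =>
    refine mem_diffClass_succ.2 fun h => ?_
    rw [fwdDiff_mul_id]
    exact add_mem (hmul _ (hΔ f hf h)) (Submodule.smul_mem _ h (hS f hf h))
  | succ k ih =>
    refine mem_diffClass_succ.2 fun h => ?_
    rw [fwdDiff_mul_id]
    exact add_mem (ih (mem_diffClass_succ.1 hf h))
      (Submodule.smul_mem _ h (comp_add_right_mem hS h hf))

lemma continuousFns_comp_add_right :
    ∀ f ∈ continuousFns, ∀ a : ℝ, (fun x => f (x + a)) ∈ continuousFns :=
  fun _ hf a => hf.comp (continuous_add_const a)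

lemma continuousFns_fwdDiff : ∀ f ∈ continuousFns, ∀ h, Δ_[h] f ∈ continuousFns :=
  fun _ hf h => (hf.comp (continuous_add_const h)).sub hf

lemma continuousFns_mul_id : ∀ f ∈ continuousFns, (fun x => x * f x) ∈ continuousFns :=
  fun _ hf => continuous_id.mul hf

lemma bot_comp_add_right : ∀ f ∈ (⊥ : Submodule ℝ (ℝ → ℝ)), ∀ a : ℝ,
    (fun x => f (x + a)) ∈ (⊥ : Submodule ℝ (ℝ → ℝ)) := by
  rintro f hf a; rw [Submodule.mem_bot] at hf ⊢; subst hf; rfl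

lemma bot_fwdDiff : ∀ f ∈ (⊥ : Submodule ℝ (ℝ → ℝ)), ∀ h,
    Δ_[h] f ∈ (⊥ : Submodule ℝ (ℝ → ℝ)) := by
  rintro f hf h; rw [Submodule.mem_bot] at hf ⊢; subst hf; exact fwdDiff_const h 0

lemma bot_mul_id :
    ∀ f ∈ (⊥ : Submodule ℝ (ℝ → ℝ)), (fun x => x * f x) ∈ (⊥ : Submodule ℝ (ℝ → ℝ)) := by
  rintro f hf; rw [Submodule.mem_bot] at hf ⊢; subst hf; ext; simp

lemma continuous_fwdDiff {u : ℝ → ℝ} (hu : u ∈ continuousDiffs 1) (h : ℝ) :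
    Continuous (Δ_[h] u) :=
  mem_diffClass_succ.1 hu h

lemma iterate_mem_continuousDiffs (h : ℝ) {m n j : ℕ} (hf : f ∈ continuousDiffs m)
    (hmn : m ≤ n + j) : (Δ_[h])^[n] f ∈ continuousDiffs j :=
  iterate_fwdDiff_mem h (diffClass_mono continuousFns_fwdDiff hmn hf)

lemma mem_continuousDiffs_of_foldl
    (hf : ∀ l : List ℝ, l.length = k → Continuous (l.foldl (fun g h => Δ_[h] g) f)) :
    f ∈ continuousDiffs k := by
  induction k generalizing f with
  | zero => simpa using hf [] rfl
  | succ k ih => exact mem_diffClass_succ.2 fun h => ih fun l hl => hf (h :: l) (by simp [hl])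

lemma polyFns_mono : Monotone polyFns := fun _ _ hkl => diffClass_mono bot_fwdDiff (by omega)

lemma polyFns_le_continuousDiffs (k : ℕ) : polyFns k ≤ continuousDiffs k := by
  refine diffClass_succ_le fun f hf => ?_
  have hc : ∀ x, f x = f 0 := fun x => by
    simpa [fwdDiff, sub_eq_zero] using
      congrFun ((Submodule.mem_bot ℝ).1 (mem_diffClass_succ.1 hf x)) 0
  exact continuous_const.congr fun x => (hc x).symm

lemma const_mem_polyFns (k : ℕ) (c : ℝ) : (fun _ => c) ∈ polyFns k :=
  polyFns_mono (Nat.zero_le k) (mem_diffClass_succ.2 fun h => by simp; rfl)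

lemma iterate_fwdDiff_eq_zero {H : ℝ → ℝ} (hH : H ∈ polyFns k) (h : ℝ) :
    (Δ_[h])^[k + 1] H = 0 :=
  (Submodule.mem_bot ℝ).1 (iterate_fwdDiff_mem h (k := 0) hH)

lemma integral_fwdDiff {v : ℝ → ℝ} (hv : Continuous v) (a T : ℝ) :
    ∫ s in (0:ℝ)..T, Δ_[a] v s
      = (∫ s in (0:ℝ)..T + a, v s) - (∫ s in (0:ℝ)..a, v s) - ∫ s in (0:ℝ)..T, v s := by
  have hshift : ∫ s in (0:ℝ)..T, v (s + a) = ∫ s in a..T + a, v s := by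
    simp [intervalIntegral.integral_comp_add_right v a (a := 0) (b := T)]
  simp only [fwdDiff]
  rw [intervalIntegral.integral_sub (f := fun s => v (s + a))
    ((hv.comp (continuous_add_const a)).intervalIntegrable _ _) (hv.intervalIntegrable _ _), hshift,
    ← intervalIntegral.integral_interval_sub_left (hv.intervalIntegrable _ _)
      (hv.intervalIntegrable _ _)]

lemma integral_fwdDiff_comm {v : ℝ → ℝ} (hv : Continuous v) (a T : ℝ) :
    ∫ s in (0:ℝ)..T, Δ_[a] v s = ∫ s in (0:ℝ)..a, Δ_[T] v s := by
  rw [integral_fwdDiff hv, integral_fwdDiff hv, add_comm]; ring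

lemma exists_continuousAt_integral {F : ℝ → ℝ → ℝ} (hx : ∀ s, Continuous fun x => F x s)
    (hs : ∀ x, Continuous (F x)) : ∃ x₀, ContinuousAt (fun x => ∫ s in (0:ℝ)..1, F x s) x₀ := by
  -- Baire: `F` is bounded on `U × [0, 1]` for some open `U`; then dominated convergence.
  set E : ℕ → Set ℝ := fun n => {x | ∀ s ∈ Icc (0:ℝ) 1, |F x s| ≤ n}
  have hE : ∀ n, IsClosed (E n) := fun n => by
    simp only [E, ofPred_forall]
    exact isClosed_biInter fun s _ => isClosed_le (hx s).abs continuous_const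
  have hcover : ⋃ n, E n = univ := by
    refine eq_univ_of_forall fun x => mem_iUnion.2 ?_
    obtain ⟨C, hC⟩ := isCompact_Icc.exists_bound_of_continuousOn (hs x).continuousOn
    exact ⟨⌈C⌉₊, fun s hs => (hC s hs).trans (Nat.le_ceil C)⟩
  obtain ⟨N, x₀, hx₀⟩ := nonempty_interior_of_iUnion_of_closed hE hcover
  refine ⟨x₀, intervalIntegral.continuousAt_of_dominated_interval (bound := fun _ => (N : ℝ))
    (Eventually.of_forall fun x => (hs x).aestronglyMeasurable.restrict) ?_
    intervalIntegrable_const (MeasureTheory.ae_of_all _ fun s _ => (hx s).continuousAt)⟩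
  filter_upwards [mem_interior_iff_mem_nhds.1 hx₀] with x hx
  refine MeasureTheory.ae_of_all _ fun s hs => hx s ?_
  rw [uIoc_of_le zero_le_one] at hs
  exact Ioc_subset_Icc_self hs

lemma continuous_of_continuousAt_of_fwdDiff {r : ℝ → ℝ} {x₀ : ℝ} (h₀ : ContinuousAt r x₀)
    (hΔ : ∀ d, Continuous (Δ_[d] r)) : Continuous r := by
  refine continuous_iff_continuousAt.2 fun y => ?_
  have hr : r = fun z => r (z - (y - x₀)) + Δ_[y - x₀] r (z - (y - x₀)) := by
    ext z; simp [fwdDiff]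
  rw [hr]
  exact (h₀.comp_of_eq (continuous_sub_right _).continuousAt (by ring)).add
    ((hΔ _).comp (continuous_sub_right _)).continuousAt

lemma eq_zero_of_additive_of_continuous {a : ℝ → ℝ} (hadd : ∀ x y, a (x + y) = a x + a y)
    (hc : Continuous a) (h1 : a 1 = 0) : a = 0 := by
  ext x
  simpa [h1] using map_real_smul (AddMonoidHom.mk' a hadd) hc x 1

/-- For continuous `u` both integrals equal `U (x + 1) - U x - U 1 + U 0` with `U` a primitive
of `u`, so only the non-measurable part of `u` contributes. -/
def additivePart (u : ℝ → ℝ) (x : ℝ) : ℝ :=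
  (∫ s in (0:ℝ)..1, Δ_[x] u s) - ∫ s in (0:ℝ)..x, Δ_[1] u s

section AdditivePart

variable {u v : ℝ → ℝ}

lemma additivePart_one (u : ℝ → ℝ) : additivePart u 1 = 0 := sub_self _

lemma additivePart_add (hu : u ∈ continuousDiffs 1) (x y : ℝ) :
    additivePart u (x + y) = additivePart u x + additivePart u y := by
  have hc := continuous_fwdDiff hu
  have hsplit : ∀ s, Δ_[x + y] u s = Δ_[x] u s + Δ_[y] u s + Δ_[x] (Δ_[y] u) s := by
    intro s; simp only [fwdDiff]; ring_nf
  have hxy : ∫ s in (0:ℝ)..1, Δ_[x + y] u s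
      = (∫ s in (0:ℝ)..1, Δ_[x] u s) + (∫ s in (0:ℝ)..1, Δ_[y] u s)
        + ∫ s in (0:ℝ)..x, Δ_[y] (Δ_[1] u) s := by
    simp only [hsplit]
    rw [intervalIntegral.integral_add (f := fun s => Δ_[x] u s + Δ_[y] u s)
      (((hc x).add (hc y)).intervalIntegrable _ _)
      ((continuousFns_fwdDiff _ (hc y) x).intervalIntegrable _ _),
      intervalIntegral.integral_add ((hc x).intervalIntegrable _ _) ((hc y).intervalIntegrable _ _),
      integral_fwdDiff_comm (hc y), fwdDiff_comm]
  unfold additivePart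
  rw [hxy, integral_fwdDiff (hc 1)]
  ring

lemma continuous_sub_additivePart (hu : u ∈ continuousDiffs 1) :
    Continuous fun x => u x - additivePart u x := by
  have hc := continuous_fwdDiff hu
  set F : ℝ → ℝ → ℝ := fun x s => Δ_[x] u s - Δ_[x] u 0
  have hFx : ∀ s, Continuous fun x => F x s := fun s => by
    have : (fun x => F x s) = fun x => Δ_[s] u x - Δ_[s] u 0 := by
      ext x; simp only [F, fwdDiff]; ring_nf
    rw [this]; exact (hc s).sub continuous_const
  obtain ⟨x₀, hx₀⟩ := exists_continuousAt_integral hFx fun x => (hc x).sub continuous_const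
  have hr : (fun x => u x - additivePart u x)
      = fun x => u 0 - (∫ s in (0:ℝ)..1, F x s) + ∫ s in (0:ℝ)..x, Δ_[1] u s := by
    ext x
    simp only [F, additivePart]
    rw [intervalIntegral.integral_sub ((hc x).intervalIntegrable _ _) intervalIntegrable_const]
    simp only [fwdDiff, intervalIntegral.integral_const, zero_add, sub_zero, one_smul]
    ring
  refine continuous_of_continuousAt_of_fwdDiff (x₀ := x₀) ?_ fun d => ?_
  · rw [hr]
    exact (continuousAt_const.sub hx₀).add
      (intervalIntegral.continuous_primitive (fun a b => (hc 1).intervalIntegrable a b)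
        0).continuousAt
  · have : Δ_[d] (fun x => u x - additivePart u x) = fun x => Δ_[d] u x - additivePart u d := by
      ext x; simp only [fwdDiff, additivePart_add hu]; ring
    rw [this]
    exact (hc d).sub continuous_const

lemma additivePart_eq (hu : u ∈ continuousDiffs 1) {a : ℝ → ℝ}
    (hadd : ∀ x y, a (x + y) = a x + a y) (h1 : a 1 = 0) (hc : Continuous fun x => u x - a x) :
    additivePart u = a := by
  refine sub_eq_zero.1 (eq_zero_of_additive_of_continuous (fun x y => ?_) ?_ ?_)
  · simp only [Pi.sub_apply, additivePart_add hu, hadd]; ring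
  · convert hc.sub (continuous_sub_additivePart hu) using 1
    ext x; simp
  · simp [additivePart_one, h1]

lemma additivePart_fun_add (hu : u ∈ continuousDiffs 1) (hv : v ∈ continuousDiffs 1) :
    additivePart (u + v) = additivePart u + additivePart v := by
  refine additivePart_eq (add_mem hu hv) (fun x y => ?_) (by simp [additivePart_one]) ?_
  · simp only [Pi.add_apply, additivePart_add hu, additivePart_add hv]; ring
  · convert (continuous_sub_additivePart hu).add (continuous_sub_additivePart hv) using 1
    ext x; simp only [Pi.add_apply]; ring

lemma additivePart_comp_add_right (hu : u ∈ continuousDiffs 1) (c : ℝ) :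
    additivePart (fun x => u (x + c)) = additivePart u := by
  refine additivePart_eq (comp_add_right_mem continuousFns_comp_add_right c hu)
    (additivePart_add hu) (additivePart_one u) ?_
  convert ((continuous_sub_additivePart hu).comp (continuous_add_const c)).add
    (continuous_const (y := additivePart u c)) using 1
  ext x; simp only [Function.comp_apply, Pi.add_apply, additivePart_add hu]; ring

lemma additivePart_fwdDiff_add {w : ℝ → ℝ} (hw : w ∈ continuousDiffs 2) (a b : ℝ) :
    additivePart (Δ_[a + b] w) = additivePart (Δ_[a] w) + additivePart (Δ_[b] w) := by
  have hΔ := mem_diffClass_succ.1 hw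
  rw [fwdDiff_add_step, additivePart_fun_add (hΔ a)
    (comp_add_right_mem continuousFns_comp_add_right a (hΔ b)), additivePart_comp_add_right (hΔ b)]

lemma continuous_integral_fwdDiff_sub (hv : v ∈ continuousDiffs 1) (T : ℝ) :
    Continuous fun x => (∫ s in (0:ℝ)..T, Δ_[x] v s) - T * additivePart v x := by
  set c := fun x => v x - additivePart v x
  have hc : Continuous c := continuous_sub_additivePart hv
  have : (fun x => (∫ s in (0:ℝ)..T, Δ_[x] v s) - T * additivePart v x)
      = fun x => (∫ s in (0:ℝ)..T + x, c s) - (∫ s in (0:ℝ)..x, c s) - ∫ s in (0:ℝ)..T, c s := by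
    ext x
    have hpt : ∀ s, Δ_[x] v s = Δ_[x] c s + additivePart v x := fun s => by
      simp only [c, fwdDiff, additivePart_add hv]; ring
    simp only [hpt]
    rw [intervalIntegral.integral_add ((continuousFns_fwdDiff c hc x).intervalIntegrable _ _)
      intervalIntegrable_const, integral_fwdDiff hc, intervalIntegral.integral_const]
    simp only [sub_zero, smul_eq_mul, add_sub_cancel_right]
  rw [this]
  have hC := intervalIntegral.continuous_primitive (μ := MeasureTheory.volume)
    (fun a b => hc.intervalIntegrable a b) 0
  exact ((hC.comp (continuous_const_add T)).sub hC).sub continuous_const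

/-- The difference of the two sides is additive in `x`, vanishes at `x = 1`, and is continuous
in `x` by `continuous_integral_fwdDiff_sub`. -/
lemma additivePart_fwdDiff_swap (hu : u ∈ continuousDiffs 2) (x t : ℝ) :
    additivePart (Δ_[x] u) t
      = additivePart (Δ_[t] u) x - t * additivePart (Δ_[1] u) x
        + x * additivePart (Δ_[1] u) t := by
  have hΔ := mem_diffClass_succ.1 hu
  set Z : ℝ → ℝ := fun x => additivePart (Δ_[x] u) t - additivePart (Δ_[t] u) x
    + t * additivePart (Δ_[1] u) x - x * additivePart (Δ_[1] u) t
  suffices Z = 0 by have := congrFun this x; simp only [Z, Pi.zero_apply] at this; linarith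
  refine eq_zero_of_additive_of_continuous (fun x y => ?_) ?_ ?_
  · simp only [Z, additivePart_fwdDiff_add hu, Pi.add_apply, additivePart_add (hΔ t),
      additivePart_add (hΔ 1)]
    ring
  · have hZ : Z = fun x => ((∫ s in (0:ℝ)..1, Δ_[x] (Δ_[t] u) s) - 1 * additivePart (Δ_[t] u) x)
        - ((∫ s in (0:ℝ)..t, Δ_[x] (Δ_[1] u) s) - t * additivePart (Δ_[1] u) x)
        - x * additivePart (Δ_[1] u) t := by
      ext x; simp only [Z, additivePart, fwdDiff_comm x]; ring
    rw [hZ]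
    exact ((continuous_integral_fwdDiff_sub (hΔ t) 1).sub
      (continuous_integral_fwdDiff_sub (hΔ 1) t)).sub (continuous_id.mul continuous_const)
  · simp [Z, additivePart_one]

end AdditivePart

lemma additivePart_iterate_fwdDiff_add (hf : f ∈ continuousDiffs (k + 1)) (a b y : ℝ) :
    additivePart ((Δ_[a + b])^[k] f) y
      = ∑ c ∈ Finset.range (k + 1),
          (k.choose c : ℝ) * additivePart ((Δ_[a])^[k - c] ((Δ_[b])^[c] f)) y := by
  induction k generalizing f with
  | zero => simp
  | succ k ih =>
    have hΔ := mem_diffClass_succ.1 hf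
    rw [Function.iterate_succ_apply',
      additivePart_fwdDiff_add (iterate_mem_continuousDiffs _ hf le_rfl), Pi.add_apply,
      fwdDiff_iterate_comm, fwdDiff_iterate_comm, ih (hΔ a), ih (hΔ b),
      Finset.sum_choose_succ_mul (fun i j => additivePart ((Δ_[a])^[j] ((Δ_[b])^[i] f)) y)]
    congr 1
    refine Finset.sum_congr rfl fun c hc => ?_
    have hck : k - c + 1 = k + 1 - c := by have := Finset.mem_range.1 hc; omega
    rw [← fwdDiff_iterate_comm, ← Function.iterate_succ_apply, Nat.succ_eq_add_one, hck]

/-- `additivePart (Δ_[h₁] ⋯ Δ_[h_k] f) y` is additive in each of `h₁, …, h_k, y`; these are its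
values at `h₁ = ⋯ = h_k = x`, with `y` fixed or with `y = x`. -/
def pinnedForm (k : ℕ) (f : ℝ → ℝ) (y : ℝ) : ℝ → ℝ := fun x => additivePart ((Δ_[x])^[k] f) y

def diagForm (k : ℕ) (f : ℝ → ℝ) : ℝ → ℝ := fun x => additivePart ((Δ_[x])^[k] f) x

lemma fwdDiff_pinnedForm (hf : f ∈ continuousDiffs (k + 1)) (t y : ℝ) :
    Δ_[t] (pinnedForm k f y) = ∑ c ∈ Finset.range k,
      (k.choose (c + 1) : ℝ) • pinnedForm (k - (c + 1)) ((Δ_[t])^[c + 1] f) y := by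
  ext x
  simp only [fwdDiff, pinnedForm, Finset.sum_apply, Pi.smul_apply, smul_eq_mul]
  rw [additivePart_iterate_fwdDiff_add hf, Finset.sum_range_succ']
  simp

lemma fwdDiff_diagForm (hf : f ∈ continuousDiffs (k + 1)) (t : ℝ) :
    Δ_[t] (diagForm k f) = pinnedForm k f t + ∑ c ∈ Finset.range k, (k.choose (c + 1) : ℝ) •
      (diagForm (k - (c + 1)) ((Δ_[t])^[c + 1] f)
        + pinnedForm (k - (c + 1)) ((Δ_[t])^[c + 1] f) t) := by
  ext x
  simp only [fwdDiff, diagForm, pinnedForm, Finset.sum_apply, Pi.add_apply, Pi.smul_apply,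
    smul_eq_mul]
  rw [additivePart_iterate_fwdDiff_add hf, Finset.sum_range_succ']
  have hadd : ∀ c ≤ k, additivePart ((Δ_[x])^[k - c] ((Δ_[t])^[c] f)) (x + t)
      = additivePart ((Δ_[x])^[k - c] ((Δ_[t])^[c] f)) x
        + additivePart ((Δ_[x])^[k - c] ((Δ_[t])^[c] f)) t := fun c hc =>
    additivePart_add (iterate_mem_continuousDiffs x (n := k - c) (j := 1)
      (iterate_mem_continuousDiffs t hf (n := c) (j := k - c + 1) (by omega)) (by omega)) x t
  rw [Finset.sum_congr rfl fun c hc => by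
    rw [hadd (c + 1) (by have := Finset.mem_range.1 hc; omega)], hadd 0 (Nat.zero_le k)]
  simp only [Nat.choose_zero_right, Nat.cast_one, tsub_zero, Function.iterate_zero, id_eq, one_mul]
  ring

lemma pinnedForm_mem (hf : f ∈ continuousDiffs (k + 1)) (y : ℝ) :
    pinnedForm k f y ∈ polyFns k := by
  induction k using Nat.strong_induction_on generalizing f with
  | _ k ih =>
    refine mem_diffClass_succ.2 fun t => ?_
    rw [fwdDiff_pinnedForm hf]
    refine Submodule.sum_mem _ fun c hc => Submodule.smul_mem _ _ ?_
    have hck := Finset.mem_range.1 hc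
    exact diffClass_mono bot_fwdDiff (by omega : k - (c + 1) + 1 ≤ k) (ih _ (by omega)
      (iterate_mem_continuousDiffs t hf (n := c + 1) (j := k - (c + 1) + 1) (by omega)))

lemma diagForm_mem (hf : f ∈ continuousDiffs (k + 1)) : diagForm k f ∈ polyFns (k + 1) := by
  induction k using Nat.strong_induction_on generalizing f with
  | _ k ih =>
    refine mem_diffClass_succ.2 fun t => ?_
    rw [fwdDiff_diagForm hf]
    refine add_mem (pinnedForm_mem hf t)
      (Submodule.sum_mem _ fun c hc => Submodule.smul_mem _ _ ?_)
    have hck := Finset.mem_range.1 hc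
    have hΔf := iterate_mem_continuousDiffs t hf (n := c + 1) (j := k - (c + 1) + 1) (by omega)
    exact add_mem (polyFns_mono (by omega) (ih _ (by omega) hΔf))
      (polyFns_mono (by omega) (pinnedForm_mem hΔf t))

/-- `k!` times the polynomial part of order `k`: for `f = S(x, …, x)` with `S` symmetric and
`k`-additive it equals `k! (S(x, …, x) - x ^ k S(1, …, 1))`. -/
def polyPart : ℕ → (ℝ → ℝ) → ℝ → ℝ
  | 0, _ => 0
  | k + 1, f => fun x => diagForm k f x + x * polyPart k (Δ_[1] f) x

lemma polyPart_succ_apply (f : ℝ → ℝ) (x : ℝ) :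
    polyPart (k + 1) f x = additivePart ((Δ_[x])^[k] f) x + x * polyPart k (Δ_[1] f) x := rfl

lemma polyPart_mem (hf : f ∈ continuousDiffs k) : polyPart k f ∈ polyFns k := by
  induction k generalizing f with
  | zero => exact zero_mem _
  | succ k ih =>
    exact add_mem (diagForm_mem hf) (mul_id_mem bot_comp_add_right bot_fwdDiff bot_mul_id
      (ih (mem_diffClass_succ.1 hf 1)))

lemma pinnedForm_eq (hf : f ∈ continuousDiffs (k + 1)) (t x : ℝ) :
    pinnedForm k f t x = polyPart k (Δ_[t] f) x - t * polyPart k (Δ_[1] f) x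
      + x ^ k * additivePart ((Δ_[1])^[k] f) t := by
  induction k generalizing f with
  | zero => simp [pinnedForm, polyPart]
  | succ k ih =>
    have h1 := ih (mem_diffClass_succ.1 hf 1)
    simp only [pinnedForm] at h1 ⊢
    rw [Function.iterate_succ_apply', additivePart_fwdDiff_swap
      (iterate_mem_continuousDiffs x hf (by omega)), fwdDiff_iterate_comm, fwdDiff_iterate_comm,
      h1, polyPart_succ_apply, polyPart_succ_apply, Function.iterate_succ_apply, fwdDiff_comm 1 t]
    ring

def polyDefect (k : ℕ) (f : ℝ → ℝ) (t : ℝ) : ℝ → ℝ :=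
  Δ_[t] (polyPart (k + 1) f) - ((k + 1 : ℕ) : ℝ) • polyPart k (Δ_[t] f)

lemma fwdDiff_diagForm_sub_mem (hf : f ∈ continuousDiffs (k + 2)) (t : ℝ) :
    Δ_[t] (diagForm (k + 1) f) - pinnedForm (k + 1) f t
      - ((k + 1 : ℕ) : ℝ) • diagForm k (Δ_[t] f) ∈ polyFns k := by
  rw [fwdDiff_diagForm hf, Finset.sum_range_succ']
  have hrest : ∀ c ∈ Finset.range k, ((k + 1).choose (c + 1 + 1) : ℝ) •
      (diagForm (k + 1 - (c + 1 + 1)) ((Δ_[t])^[c + 1 + 1] f)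
        + pinnedForm (k + 1 - (c + 1 + 1)) ((Δ_[t])^[c + 1 + 1] f) t) ∈ polyFns k :=
    fun c hc => by
      have hck := Finset.mem_range.1 hc
      have hΔf :=
        iterate_mem_continuousDiffs t hf (n := c + 1 + 1) (j := k - (c + 1) + 1) (by omega)
      rw [show k + 1 - (c + 1 + 1) = k - (c + 1) by omega]
      exact Submodule.smul_mem _ _ (add_mem (polyFns_mono (by omega) (diagForm_mem hΔf))
        (polyFns_mono (by omega) (pinnedForm_mem hΔf t)))
  convert add_mem (Submodule.sum_mem _ hrest) (Submodule.smul_mem _ ((k + 1 : ℕ) : ℝ)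
    (pinnedForm_mem (iterate_mem_continuousDiffs t hf (n := 1) (j := k + 1) (by omega)) t))
    using 1
  simp only [Nat.choose_one_right, zero_add, Nat.add_sub_cancel, Function.iterate_one, smul_add]
  abel

lemma polyDefect_succ_mem (hf : f ∈ continuousDiffs (k + 2)) (t : ℝ)
    (hprev : (fun x => x * polyDefect k (Δ_[1] f) t x) ∈ continuousDiffs k) :
    polyDefect (k + 1) f t ∈ continuousDiffs k := by
  set R := polyPart (k + 1) (Δ_[1] f)
  set c := additivePart ((Δ_[1])^[k + 1] f) t
  have key : polyDefect (k + 1) f t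
      = (Δ_[t] (diagForm (k + 1) f) - pinnedForm (k + 1) f t
          - ((k + 1 : ℕ) : ℝ) • diagForm k (Δ_[t] f))
        + (fun x => x * polyDefect k (Δ_[1] f) t x) + t • Δ_[t] R
        + fun x => c * x ^ (k + 1) := by
    ext x
    have hp := pinnedForm_eq hf t x
    simp only [polyDefect, Pi.add_apply, Pi.sub_apply, Pi.smul_apply, smul_eq_mul, fwdDiff_apply]
      at hp ⊢
    simp only [diagForm, pinnedForm, polyPart_succ_apply (k := k + 1) f,
      polyPart_succ_apply (k := k) (Δ_[t] f), fwdDiff_comm 1 t] at hp ⊢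
    push_cast
    linear_combination hp
  rw [key]
  refine add_mem (add_mem (add_mem ?_ hprev) ?_) ?_
  · exact polyFns_le_continuousDiffs k (fwdDiff_diagForm_sub_mem hf t)
  · exact Submodule.smul_mem _ t (polyFns_le_continuousDiffs k
      (mem_diffClass_succ.1 (polyPart_mem (mem_diffClass_succ.1 hf 1)) t))
  · exact diffClass_mono continuousFns_fwdDiff (Nat.zero_le k)
      (continuous_const.mul (continuous_pow (k + 1)))

lemma mul_polyDefect_mem (hf : f ∈ continuousDiffs (k + 1)) (t : ℝ) :
    (fun x => x * polyDefect k f t x) ∈ continuousDiffs k := by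
  induction k generalizing f with
  | zero =>
    have h0 : polyDefect 0 f t = fun _ => additivePart f t := by
      ext x
      simp [polyDefect, polyPart, diagForm, fwdDiff_apply, additivePart_add hf]
    rw [h0]
    exact continuous_id.mul continuous_const
  | succ k ih =>
    exact mul_id_mem continuousFns_comp_add_right continuousFns_fwdDiff continuousFns_mul_id
      (polyDefect_succ_mem hf t (ih (mem_diffClass_succ.1 hf 1)))

lemma sub_polyPart_mem (hf : f ∈ continuousDiffs (k + 1)) :
    f - ((k + 1).factorial : ℝ)⁻¹ • polyPart (k + 1) f ∈ continuousDiffs k := by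
  induction k generalizing f with
  | zero =>
    refine (continuous_sub_additivePart hf).congr fun x => ?_
    simp [polyPart, diagForm]
  | succ k ih =>
    refine mem_diffClass_succ.2 fun t => ?_
    have hΔ : Δ_[t] (f - ((k + 2).factorial : ℝ)⁻¹ • polyPart (k + 2) f)
        = (Δ_[t] f - ((k + 1).factorial : ℝ)⁻¹ • polyPart (k + 1) (Δ_[t] f))
          - ((k + 2).factorial : ℝ)⁻¹ • polyDefect (k + 1) f t := by
      ext x
      simp only [polyDefect, fwdDiff_apply, Pi.sub_apply, Pi.smul_apply, smul_eq_mul,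
        Nat.factorial_succ (k + 1)]
      push_cast
      field_simp
      ring
    rw [hΔ]
    exact sub_mem (ih (mem_diffClass_succ.1 hf t)) (Submodule.smul_mem _ _
      (polyDefect_succ_mem hf t (mul_polyDefect_mem (mem_diffClass_succ.1 hf 1) t)))

lemma exists_polyFns_continuous_sub (hf : f ∈ continuousDiffs k) :
    ∃ H ∈ polyFns k, Continuous (f - H) := by
  induction k generalizing f with
  | zero => exact ⟨0, zero_mem _, by simpa using hf⟩
  | succ k ih =>
    obtain ⟨H, hH, hcont⟩ := ih (sub_polyPart_mem hf)
    refine ⟨H + ((k + 1).factorial : ℝ)⁻¹ • polyPart (k + 1) f,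
      add_mem (polyFns_mono k.le_succ hH) (Submodule.smul_mem _ _ (polyPart_mem hf)), ?_⟩
    rwa [sub_add_eq_sub_sub_swap]

end DeBruijn

end

/-- If all `k`-th order mixed differences `Δ_{h₁...h_k} f` of `f : ℝ → ℝ` are
continuous, then `f = g + H` where `g` is continuous and `H` is a polynomial
function of order `k` (i.e. `Δ_h^{k+1} H ≡ 0`) with `H(0) = 0`. -/
theorem stmt8 (k : ℕ) (f : ℝ → ℝ)
    (hf : ∀ l : List ℝ, l.length = k →
      Continuous (l.foldl (fun g h => fun x => g (x + h) - g x) f)) :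
    ∃ g H : ℝ → ℝ, Continuous g ∧
      (∀ x h : ℝ, (fun u : ℝ → ℝ => fun y => u (y + h) - u y)^[k + 1] H x = 0) ∧
      H 0 = 0 ∧ ∀ x, f x = g x + H x := by
  obtain ⟨H, hH, hg⟩ :=
    DeBruijn.exists_polyFns_continuous_sub (DeBruijn.mem_continuousDiffs_of_foldl hf)
  have hH₀ := sub_mem hH (DeBruijn.const_mem_polyFns k (H 0))
  exact ⟨fun x => f x - H x + H 0, fun x => H x - H 0, hg.add continuous_const,
    fun x h => congrFun (DeBruijn.iterate_fwdDiff_eq_zero hH₀ h) x, sub_self _, fun x => by ring⟩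
end

section
/- Let f : ℝ → ℝ be a polynomial function of order k. Then there exists a polynomial function H of order k + 1 such that H(0) = 0 and f(x) = H(x + 1) − H(x) for all x ∈ ℝ. -/
/-!
Write `M i x = Ring.multichoose x i = x (x + 1) ⋯ (x + i - 1) / i!`. The function
`H x = ∑_{i ≤ k} (-1)^i M (i + 1) x Δ₁^i f x` satisfies `H 0 = 0` and `Δ₁ H = f`: by Pascal's
rule `M (i + 1) (x + 1) = M (i + 1) x + M i (x + 1)` the sum telescopes, and the last term
carries `Δ₁^(k+1) f = 0`. The order of `H` is at most `k + 1` because `M (i + 1)` has order `i + 1`,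
`Δ₁^i f` has order `k - i`, and orders add under products (Leibniz rule for `Δ`).

The substantial step is that `Δ_y` lowers the order of `u` by one, i.e. that `Δ_h^n u` is
`y`-periodic when `u` has order `n`. Along the line `t ↦ x + t y` both `a t = Δ_h^n u (x + t y)`
and `ψ t = Δ_{t h}^n u (x + t y)` have vanishing `(n+1)`-st differences, and `ψ m = m^n a m` for
`m ∈ ℕ`. Interpolating both on `ℕ` by polynomials of degree `≤ n` forces `a` to be constant.
-/

open Finset Function Polynomial fwdDiff fwdDiff_aux

section fwdDiff

variable {M G : Type*} [AddCommMonoid M] [AddCommGroup G]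

lemma fwdDiff_iter_sub (h : M) (f g : M → G) (n : ℕ) :
    (Δ_[h])^[n] (f - g) = (Δ_[h])^[n] f - (Δ_[h])^[n] g := by
  simpa only [coe_fwdDiffₗ_pow] using map_sub (fwdDiffₗ M G h ^ n) f g

lemma fwdDiff_iter_zero (h : M) (n : ℕ) : (Δ_[h])^[n] (0 : M → G) = 0 := by
  simpa using fwdDiff_iter_const_smul h (0 : ℕ) (0 : M → G) n

lemma fwdDiff_commute (a b : M) :
    Function.Commute (fwdDiff a : (M → G) → M → G) (fwdDiff b) := by
  intro f
  funext x
  simp only [fwdDiff, add_right_comm x a b]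
  abel

lemma fwdDiff_nsmul (s : M) (f : M → G) (m : ℕ) (x : M) :
    Δ_[m • s] f x = ∑ j ∈ range m, Δ_[s] f (x + j • s) := by
  simp only [fwdDiff, add_assoc, ← succ_nsmul]
  rw [sum_range_sub (fun j => f (x + j • s)), zero_nsmul, add_zero]

lemma fwdDiff_iter_nsmul {s : M} {f : M → G} {n : ℕ} (hf : (Δ_[s])^[n + 1] f = 0) (m : ℕ) :
    (Δ_[m • s])^[n] f = m ^ n • (Δ_[s])^[n] f := by
  induction n generalizing f with
  | zero => simp
  | succ n ih =>
    have hper : Periodic ((Δ_[s])^[n + 1] f) s := fun x => by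
      simpa [iterate_succ_apply', fwdDiff, sub_eq_zero] using congrFun hf x
    have hms : Δ_[m • s] ((Δ_[s])^[n] f) = m • (Δ_[s])^[n + 1] f := by
      funext x
      simp only [fwdDiff_nsmul, ← iterate_succ_apply' (fwdDiff s), hper.nsmul _ _, sum_const,
        card_range, Pi.smul_apply]
    have hf' : (Δ_[s])^[n + 1] (Δ_[m • s] f) = 0 := by
      rw [((fwdDiff_commute _ _).iterate_left _).eq]
      funext x
      simp [fwdDiff, (hper.nsmul m) x]
    rw [iterate_succ_apply, ih hf', ((fwdDiff_commute _ _).iterate_left _).eq, hms, smul_smul,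
      pow_succ]

lemma eq_zero_of_fwdDiff_iter_eq_zero {h : M} {g : M → G} {n : ℕ}
    (hg : (Δ_[h])^[n + 1] g = 0) {x : M} (hx : ∀ i ≤ n, g (x + i • h) = 0) (m : ℕ) :
    g (x + m • h) = 0 := by
  rw [shift_eq_sum_fwdDiff_iter h g m x]
  refine sum_eq_zero fun k _ => ?_
  rcases le_or_gt k n with hkn | hnk
  · rw [fwdDiff_iter_eq_sum_shift]
    exact smul_eq_zero_of_right _ <| sum_eq_zero fun i hi =>
      by rw [hx i (by simp at hi; omega), smul_zero]
  · obtain ⟨j, rfl⟩ := Nat.exists_eq_add_of_lt hnk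
    rw [add_right_comm, add_comm, iterate_add_apply, hg, fwdDiff_iter_zero, Pi.zero_apply,
      smul_zero]

end fwdDiff

section Leibniz

variable {M R : Type*} [AddCommMonoid M] [CommRing R]

lemma fwdDiff_mul (s : M) (f g : M → R) :
    Δ_[s] (f * g) = Δ_[s] f * (fun x => g (x + s)) + f * Δ_[s] g := by
  funext x
  simp only [fwdDiff, Pi.mul_apply, Pi.add_apply]
  ring

lemma fwdDiff_iter_mul (s : M) (f g : M → R) (N : ℕ) (x : M) :
    (Δ_[s])^[N] (f * g) x =
      ∑ i ∈ range (N + 1),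
        (N.choose i : R) * ((Δ_[s])^[i] f x * (Δ_[s])^[N - i] g (x + i • s)) := by
  induction N generalizing f g with
  | zero => simp
  | succ N ih =>
    rw [iterate_succ_apply, fwdDiff_mul, fwdDiff_iter_add, Pi.add_apply, ih, ih,
      sum_choose_succ_mul (fun i j => (Δ_[s])^[i] f x * (Δ_[s])^[j] g (x + i • s)), add_comm]
    congr 1
    · refine sum_congr rfl fun i hi => ?_
      rw [Nat.sub_add_comm (mem_range_succ_iff.1 hi), iterate_succ_apply]
    · refine sum_congr rfl fun i _ => ?_
      rw [iterate_succ_apply, fwdDiff_iter_comp_add, add_assoc, ← succ_nsmul]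

end Leibniz

lemma fwdDiff_iter_comp_affine {R G : Type*} [CommRing R] [AddCommGroup G] (g : R → G)
    (x y : R) (n : ℕ) (t : R) :
    (Δ_[1])^[n] (fun t => g (x + t * y)) t = (Δ_[y])^[n] g (x + t * y) := by
  simp only [fwdDiff_iter_eq_sum_shift, nsmul_eq_mul]
  congr! 3
  ring

def polyFunctions (R : Type*) {M G : Type*} [AddCommMonoid M] [Semiring R] [AddCommGroup G]
    [Module R G] (n : ℕ) : Submodule R (M → G) where
  carrier := {f | ∀ h, (Δ_[h])^[n + 1] f = 0}
  add_mem' hf hg h := by rw [fwdDiff_iter_add, hf h, hg h, add_zero]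
  zero_mem' h := fwdDiff_iter_zero h _
  smul_mem' c _ hf h := by rw [fwdDiff_iter_const_smul, hf h, smul_zero]

section polyFunctions

variable {R M G : Type*} [AddCommMonoid M] [Semiring R] [AddCommGroup G] [Module R G]

lemma fwdDiff_iter_eq_zero_of_mem_polyFunctions {n m : ℕ} {f : M → G}
    (hf : f ∈ polyFunctions R n) (hnm : n < m) (h : M) : (Δ_[h])^[m] f = 0 := by
  obtain ⟨k, rfl⟩ := Nat.exists_eq_add_of_lt hnm
  rw [add_right_comm, add_comm, iterate_add_apply, hf h, fwdDiff_iter_zero]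

lemma const_mem_polyFunctions (c : G) (n : ℕ) : (fun _ : M => c) ∈ polyFunctions R n := by
  intro h
  rw [iterate_succ_apply, fwdDiff_const]
  exact fwdDiff_iter_zero h n

end polyFunctions

lemma mul_mem_polyFunctions {M R : Type*} [AddCommMonoid M] [CommRing R] {d j : ℕ} {f g : M → R}
    (hf : f ∈ polyFunctions R d) (hg : g ∈ polyFunctions R j) :
    f * g ∈ polyFunctions R (d + j) := by
  intro h
  funext x
  rw [fwdDiff_iter_mul, Pi.zero_apply]
  refine sum_eq_zero fun i _ => ?_
  rcases Nat.lt_or_ge d i with hdi | hid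
  · rw [fwdDiff_iter_eq_zero_of_mem_polyFunctions hf hdi, Pi.zero_apply, zero_mul, mul_zero]
  · rw [fwdDiff_iter_eq_zero_of_mem_polyFunctions hg (by omega), Pi.zero_apply, mul_zero,
      mul_zero]

lemma ascPochhammer_eval_mem_polyFunctions {R : Type*} [CommRing R] (m : ℕ) :
    (fun x : R => (ascPochhammer R m).eval x) ∈ polyFunctions R m := by
  induction m with
  | zero => simpa using const_mem_polyFunctions (1 : R) 0
  | succ m ih =>
    have hlin : (fun x : R => x + m) ∈ polyFunctions R 1 := by
      intro h
      funext x
      simp [fwdDiff]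
    simp only [ascPochhammer_succ_right, eval_mul, eval_add, eval_X, eval_natCast]
    exact mul_mem_polyFunctions ih hlin

section Field

variable {F : Type*} [Field F] [CharZero F]

lemma exists_natDegree_le_eval_natCast_eq {f : F → F} {n : ℕ} (hf : (Δ_[1])^[n + 1] f = 0) :
    ∃ P : F[X], P.natDegree ≤ n ∧ ∀ m : ℕ, P.eval (m : F) = f m := by
  set P := Lagrange.interpolate (range (n + 1)) (Nat.cast : ℕ → F) (fun i => f i)
  have hinj : Set.InjOn (Nat.cast : ℕ → F) (range (n + 1)) := Nat.cast_injective.injOn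
  have hP : P.natDegree ≤ n := natDegree_le_of_degree_le <| by
    simpa only [card_range, Nat.add_sub_cancel] using Lagrange.degree_interpolate_le _ hinj
  refine ⟨P, hP, fun m => ?_⟩
  have hg := eq_zero_of_fwdDiff_iter_eq_zero (g := f - P.eval) (x := 0)
    (by rw [fwdDiff_iter_sub, hf, fwdDiff_iter_eq_zero_of_degree_lt (Nat.lt_succ_of_le hP),
      sub_zero])
    (fun i hi => by
      rw [zero_add, nsmul_eq_mul, mul_one, Pi.sub_apply, sub_eq_zero]
      exact (Lagrange.eval_interpolate_at_node (fun i => f i) hinj (i := i)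
        (mem_range.2 (by omega))).symm) m
  simp only [zero_add, nsmul_eq_mul, mul_one, Pi.sub_apply, sub_eq_zero] at hg
  exact hg.symm

lemma apply_one_eq_apply_zero_of_fwdDiff_iter_pow_mul {a ψ : F → F} {n : ℕ}
    (ha : (Δ_[1])^[n + 1] a = 0) (hψ : (Δ_[1])^[n + 1] ψ = 0)
    (hψa : ∀ m : ℕ, ψ m = m ^ n * a m) : a 1 = a 0 := by
  obtain ⟨W, -, hW⟩ := exists_natDegree_le_eval_natCast_eq ha
  obtain ⟨Q, hQ, hQψ⟩ := exists_natDegree_le_eval_natCast_eq hψ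
  have hWQ : X ^ n * W = Q := eq_of_infinite_eval_eq _ _ <|
    Set.infinite_of_injective_forall_mem Nat.cast_injective fun m => by simp [hW, hQψ, hψa]
  have hW0 : W = C (W.coeff 0) := by
    refine eq_C_of_natDegree_eq_zero ?_
    rcases eq_or_ne W 0 with rfl | hW0
    · simp
    · have := natDegree_X_pow_mul (n := n) hW0
      rw [hWQ] at this
      omega
  have h1 := hW 1
  have h0 := hW 0
  rw [hW0, eval_C] at h1 h0
  simpa using h1.symm.trans h0

lemma periodic_fwdDiff_iter_of_mem_polyFunctions {u : F → F} {n : ℕ}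
    (hu : u ∈ polyFunctions F n) (h y : F) : Periodic ((Δ_[h])^[n] u) y := by
  intro x
  have ha : (Δ_[1])^[n + 1] (fun t => (Δ_[h])^[n] u (x + t * y)) = 0 := by
    funext t
    rw [fwdDiff_iter_comp_affine, ((fwdDiff_commute _ _).iterate_iterate _ _).eq, hu y,
      fwdDiff_iter_zero]
    rfl
  have hψ : (Δ_[1])^[n + 1] (fun t => (Δ_[t * h])^[n] u (x + t * y)) = 0 := by
    have hsum : (fun t => (Δ_[t * h])^[n] u (x + t * y)) = ∑ k ∈ range (n + 1),
        ((-1 : ℤ) ^ (n - k) * n.choose k) • fun t => u (x + t * (y + k • h)) := by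
      funext t
      simp only [fwdDiff_iter_eq_sum_shift, Finset.sum_apply, Pi.smul_apply, nsmul_eq_mul]
      congr! 3
      ring
    rw [hsum, fwdDiff_iter_finsetSum]
    refine sum_eq_zero fun k _ => ?_
    funext t
    rw [fwdDiff_iter_const_smul, Pi.smul_apply, fwdDiff_iter_comp_affine, hu, Pi.zero_apply,
      smul_zero, Pi.zero_apply]
  have hψa (m : ℕ) :
      (Δ_[(m : F) * h])^[n] u (x + m * y) = (m : F) ^ n * (Δ_[h])^[n] u (x + m * y) := by
    simp only [← nsmul_eq_mul, fwdDiff_iter_nsmul (hu h), Pi.smul_apply]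
    simp
  simpa using apply_one_eq_apply_zero_of_fwdDiff_iter_pow_mul ha hψ hψa

lemma fwdDiff_mem_polyFunctions {u : F → F} {j : ℕ} (hu : u ∈ polyFunctions F (j + 1))
    (y : F) :
    Δ_[y] u ∈ polyFunctions F j := by
  intro s
  rw [((fwdDiff_commute _ _).iterate_left _).eq]
  funext x
  simp [fwdDiff, periodic_fwdDiff_iter_of_mem_polyFunctions hu s y x]

lemma fwdDiff_iter_mem_polyFunctions {u : F → F} {j : ℕ} (y : F) :
    ∀ i, u ∈ polyFunctions F (j + i) → (Δ_[y])^[i] u ∈ polyFunctions F j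
  | 0, hu => hu
  | i + 1, hu => by
    rw [iterate_succ_apply]
    exact fwdDiff_iter_mem_polyFunctions y i (fwdDiff_mem_polyFunctions hu y)

lemma multichoose_mem_polyFunctions (m : ℕ) :
    (fun x : F => Ring.multichoose x m) ∈ polyFunctions F m := by
  have h : (fun x : F => Ring.multichoose x m) =
      ((m.factorial : F)⁻¹) • fun x : F => (ascPochhammer F m).eval x := by
    funext x
    rw [Pi.smul_apply, smul_eq_mul, ← ascPochhammer_smeval_eq_eval,
      ← Ring.factorial_nsmul_multichoose_eq_ascPochhammer, nsmul_eq_mul, inv_mul_cancel_left₀]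
    exact Nat.cast_ne_zero.2 m.factorial_ne_zero
  rw [h]
  exact Submodule.smul_mem _ _ (ascPochhammer_eval_mem_polyFunctions m)

/-- The Newton series of `x ↦ ∑_{j < x} f j` expanded around `x` itself: formally
`-∑_i (-x).choose (i + 1) • Δ₁^i f x`, truncated at `i = k`. -/
noncomputable def antidiff (k : ℕ) (f : F → F) (x : F) : F :=
  ∑ i ∈ range (k + 1), (-1) ^ i * Ring.multichoose x (i + 1) * (Δ_[1])^[i] f x

lemma antidiff_zero (k : ℕ) (f : F → F) : antidiff k f 0 = 0 := by
  simp [antidiff]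

lemma fwdDiff_antidiff {k : ℕ} {f : F → F} (hf : (Δ_[1])^[k + 1] f = 0) :
    Δ_[1] (antidiff k f) = f := by
  funext x
  set b : ℕ → F := fun i => (-1) ^ i * Ring.multichoose (x + 1) i * (Δ_[1])^[i] f x
  have hstep : ∀ i, (-1) ^ i * Ring.multichoose (x + 1) (i + 1) * (Δ_[1])^[i] f (x + 1) -
      (-1) ^ i * Ring.multichoose x (i + 1) * (Δ_[1])^[i] f x = b i - b (i + 1) := by
    intro i
    have hD : (Δ_[1])^[i] f (x + 1) = (Δ_[1])^[i] f x + (Δ_[1])^[i + 1] f x := by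
      rw [iterate_succ_apply', fwdDiff]
      ring
    simp only [b, hD, Ring.multichoose_succ_succ x i, pow_succ]
    ring
  simp only [fwdDiff, antidiff, ← sum_sub_distrib, hstep, sum_range_sub', b, hf]
  simp

lemma antidiff_mem_polyFunctions {k : ℕ} {f : F → F} (hf : f ∈ polyFunctions F k) :
    antidiff k f ∈ polyFunctions F (k + 1) := by
  have h : antidiff k f = ∑ i ∈ range (k + 1),
      ((-1) ^ i : F) • ((fun x => Ring.multichoose x (i + 1)) * (Δ_[1])^[i] f) := by
    funext x
    simp [antidiff, mul_assoc]
  rw [h]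
  refine Submodule.sum_mem _ fun i hi => Submodule.smul_mem _ _ ?_
  have hik : i + 1 + (k - i) = k + 1 := by have := mem_range.1 hi; omega
  rw [← hik]
  refine mul_mem_polyFunctions (multichoose_mem_polyFunctions _)
    (fwdDiff_iter_mem_polyFunctions 1 i ?_)
  rwa [Nat.sub_add_cancel (mem_range_succ_iff.1 hi)]

end Field

/-- If `f : ℝ → ℝ` is a polynomial function of order `k` (i.e.
`Δ_h^{k+1} f ≡ 0`), then there is a polynomial function `H` of order `k + 1`
with `H(0) = 0` and `f(x) = H(x+1) - H(x)` for all `x`. -/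
theorem stmt9 (k : ℕ) (f : ℝ → ℝ)
    (hf : ∀ x h : ℝ, (fun u : ℝ → ℝ => fun y => u (y + h) - u y)^[k + 1] f x = 0) :
    ∃ H : ℝ → ℝ,
      (∀ x h : ℝ, (fun u : ℝ → ℝ => fun y => u (y + h) - u y)^[k + 2] H x = 0) ∧
      H 0 = 0 ∧ ∀ x, f x = H (x + 1) - H x := by
  have hf' : f ∈ polyFunctions ℝ k := fun h => funext fun x => hf x h
  refine ⟨antidiff k f, fun x h => congrFun (antidiff_mem_polyFunctions hf' h) x,
    antidiff_zero k f, fun x => ?_⟩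
  exact (congrFun (fwdDiff_antidiff (hf' 1)) x).symm
end

section
/- Let a^1, ..., a^k be nonzero vectors in ℝ^n such that some k − 1 of them are linearly independent, let s ≥ 0 be an integer, and suppose a function f ∈ C^s(ℝ^n) has the form f(x) = ∑_{i=1}^k f_i(a^i·x), where f_1, ..., f_k : ℝ → ℝ are arbitrarily behaved functions. Then there exist functions g_1, ..., g_k ∈ C^s(ℝ) such that f(x) = ∑_{i=1}^k g_i(a^i·x) for all x ∈ ℝ^n. -/
/-!
If the directions are linearly independent, each profile is recovered from `f` itself: for a
vector `b` with `aʲ · b = δᵢⱼ` we have `fᵢ(z) = f(z b) - f(0) + fᵢ(0)`.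

Otherwise `aʲ⁰ = ∑ cᵢ aⁱ` over the independent directions. If only one `cᵢ` is nonzero,
`fⱼ₀(aʲ⁰ · x)` is a ridge function in direction `aⁱ` and can be merged into `fᵢ`. If `c_p` and
`c_q` are nonzero for `p ≠ q`, restricting `f` to a plane on which `aʲ⁰ · x = t + r` while every
other direction only sees `t` or only sees `r` shows that the Cauchy difference
`Θ(t, r) = fⱼ₀(t + r) - fⱼ₀(t) - fⱼ₀(r) + fⱼ₀(0)` is `Cˢ`. Integrating `Θ` produces a `Cˢ`
function `φ` with the same Cauchy difference, so `fⱼ₀ - φ` is additive up to a constant and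
`(fⱼ₀ - φ)(aʲ⁰ · x)` splits into ridge functions in the independent directions. In both cases we
are left with a ridge sum over independent directions, which the first case handles.
-/

open Finset Function intervalIntegral Set

theorem exists_forall_dotProduct_eq {K ι σ : Type*} [Field K] [Fintype ι] [Fintype σ]
    {a : ι → σ → K} (ha : LinearIndependent K a) (y : ι → K) :
    ∃ x, ∀ i, a i ⬝ᵥ x = y i := by
  have hrange : LinearMap.range (Matrix.of a).mulVecLin = ⊤ := by
    apply Submodule.eq_top_of_finrank_eq
    rw [← Matrix.rank, LinearIndependent.rank_matrix (M := Matrix.of a) ha,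
      Module.finrank_fintype_fun_eq_card]
  obtain ⟨x, hx⟩ := LinearMap.range_eq_top.1 hrange y
  exact ⟨x, congrFun hx⟩

theorem contDiff_profile_of_linearIndependent {ι σ E : Type*} [Fintype ι] [DecidableEq ι]
    [Fintype σ] [NormedAddCommGroup E] [NormedSpace ℝ E] {a : ι → σ → ℝ}
    (ha : LinearIndependent ℝ a) {n : WithTop ℕ∞} {h : (σ → ℝ) → E} (hh : ContDiff ℝ n h)
    {H : ι → ℝ → E} (hrep : ∀ x, h x = ∑ i, H i (a i ⬝ᵥ x)) (i : ι) : ContDiff ℝ n (H i) := by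
  obtain ⟨b, hb⟩ := exists_forall_dotProduct_eq ha (Pi.single i 1)
  have key : ∀ z, H i z = h (z • b) - h 0 + H i 0 := by
    intro z
    have : h (z • b) - h 0 = H i z - H i 0 := by
      rw [hrep, hrep, ← sum_sub_distrib, sum_eq_single i]
      · simp [dotProduct_smul, hb]
      · intro j _ hji
        simp [dotProduct_smul, hb, hji]
      · simp
    rw [this, sub_add_cancel]
  rw [funext key]
  exact ((hh.comp (contDiff_id.smul contDiff_const)).sub contDiff_const).add contDiff_const

section CauchyDiff

variable {M N : Type*} [AddCommMonoid M] [AddCommGroup N]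

def cauchyDiff (G : M → N) (t r : M) : N := G (t + r) - G t - G r + G 0

theorem cauchyDiff_zero_left (G : M → N) (r : M) : cauchyDiff G 0 r = 0 := by
  simp [cauchyDiff]

theorem cauchyDiff_zero_right (G : M → N) (t : M) : cauchyDiff G t 0 = 0 := by
  simp [cauchyDiff]

theorem cauchyDiff_sub (G φ : M → N) (t r : M) :
    cauchyDiff (G - φ) t r = cauchyDiff G t r - cauchyDiff φ t r := by
  simp only [cauchyDiff, Pi.sub_apply]
  abel

theorem apply_sum_of_cauchyDiff_eq_zero {G : M → N} (hG : ∀ t r, cauchyDiff G t r = 0)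
    {α : Type*} (S : Finset α) (w : α → M) :
    G (∑ i ∈ S, w i) = ∑ i ∈ S, (G (w i) - G 0) + G 0 := by
  classical
  induction S using Finset.induction with
  | empty => simp
  | insert j S hj ih =>
    have hadd : G (w j + ∑ i ∈ S, w i) = G (w j) + G (∑ i ∈ S, w i) - G 0 := by
      rw [← sub_eq_zero, ← hG (w j) (∑ i ∈ S, w i), cauchyDiff]
      abel
    rw [sum_insert hj, sum_insert hj, hadd, ih]
    abel

theorem apply_sum_of_at_most_one_ne_zero (G : M → N) {α : Type*} (S : Finset α) (w : α → M)
    (hw : ∀ i ∈ S, ∀ j ∈ S, w i ≠ 0 → w j ≠ 0 → i = j) :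
    G (∑ i ∈ S, w i) = ∑ i ∈ S, (G (w i) - G 0) + G 0 := by
  by_cases h : ∃ p ∈ S, w p ≠ 0
  · obtain ⟨p, hp, hwp⟩ := h
    have hzero : ∀ i ∈ S, i ≠ p → w i = 0 := fun i hi hip => by
      by_contra hwi
      exact hip (hw i hi p hp hwi hwp)
    rw [sum_eq_single_of_mem p hp hzero, sum_eq_single_of_mem p hp fun i hi hip => by
      simp [hzero i hi hip]]
    abel
  · push Not at h
    rw [sum_eq_zero h, sum_eq_zero fun i hi => by rw [h i hi, sub_self]]
    abel

end CauchyDiff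

section Integral

variable {E : Type*} [NormedAddCommGroup E] [NormedSpace ℝ E]

theorem contDiff_primitive [CompleteSpace E] {m : ℕ} {u : ℝ → E} (hu : ContDiff ℝ m u) (a : ℝ) :
    ContDiff ℝ m (fun x => ∫ s in a..x, u s) := by
  have hderiv : ∀ x, HasDerivAt (fun x => ∫ s in a..x, u s) (u x) x := fun x =>
    integral_hasDerivAt_right (hu.continuous.intervalIntegrable a x)
      hu.continuous.aestronglyMeasurable.stronglyMeasurableAtFilter hu.continuous.continuousAt
  have h : ContDiff ℝ (m + 1) (fun x => ∫ s in a..x, u s) := by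
    rw [contDiff_succ_iff_deriv]
    refine ⟨fun x => (hderiv x).differentiableAt, by simp, ?_⟩
    rwa [funext fun x => (hderiv x).deriv]
  exact h.of_le (by exact_mod_cast m.le_succ)

theorem contDiff_parametric_intervalIntegral {m : ℕ} {Θ : ℝ → ℝ → E}
    (hΘ : ContDiff ℝ m (uncurry Θ)) (a b : ℝ) :
    ContDiff ℝ m (fun t => ∫ s in a..b, Θ t s) := by
  induction m generalizing Θ with
  | zero =>
    rw [Nat.cast_zero, contDiff_zero] at hΘ ⊢
    exact continuous_parametric_intervalIntegral_of_continuous' hΘ a b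
  | succ m ih =>
    rw [Nat.cast_succ] at hΘ ⊢
    set D : ℝ → ℝ → E := fun t s => fderiv ℝ (uncurry Θ) (t, s) (1, 0)
    have hD : ContDiff ℝ m (uncurry D) :=
      (hΘ.fderiv_right le_rfl).clm_apply contDiff_const
    have hΘD : ∀ t s, HasDerivAt (fun t => Θ t s) (D t s) t := fun t s =>
      ((hΘ.differentiable (by simp)).differentiableAt.hasFDerivAt).comp_hasDerivAt t
        ((hasDerivAt_id t).prodMk (hasDerivAt_const t s))
    have hderiv : ∀ t₀, HasDerivAt (fun t => ∫ s in a..b, Θ t s) (∫ s in a..b, D t₀ s) t₀ := by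
      intro t₀
      obtain ⟨C, hC⟩ := (isCompact_closedBall t₀ 1 |>.prod isCompact_uIcc)
        |>.exists_bound_of_continuousOn
          (hD.continuous.continuousOn (s := Metric.closedBall t₀ 1 ×ˢ uIcc a b))
      refine (hasDerivAt_integral_of_dominated_loc_of_deriv_le (bound := fun _ => C)
        (Metric.ball_mem_nhds t₀ one_pos)
        (Filter.Eventually.of_forall fun t => (hΘ.continuous.uncurry_left t).aestronglyMeasurable)
        ((hΘ.continuous.uncurry_left t₀).intervalIntegrable a b)
        (hD.continuous.uncurry_left t₀).aestronglyMeasurable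
        (Filter.Eventually.of_forall fun s hs t ht =>
          hC (t, s) ⟨Metric.ball_subset_closedBall ht, uIoc_subset_uIcc hs⟩)
        intervalIntegrable_const
        (Filter.Eventually.of_forall fun s _ t _ => hΘD t s)).2
    rw [contDiff_succ_iff_deriv]
    refine ⟨fun t => (hderiv t).differentiableAt, by simp, ?_⟩
    rw [funext fun t => (hderiv t).deriv]
    exact ih hD

end Integral

theorem cauchyDiff_intervalIntegral_cauchyDiff {G : ℝ → ℝ}
    (hG : Continuous (uncurry (cauchyDiff G))) (t r : ℝ) :
    cauchyDiff (fun x => (∫ u in 0..x, cauchyDiff G u 1) - ∫ u in 0..1, cauchyDiff G x u) t r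
      = cauchyDiff G t r := by
  -- Formally the left-hand side is the Cauchy difference of `x ↦ G x - (G 1 - G 0) * x - G 0`;
  -- the computation has to go through `Θ` because `G` itself need not be integrable.
  set Θ := cauchyDiff G
  have hleft : ∀ s, Θ (t + r) s - Θ t s - Θ r s = Θ t (s + r) - Θ t r - Θ t s := by
    intro s; simp only [Θ, cauchyDiff]; ring_nf
  have hright : ∀ s, Θ (s + t) 1 - Θ s 1 = Θ t (s + 1) - Θ t s := by
    intro s; simp only [Θ, cauchyDiff]; ring_nf
  have hQ : (∫ s in 0..1, Θ (t + r) s) - (∫ s in 0..1, Θ t s) - (∫ s in 0..1, Θ r s)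
      = (∫ s in r..1 + r, Θ t s) - Θ t r - ∫ s in 0..1, Θ t s := by
    rw [← integral_sub, ← integral_sub, integral_congr fun s _ => hleft s, integral_sub,
      integral_sub, integral_comp_add_right (Θ t), zero_add, integral_const]
    · simp
    all_goals exact Continuous.intervalIntegrable (by fun_prop) _ _
  have hP : (∫ s in 0..t + r, Θ s 1) - (∫ s in 0..t, Θ s 1) - (∫ s in 0..r, Θ s 1)
      = (∫ s in 1..r + 1, Θ t s) - ∫ s in 0..r, Θ t s := by
    have hshift₁ : ∫ s in t..t + r, Θ s 1 = ∫ s in 0..r, Θ (s + t) 1 := by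
      rw [integral_comp_add_right (Θ · 1) t, zero_add, add_comm r]
    have hshift₂ : ∫ s in 0..r, Θ t (s + 1) = ∫ s in 1..r + 1, Θ t s := by
      rw [integral_comp_add_right (Θ t) 1, zero_add]
    rw [integral_interval_sub_left, hshift₁, ← integral_sub, integral_congr fun s _ => hright s,
      integral_sub, hshift₂]
    all_goals exact Continuous.intervalIntegrable (by fun_prop) _ _
  have hadj : (∫ s in 0..1, Θ t s) + (∫ s in 1..r + 1, Θ t s)
      = (∫ s in 0..r, Θ t s) + ∫ s in r..1 + r, Θ t s := by
    rw [integral_add_adjacent_intervals, add_comm 1 r, integral_add_adjacent_intervals]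
    all_goals exact Continuous.intervalIntegrable (by fun_prop) _ _
  have hΘ0 : ∫ s in (0:ℝ)..1, Θ 0 s = 0 := by simp [Θ, cauchyDiff_zero_left]
  simp only [cauchyDiff, integral_same, hΘ0] at hQ hP ⊢
  linarith

theorem exists_contDiff_cauchyDiff_sub_eq_zero {m : ℕ} {G : ℝ → ℝ}
    (hG : ContDiff ℝ m (uncurry (cauchyDiff G))) :
    ∃ φ : ℝ → ℝ, ContDiff ℝ m φ ∧ ∀ t r, cauchyDiff (G - φ) t r = 0 :=
  ⟨fun x => (∫ u in 0..x, cauchyDiff G u 1) - ∫ u in 0..1, cauchyDiff G x u,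
    (contDiff_primitive (hG.comp (contDiff_id.prodMk contDiff_const)) 0).sub
      (contDiff_parametric_intervalIntegral hG 0 1),
    fun t r => by
      rw [cauchyDiff_sub, cauchyDiff_intervalIntegral_cauchyDiff hG.continuous, sub_self]⟩

section Ridge

variable {ι σ : Type*} [Fintype σ] {a : ι → σ → ℝ} {f : (σ → ℝ) → ℝ} {F : ι → ℝ → ℝ}

theorem cauchyDiff_eq_of_dotProduct_eq_one [Fintype ι] (hrep : ∀ x, f x = ∑ i, F i (a i ⬝ᵥ x))
    {j₀ : ι} {u v : σ → ℝ} (hu : a j₀ ⬝ᵥ u = 1) (hv : a j₀ ⬝ᵥ v = 1)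
    (huv : ∀ j ≠ j₀, a j ⬝ᵥ u = 0 ∨ a j ⬝ᵥ v = 0) (t r : ℝ) :
    cauchyDiff (F j₀) t r = f (t • u + r • v) - f (t • u) - f (r • v) + f 0 := by
  have hsum : f (t • u + r • v) - f (t • u) - f (r • v) + f 0
      = ∑ j, cauchyDiff (F j) (t * (a j ⬝ᵥ u)) (r * (a j ⬝ᵥ v)) := by
    simp only [hrep, cauchyDiff, dotProduct_add, dotProduct_smul, dotProduct_zero, smul_eq_mul,
      sum_add_distrib, sum_sub_distrib]
  rw [hsum, sum_eq_single j₀]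
  · simp [hu, hv]
  · intro j _ hj
    rcases huv j hj with h | h <;> simp [h, cauchyDiff_zero_left, cauchyDiff_zero_right]
  · simp

theorem exists_dotProduct_eq_one_of_coeff_ne_zero [DecidableEq ι] {S : Finset ι}
    (hind : LinearIndependent ℝ (fun i : S => a i)) {j₀ : ι} {c : ι → ℝ}
    (hc : a j₀ = ∑ i ∈ S, c i • a i) {p : ι} (hp : p ∈ S) (hcp : c p ≠ 0) :
    ∃ u, a j₀ ⬝ᵥ u = 1 ∧ ∀ i ∈ S, i ≠ p → a i ⬝ᵥ u = 0 := by
  obtain ⟨u, hu⟩ := exists_forall_dotProduct_eq hind fun i => if i.1 = p then (c p)⁻¹ else 0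
  have hu' : ∀ i ∈ S, a i ⬝ᵥ u = if i = p then (c p)⁻¹ else 0 := fun i hi => hu ⟨i, hi⟩
  refine ⟨u, ?_, fun i hi hip => by rw [hu' i hi, if_neg hip]⟩
  rw [hc, sum_dotProduct, sum_eq_single_of_mem p hp, smul_dotProduct, hu' p hp, if_pos rfl,
    smul_eq_mul, mul_inv_cancel₀ hcp]
  intro i hi hip
  rw [smul_dotProduct, hu' i hi, if_neg hip, smul_zero]

theorem exists_contDiff_sub_apply_sum_eq [Fintype ι] [DecidableEq ι] {m : ℕ} {j₀ : ι}
    {c : ι → ℝ} (hind : LinearIndependent ℝ (fun i : univ.erase j₀ => a i))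
    (hc : a j₀ = ∑ i ∈ univ.erase j₀, c i • a i) (hf : ContDiff ℝ m f)
    (hrep : ∀ x, f x = ∑ i, F i (a i ⬝ᵥ x)) :
    ∃ φ : ℝ → ℝ, ContDiff ℝ m φ ∧ ∀ y : ι → ℝ,
      (F j₀ - φ) (∑ i ∈ univ.erase j₀, c i * y i)
        = ∑ i ∈ univ.erase j₀, ((F j₀ - φ) (c i * y i) - (F j₀ - φ) 0) + (F j₀ - φ) 0 := by
  by_cases hsingle : ∀ p ∈ univ.erase j₀, ∀ q ∈ univ.erase j₀, c p ≠ 0 → c q ≠ 0 → p = q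
  · exact ⟨0, contDiff_const, fun y => apply_sum_of_at_most_one_ne_zero _ _ _
      fun i hi j hj hi₀ hj₀ =>
        hsingle i hi j hj (left_ne_zero_of_mul hi₀) (left_ne_zero_of_mul hj₀)⟩
  push Not at hsingle
  obtain ⟨p, hp, q, hq, hcp, hcq, hpq⟩ := hsingle
  obtain ⟨u, hu, hu₀⟩ := exists_dotProduct_eq_one_of_coeff_ne_zero hind hc hp hcp
  obtain ⟨v, hv, hv₀⟩ := exists_dotProduct_eq_one_of_coeff_ne_zero hind hc hq hcq
  have huv : ∀ j ≠ j₀, a j ⬝ᵥ u = 0 ∨ a j ⬝ᵥ v = 0 := fun j hj => by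
    have hjT : j ∈ univ.erase j₀ := mem_erase.2 ⟨hj, mem_univ j⟩
    by_cases hjp : j = p
    · exact Or.inr (hv₀ j hjT (hjp ▸ hpq))
    · exact Or.inl (hu₀ j hjT hjp)
  have hG : ContDiff ℝ m (uncurry (cauchyDiff (F j₀))) := by
    rw [show uncurry (cauchyDiff (F j₀)) = fun p : ℝ × ℝ =>
        f (p.1 • u + p.2 • v) - f (p.1 • u) - f (p.2 • v) + f 0 from
      funext fun p => cauchyDiff_eq_of_dotProduct_eq_one hrep hu hv huv p.1 p.2]
    fun_prop
  obtain ⟨φ, hφ, hcd⟩ := exists_contDiff_cauchyDiff_sub_eq_zero hG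
  exact ⟨φ, hφ, fun y => apply_sum_of_cauchyDiff_eq_zero hcd _ _⟩

theorem exists_contDiff_eq_add_sum_erase [Fintype ι] [DecidableEq ι] {m : ℕ} {j₀ : ι}
    {c : ι → ℝ} (hind : LinearIndependent ℝ (fun i : univ.erase j₀ => a i))
    (hc : a j₀ = ∑ i ∈ univ.erase j₀, c i • a i) (hf : ContDiff ℝ m f)
    (hrep : ∀ x, f x = ∑ i, F i (a i ⬝ᵥ x)) :
    ∃ φ : ℝ → ℝ, ContDiff ℝ m φ ∧ ∃ H : ι → ℝ → ℝ,
      ∀ x, f x = φ (a j₀ ⬝ᵥ x) + ∑ i ∈ univ.erase j₀, H i (a i ⬝ᵥ x) := by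
  obtain ⟨φ, hφ, hA⟩ := exists_contDiff_sub_apply_sum_eq hind hc hf hrep
  set A := F j₀ - φ
  refine ⟨φ + fun _ => A 0, hφ.add contDiff_const, fun i z => F i z + (A (c i * z) - A 0),
    fun x => ?_⟩
  have hdot : a j₀ ⬝ᵥ x = ∑ i ∈ univ.erase j₀, c i * (a i ⬝ᵥ x) := by
    simp only [hc, sum_dotProduct, smul_dotProduct, smul_eq_mul]
  have hFj₀ : F j₀ (a j₀ ⬝ᵥ x) = φ (a j₀ ⬝ᵥ x) + A (a j₀ ⬝ᵥ x) := by simp [A]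
  rw [hrep, ← add_sum_erase _ _ (mem_univ j₀), hFj₀, sum_add_distrib, hdot,
    hA fun i => a i ⬝ᵥ x, Pi.add_apply]
  ring

theorem exists_contDiff_profiles_of_linearIndependent_erase [Fintype ι] [DecidableEq ι] {m : ℕ}
    {j₀ : ι} (hind : LinearIndependent ℝ (fun i : univ.erase j₀ => a i)) (hf : ContDiff ℝ m f)
    (hrep : ∀ x, f x = ∑ i, F i (a i ⬝ᵥ x)) :
    ∃ g : ι → ℝ → ℝ, (∀ i, ContDiff ℝ m (g i)) ∧ ∀ x, f x = ∑ i, g i (a i ⬝ᵥ x) := by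
  by_cases hspan : a j₀ ∈ Submodule.span ℝ (a '' ↑(univ.erase j₀))
  swap
  · have hindep : LinearIndependent ℝ a := linearIndepOn_univ_iff.1 <| by
      simpa using (linearIndepOn_insert (notMem_erase j₀ _)).2 ⟨hind, hspan⟩
    exact ⟨F, contDiff_profile_of_linearIndependent hindep hf hrep, hrep⟩
  obtain ⟨c, hc⟩ := (Submodule.mem_span_image_finset_iff_exists_fun' ℝ).1 hspan
  obtain ⟨φ, hφ, H, hH⟩ := exists_contDiff_eq_add_sum_erase hind hc.symm hf hrep
  have hHs : ∀ i : univ.erase j₀, ContDiff ℝ m (H i) :=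
    contDiff_profile_of_linearIndependent hind
      (hf.sub (by simp only [dotProduct]; fun_prop : ContDiff ℝ m fun x => φ (a j₀ ⬝ᵥ x)))
      fun x => by rw [hH x, add_sub_cancel_left]; exact (sum_coe_sort _ _).symm
  refine ⟨update H j₀ φ, fun i => ?_, fun x => ?_⟩
  · rcases eq_or_ne i j₀ with rfl | hi
    · simpa using hφ
    · simpa [hi] using hHs ⟨i, mem_erase.2 ⟨hi, mem_univ i⟩⟩
  · rw [hH x, ← add_sum_erase _ _ (mem_univ j₀), update_self]
    exact congrArg _ (sum_congr rfl fun i hi => by rw [update_of_ne (ne_of_mem_erase hi)])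

end Ridge

theorem Finset.exists_eq_univ_erase_of_card_add_one {α : Type*} [Fintype α] [DecidableEq α]
    {T : Finset α} (h : T.card + 1 = Fintype.card α) : ∃ j, T = univ.erase j := by
  obtain ⟨j, hj⟩ := card_eq_one.1 (show Tᶜ.card = 1 by rw [card_compl]; omega)
  exact ⟨j, by rw [← compl_compl T, hj, compl_singleton]⟩

theorem stmt13_general {n k : ℕ} (s : ℕ) (a : Fin k → Fin n → ℝ)
    (hind : ∃ T : Finset (Fin k), T.card = k - 1 ∧
      LinearIndependent ℝ (fun i : {x : Fin k // x ∈ T} => a i.1))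
    (f : (Fin n → ℝ) → ℝ) (hf : ContDiff ℝ (s : ℕ∞) f)
    (F : Fin k → ℝ → ℝ)
    (hrepr : ∀ x : Fin n → ℝ, f x = ∑ i, F i (∑ t, a i t * x t)) :
    ∃ g : Fin k → ℝ → ℝ, (∀ i, ContDiff ℝ (s : ℕ∞) (g i)) ∧
      ∀ x : Fin n → ℝ, f x = ∑ i, g i (∑ t, a i t * x t) := by
  obtain ⟨T, hTcard, hTind⟩ := hind
  rcases k with _ | k
  · exact ⟨F, fun i => i.elim0, hrepr⟩
  obtain ⟨j₀, rfl⟩ := exists_eq_univ_erase_of_card_add_one (T := T) (by simp [hTcard])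
  obtain ⟨g, hg, hfg⟩ := exists_contDiff_profiles_of_linearIndependent_erase hTind
    (by exact_mod_cast hf : ContDiff ℝ s f) hrepr
  exact ⟨g, fun i => by exact_mod_cast hg i, hfg⟩

/-- If `f ∈ Cˢ(ℝⁿ)` is a sum of arbitrarily behaved ridge functions with
nonzero directions `a¹,...,aᵏ`, some `k - 1` of which are linearly
independent, then it is a sum of `Cˢ` ridge functions with the same
directions. -/
theorem stmt13 {n k : ℕ} (s : ℕ) (a : Fin k → Fin n → ℝ) (ha : ∀ i, a i ≠ 0)
    (hind : ∃ T : Finset (Fin k), T.card = k - 1 ∧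
      LinearIndependent ℝ (fun i : {x : Fin k // x ∈ T} => a i.1))
    (f : (Fin n → ℝ) → ℝ) (hf : ContDiff ℝ (s : ℕ∞) f)
    (F : Fin k → ℝ → ℝ)
    (hrepr : ∀ x : Fin n → ℝ, f x = ∑ i, F i (∑ t, a i t * x t)) :
    ∃ g : Fin k → ℝ → ℝ, (∀ i, ContDiff ℝ (s : ℕ∞) (g i)) ∧
      ∀ x : Fin n → ℝ, f x = ∑ i, g i (∑ t, a i t * x t) :=
  stmt13_general s a hind f hf F hrepr
end

section
/- Let R = [a_1, b_1] × [a_2, b_2], let c ∈ (a_1, b_1], and set R_1 = [a_1, c] × [a_2, b_2]. Suppose f ∈ V_c(R). Then E(f, R) = L(f, R_1) = (1/4)(f(a_1, a_2) + f(c, b_2) − f(a_1, b_2) − f(c, a_2)). Moreover, the equation L(f, [a_1, c] × [a_2, y]) = (1/2) L(f, R_1) has at least one solution y_0 ∈ [a_2, b_2], and for any such y_0 the function φ_0(x) + ψ_0(y), with φ_0(x) = f(x, y_0) and ψ_0(y) = (1/2)(f(a_1, y) + f(c, y) − f(a_1, y_0) − f(c, y_0)), is a best approximating sum, i.e., max_{(x,y)∈R}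 |f(x, y) − φ_0(x) − ψ_0(y)| = E(f, R). -/
/-!
For any sums `φ(x) + ψ(y)`, `L(f, S) = L(f - φ - ψ, S)` is an average of four
values of `f - φ - ψ` with signs, so `L(f, R₁)` bounds the error from below. Conversely, the
residual of `φ₀ + ψ₀` equals `2 (L(f, [a₁,x] × [y₀,y]) - L(f, [x,c] × [y₀,y]))`; the sign
conditions of `V_c` bound its absolute value by `2 L(f, [a₁,c] × [y₀,y])`, and the choice of `y₀`
makes this at most `L(f, R₁)`, with equality at the corner `(a₁, a₂)`.
-/

open Set

/-- The paper's `L(f, [x1, x2] × [y1, y2])`. -/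
noncomputable def rectL (f : ℝ → ℝ → ℝ) (x1 x2 y1 y2 : ℝ) : ℝ :=
  (1 / 4) * (f x1 y1 + f x2 y2 - f x1 y2 - f x2 y1)

section rectL

variable (f : ℝ → ℝ → ℝ) (x1 x2 x3 y1 y2 y3 : ℝ)

theorem rectL_add_rectL_left :
    rectL f x1 x2 y1 y2 + rectL f x2 x3 y1 y2 = rectL f x1 x3 y1 y2 := by
  unfold rectL; ring

theorem rectL_add_rectL_right :
    rectL f x1 x2 y1 y2 + rectL f x1 x2 y2 y3 = rectL f x1 x2 y1 y3 := by
  unfold rectL; ring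

theorem rectL_swap_left : rectL f x2 x1 y1 y2 = -rectL f x1 x2 y1 y2 := by
  unfold rectL; ring

theorem rectL_swap_right : rectL f x1 x2 y2 y1 = -rectL f x1 x2 y1 y2 := by
  unfold rectL; ring

theorem rectL_sub_sub (φ ψ : ℝ → ℝ) :
    rectL (fun x y => f x y - φ x - ψ y) x1 x2 y1 y2 = rectL f x1 x2 y1 y2 := by
  unfold rectL; ring

theorem rectL_le_of_abs_le {e : ℝ} (h11 : |f x1 y1| ≤ e) (h22 : |f x2 y2| ≤ e)
    (h12 : |f x1 y2| ≤ e) (h21 : |f x2 y1| ≤ e) : rectL f x1 x2 y1 y2 ≤ e := by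
  unfold rectL
  linarith [le_abs_self (f x1 y1), le_abs_self (f x2 y2), neg_abs_le (f x1 y2),
    neg_abs_le (f x2 y1)]

end rectL

/-- The paper's class `V_c(R)` for `R = [a1, b1] × [a2, b2]`, without the continuity
requirement. -/
structure ClassV (f : ℝ → ℝ → ℝ) (a1 b1 a2 b2 c : ℝ) : Prop where
  nonneg_left : ∀ x1 x2 y1 y2 : ℝ, a1 ≤ x1 → x1 ≤ x2 → x2 ≤ c → a2 ≤ y1 → y1 ≤ y2 → y2 ≤ b2 →
    0 ≤ rectL f x1 x2 y1 y2
  nonpos_right : ∀ x1 x2 y1 y2 : ℝ, c ≤ x1 → x1 ≤ x2 → x2 ≤ b1 → a2 ≤ y1 → y1 ≤ y2 → y2 ≤ b2 →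
    rectL f x1 x2 y1 y2 ≤ 0
  nonneg_full : ∀ y1 y2 : ℝ, a2 ≤ y1 → y1 ≤ y2 → y2 ≤ b2 → 0 ≤ rectL f a1 b1 y1 y2

namespace ClassV

variable {f : ℝ → ℝ → ℝ} {a1 b1 a2 b2 c x y y0 y1 y2 : ℝ}

theorem abs_rectL_sub_rectL_le (hf : ClassV f a1 b1 a2 b2 c) (hx : x ∈ Icc a1 b1)
    (hy1 : a2 ≤ y1) (hy : y1 ≤ y2) (hy2 : y2 ≤ b2) :
    |rectL f a1 x y1 y2 - rectL f x c y1 y2| ≤ rectL f a1 c y1 y2 := by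
  rw [abs_le]
  rcases le_total x c with hxc | hcx
  · have hleft := hf.nonneg_left a1 x y1 y2 le_rfl hx.1 hxc hy1 hy hy2
    have hright := hf.nonneg_left x c y1 y2 hx.1 hxc le_rfl hy1 hy hy2
    have hsum := rectL_add_rectL_left f a1 x c y1 y2
    constructor <;> linarith
  · have hcx' := hf.nonpos_right c x y1 y2 le_rfl hcx hx.2 hy1 hy hy2
    have hxb := hf.nonpos_right x b1 y1 y2 hcx hx.2 le_rfl hy1 hy hy2
    have hfull := hf.nonneg_full y1 y2 hy1 hy hy2
    have hsplit := rectL_add_rectL_left f a1 c x y1 y2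
    have hsplit' := rectL_add_rectL_left f a1 x b1 y1 y2
    have hswap := rectL_swap_left f c x y1 y2
    constructor <;> linarith

theorem abs_residual_le (hf : ClassV f a1 b1 a2 b2 c) (hc : a1 ≤ c) (hy0 : y0 ∈ Icc a2 b2)
    (hhalf : rectL f a1 c a2 y0 = 1 / 2 * rectL f a1 c a2 b2) (hx : x ∈ Icc a1 b1)
    (hy : y ∈ Icc a2 b2) :
    |f x y - f x y0 - 1 / 2 * (f a1 y + f c y - f a1 y0 - f c y0)| ≤ rectL f a1 c a2 b2 := by
  have hresidual : f x y - f x y0 - 1 / 2 * (f a1 y + f c y - f a1 y0 - f c y0) =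
      2 * (rectL f a1 x y0 y - rectL f x c y0 y) := by
    unfold rectL; ring
  rw [hresidual, abs_mul, abs_two]
  rcases le_total y0 y with hy0y | hyy0
  · have hbound := hf.abs_rectL_sub_rectL_le hx hy0.1 hy0y hy.2
    have htop := hf.nonneg_left a1 c y b2 le_rfl hc le_rfl hy.1 hy.2 le_rfl
    have hsplit := rectL_add_rectL_right f a1 c a2 y0 y
    have hsplit' := rectL_add_rectL_right f a1 c a2 y b2
    linarith
  · have hbound := hf.abs_rectL_sub_rectL_le hx hy.1 hyy0 hy0.2
    have hbot := hf.nonneg_left a1 c a2 y le_rfl hc le_rfl le_rfl hy.1 hy.2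
    have hsplit := rectL_add_rectL_right f a1 c a2 y y0
    have hswap :
        rectL f a1 x y0 y - rectL f x c y0 y = -(rectL f a1 x y y0 - rectL f x c y y0) := by
      rw [rectL_swap_right f a1 x, rectL_swap_right f x c]; ring
    rw [hswap, abs_neg]
    linarith

end ClassV

noncomputable def approxError (f : ℝ → ℝ → ℝ) (φ ψ : ℝ → ℝ) (s : Set (ℝ × ℝ)) : ℝ :=
  sSup ((fun q : ℝ × ℝ => |f q.1 q.2 - φ q.1 - ψ q.2|) '' s)

section approxError

variable {f : ℝ → ℝ → ℝ} {φ ψ : ℝ → ℝ} {u v : Set ℝ}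

theorem abs_sub_sub_le_approxError (hu : IsCompact u) (hv : IsCompact v)
    (hf : ContinuousOn (fun q : ℝ × ℝ => f q.1 q.2) (u ×ˢ v)) (hφ : ContinuousOn φ u)
    (hψ : ContinuousOn ψ v) {x y : ℝ} (hx : x ∈ u) (hy : y ∈ v) :
    |f x y - φ x - ψ y| ≤ approxError f φ ψ (u ×ˢ v) := by
  have hcont : ContinuousOn (fun q : ℝ × ℝ => |f q.1 q.2 - φ q.1 - ψ q.2|) (u ×ˢ v) :=
    ((hf.sub (hφ.comp continuousOn_fst fun _ hq => hq.1)).sub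
      (hψ.comp continuousOn_snd fun _ hq => hq.2)).abs
  exact le_csSup ((hu.prod hv).image_of_continuousOn hcont).bddAbove ⟨(x, y), ⟨hx, hy⟩, rfl⟩

theorem rectL_le_approxError (hu : IsCompact u) (hv : IsCompact v)
    (hf : ContinuousOn (fun q : ℝ × ℝ => f q.1 q.2) (u ×ˢ v)) (hφ : ContinuousOn φ u)
    (hψ : ContinuousOn ψ v) {x1 x2 y1 y2 : ℝ} (hx1 : x1 ∈ u) (hx2 : x2 ∈ u) (hy1 : y1 ∈ v)
    (hy2 : y2 ∈ v) : rectL f x1 x2 y1 y2 ≤ approxError f φ ψ (u ×ˢ v) := by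
  rw [← rectL_sub_sub f x1 x2 y1 y2 φ ψ]
  have hcorner {x y : ℝ} (hx : x ∈ u) (hy : y ∈ v) :=
    abs_sub_sub_le_approxError hu hv hf hφ hψ hx hy
  exact rectL_le_of_abs_le _ _ _ _ _ (hcorner hx1 hy1) (hcorner hx2 hy2) (hcorner hx1 hy2)
    (hcorner hx2 hy1)

end approxError

theorem exists_rectL_eq_half {f : ℝ → ℝ → ℝ} {x1 x2 a2 b2 : ℝ} (hab : a2 ≤ b2)
    (h1 : ContinuousOn (f x1) (Icc a2 b2)) (h2 : ContinuousOn (f x2) (Icc a2 b2)) :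
    ∃ y0 ∈ Icc a2 b2, rectL f x1 x2 a2 y0 = 1 / 2 * rectL f x1 x2 a2 b2 := by
  have hcont : ContinuousOn (fun y => rectL f x1 x2 a2 y) (uIcc a2 b2) := by
    rw [uIcc_of_le hab]
    unfold rectL
    fun_prop
  have hmid : 1 / 2 * rectL f x1 x2 a2 b2 ∈ uIcc (rectL f x1 x2 a2 a2) (rectL f x1 x2 a2 b2) := by
    have hzero : rectL f x1 x2 a2 a2 = 0 := by unfold rectL; ring
    rw [hzero, mem_uIcc]
    rcases le_total 0 (rectL f x1 x2 a2 b2) with h | h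
    · left; constructor <;> linarith
    · right; constructor <;> linarith
  obtain ⟨y0, hy0, hy0eq⟩ := intermediate_value_uIcc hcont hmid
  exact ⟨y0, uIcc_of_le hab ▸ hy0, hy0eq⟩

theorem ClassV.approxError_eq {f : ℝ → ℝ → ℝ} {a1 b1 a2 b2 c y0 : ℝ}
    (hf : ClassV f a1 b1 a2 b2 c) (hc : a1 ≤ c) (hcb : c ≤ b1) (hab : a2 ≤ b2)
    (hy0 : y0 ∈ Icc a2 b2) (hhalf : rectL f a1 c a2 y0 = 1 / 2 * rectL f a1 c a2 b2) :
    approxError f (fun x => f x y0) (fun y => 1 / 2 * (f a1 y + f c y - f a1 y0 - f c y0))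
      (Icc a1 b1 ×ˢ Icc a2 b2) = rectL f a1 c a2 b2 := by
  refine IsGreatest.csSup_eq ⟨⟨(a1, a2), ⟨⟨le_rfl, hc.trans hcb⟩, ⟨le_rfl, hab⟩⟩, ?_⟩, ?_⟩
  · have hcorner : f a1 a2 - f a1 y0 - 1 / 2 * (f a1 a2 + f c a2 - f a1 y0 - f c y0) =
        rectL f a1 c a2 b2 := by
      unfold rectL at hhalf ⊢; linarith
    simp only [hcorner, abs_eq_self]
    exact hf.nonneg_left a1 c a2 b2 le_rfl hc le_rfl le_rfl hab le_rfl
  · rintro _ ⟨⟨x, y⟩, ⟨hx, hy⟩, rfl⟩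
    exact hf.abs_residual_le hc hy0 hhalf hx hy

/-- For `f` in the class `V_c(R)` on the rectangle `R = [a₁,b₁] × [a₂,b₂]`
with `c ∈ (a₁,b₁]` and `R₁ = [a₁,c] × [a₂,b₂]`: the error of best uniform
approximation by sums `φ(x) + ψ(y)` of univariate functions equals
`L(f,R₁) = (1/4)(f(a₁,a₂) + f(c,b₂) − f(a₁,b₂) − f(c,a₂))`; the equation
`L(f,[a₁,c]×[a₂,y]) = (1/2)L(f,R₁)` has a solution `y₀ ∈ [a₂,b₂]`; and for any
such `y₀` the sum `φ₀(x) + ψ₀(y)` with `φ₀(x) = f(x,y₀)`,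
`ψ₀(y) = (1/2)(f(a₁,y) + f(c,y) − f(a₁,y₀) − f(c,y₀))` is a best
approximating sum. -/
theorem stmt15 (a1 b1 a2 b2 c : ℝ) (ha2 : a2 < b2) (hc1 : a1 < c) (hc2 : c ≤ b1)
    (f : ℝ → ℝ → ℝ)
    (hfc : ContinuousOn (fun q : ℝ × ℝ => f q.1 q.2) (Set.Icc a1 b1 ×ˢ Set.Icc a2 b2))
    (hV1 : ∀ x1 x2 y1 y2 : ℝ, a1 ≤ x1 → x1 ≤ x2 → x2 ≤ c → a2 ≤ y1 → y1 ≤ y2 → y2 ≤ b2 →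
      0 ≤ (1 / 4) * (f x1 y1 + f x2 y2 - f x1 y2 - f x2 y1))
    (hV2 : ∀ x1 x2 y1 y2 : ℝ, c ≤ x1 → x1 ≤ x2 → x2 ≤ b1 → a2 ≤ y1 → y1 ≤ y2 → y2 ≤ b2 →
      (1 / 4) * (f x1 y1 + f x2 y2 - f x1 y2 - f x2 y1) ≤ 0)
    (hV3 : ∀ y1 y2 : ℝ, a2 ≤ y1 → y1 ≤ y2 → y2 ≤ b2 →
      0 ≤ (1 / 4) * (f a1 y1 + f b1 y2 - f a1 y2 - f b1 y1)) :
    (sInf {e : ℝ | ∃ φ ψ : ℝ → ℝ,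
        ContinuousOn φ (Set.Icc a1 b1) ∧ ContinuousOn ψ (Set.Icc a2 b2) ∧
        e = sSup ((fun q : ℝ × ℝ => |f q.1 q.2 - φ q.1 - ψ q.2|) ''
          (Set.Icc a1 b1 ×ˢ Set.Icc a2 b2))} =
      (1 / 4) * (f a1 a2 + f c b2 - f a1 b2 - f c a2)) ∧
    (∃ y0 ∈ Set.Icc a2 b2,
      (1 / 4) * (f a1 a2 + f c y0 - f a1 y0 - f c a2) =
        (1 / 2) * ((1 / 4) * (f a1 a2 + f c b2 - f a1 b2 - f c a2))) ∧
    (∀ y0 ∈ Set.Icc a2 b2,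
      (1 / 4) * (f a1 a2 + f c y0 - f a1 y0 - f c a2) =
        (1 / 2) * ((1 / 4) * (f a1 a2 + f c b2 - f a1 b2 - f c a2)) →
      sSup ((fun q : ℝ × ℝ =>
          |f q.1 q.2 - f q.1 y0 -
            (1 / 2) * (f a1 q.2 + f c q.2 - f a1 y0 - f c y0)|) ''
        (Set.Icc a1 b1 ×ˢ Set.Icc a2 b2)) =
      (1 / 4) * (f a1 a2 + f c b2 - f a1 b2 - f c a2)) := by
  have hf : ClassV f a1 b1 a2 b2 c := ⟨hV1, hV2, hV3⟩
  have ha1 : a1 ∈ Icc a1 b1 := ⟨le_rfl, hc1.le.trans hc2⟩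
  have hc : c ∈ Icc a1 b1 := ⟨hc1.le, hc2⟩
  have hrow {x : ℝ} (hx : x ∈ Icc a1 b1) : ContinuousOn (f x) (Icc a2 b2) :=
    hfc.comp (continuousOn_const.prodMk continuousOn_id) fun _ hy => ⟨hx, hy⟩
  have hbest : ∀ y0 ∈ Icc a2 b2, rectL f a1 c a2 y0 = 1 / 2 * rectL f a1 c a2 b2 →
      approxError f (fun x => f x y0) (fun y => 1 / 2 * (f a1 y + f c y - f a1 y0 - f c y0))
        (Icc a1 b1 ×ˢ Icc a2 b2) = rectL f a1 c a2 b2 :=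
    fun y0 hy0 hhalf => hf.approxError_eq hc1.le hc2 ha2.le hy0 hhalf
  obtain ⟨y0, hy0, hhalf⟩ := exists_rectL_eq_half ha2.le (hrow ha1) (hrow hc)
  refine ⟨IsLeast.csInf_eq ⟨⟨fun x => f x y0,
    fun y => 1 / 2 * (f a1 y + f c y - f a1 y0 - f c y0), ?_, ?_, (hbest y0 hy0 hhalf).symm⟩, ?_⟩,
    ⟨y0, hy0, hhalf⟩, hbest⟩
  · exact hfc.comp (continuousOn_id.prodMk continuousOn_const) fun _ hx => ⟨hx, hy0⟩
  · exact continuousOn_const.mul ((((hrow ha1).add (hrow hc)).sub continuousOn_const).sub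
      continuousOn_const)
  · rintro _ ⟨φ, ψ, hφ, hψ, rfl⟩
    exact rectL_le_approxError isCompact_Icc isCompact_Icc hfc hφ hψ ha1 hc ⟨le_rfl, ha2.le⟩
      ⟨ha2.le, le_rfl⟩
end

section
/- Let d ≥ 2. There exist continuous functions φ_{pq} : [0,1] → ℝ, p = 1, ..., d, q = 1, ..., 2d+1, with the following two properties: (a) every continuous function f : [0,1]^d → ℝ can be represented as f(x_1, ..., x_d) = ∑_{q=1}^{2d+1} g_q(∑_{p=1}^d φ_{pq}(x_p)) with continuous functions g_q : ℝ → ℝ depending on f; and (b) every function f : [0,1]^d → ℝ, without any regularity assumption, can be represented as f(x_1, ..., x_d) = ∑_{q=1}^{2d+1} g_q(∑_{p=1}^d φ_{pq}(x_p)) with (generally discontinuous) functions g_q : ℝ → ℝ depending on f. -/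
/-!
Kolmogorov's inner functions are built as a uniform limit of stages. A stage at mesh `1/N` is
constant on the cells of `2d+1` shifted grids of `[0,1]`, with values chosen (a rounding plus
base-`(N+2)` digits) so that the inner sum `y_q x = ∑ p, φ p q (x p)` takes well separated values
on distinct bricks (products of cells). A point of `[0,1]` lies in a gap of at most one grid, so
every point of the cube lies in a brick for at least `d+1` of the `2d+1` grids. Each later stage
moves the inner sums by much less than the separation, so the limit keeps these properties at
every scale.

(a) For continuous `f`, putting the value `f (center) / (d+1)` on the image of every brick gives
continuous `g_q` with `‖g_q‖ ≤ ‖f‖/(d+1)` and `‖f - ∑ g_q ∘ y_q‖ ≤ (1 - 1/(2d+2)) ‖f‖`;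
iterating and summing the geometric series gives an exact representation.

(b) For arbitrary `f` the representation is a linear system in the unknowns `g q v`. At a scale
finer than the distances within a finite set `F`, the majority count shows that some point of `F`
has a value `y_q x` shared by no other point of `F`; hence the rows of the system are linearly
independent and it is solvable.
-/

open Set Filter Topology

noncomputable section

namespace KolmogorovSuperposition

def clamp01 (t : ℝ) : ℝ := max 0 (min 1 t)

theorem clamp01_eq_zero {t : ℝ} (h : t ≤ 0) : clamp01 t = 0 :=
  max_eq_left (min_le_of_right_le h)

theorem clamp01_eq_one {t : ℝ} (h : 1 ≤ t) : clamp01 t = 1 := by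
  rw [clamp01, min_eq_left h, max_eq_right zero_le_one]

theorem clamp01_mem_Icc (t : ℝ) : clamp01 t ∈ Icc (0 : ℝ) 1 :=
  (projIcc 0 1 zero_le_one t).2

theorem clamp01_of_mem {t : ℝ} (h : t ∈ Icc (0 : ℝ) 1) : clamp01 t = t :=
  congrArg Subtype.val (projIcc_of_mem zero_le_one h)

@[fun_prop]
theorem continuous_clamp01 : Continuous clamp01 :=
  continuous_const.max (continuous_const.min continuous_id)

theorem abs_sub_clamp01_le {t : ℝ} (ht : t ∈ Icc (0 : ℝ) 1) (s : ℝ) :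
    |t - clamp01 s| ≤ |t - s| := by
  conv_lhs => rw [← clamp01_of_mem ht]
  exact abs_projIcc_sub_projIcc zero_le_one

section Linear

variable {X β ι K : Type*} [Field K]

theorem exists_linearMap_apply_eq_of_linearIndepOn {V : Type*} [AddCommGroup V] [Module K V]
    {v : X → V} {S : Set X} (hv : LinearIndepOn K v S) (f : X → K) :
    ∃ L : V →ₗ[K] K, ∀ x ∈ S, L (v x) = f x := by
  let b := Module.Basis.span hv
  obtain ⟨L, hL⟩ := LinearMap.exists_extend (b.constr K fun x => f x)
  refine ⟨L, fun x hx => ?_⟩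
  have hb : (b ⟨x, hx⟩ : V) = v x := congrArg Subtype.val (Module.Basis.span_apply hv ⟨x, hx⟩)
  simpa [b, hb] using LinearMap.congr_fun hL (b ⟨x, hx⟩)

-- The slots of `x` are the pairs `(q, y q x)`.
def HasPrivateSlots (S : Set X) (y : ι → X → β) : Prop :=
  ∀ F : Finset X, ↑F ⊆ S → F.Nonempty → ∃ x ∈ F, ∃ q, ∀ x' ∈ F, x' ≠ x → y q x' ≠ y q x

variable [Fintype ι]

theorem sum_single_apply (y : ι → X → β) (x : X) (q : ι) (b : β) :
    (∑ q', Finsupp.single (q', y q' x) (1 : K)) (q, b) = Finsupp.single (y q x) 1 b := by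
  rw [Finsupp.finsetSum_apply, Finset.sum_eq_single q (fun q' _ hq' => by simp [hq'])
    (fun h => absurd (Finset.mem_univ q) h)]
  exact Finsupp.single_apply_left (Prod.mk_right_injective q) _ _ _

theorem HasPrivateSlots.linearIndepOn {S : Set X} {y : ι → X → β} (hy : HasPrivateSlots S y) :
    LinearIndepOn K (fun x => ∑ q, Finsupp.single (q, y q x) (1 : K)) S := by
  classical
  rw [linearIndepOn_iff]
  intro l hl hl0
  by_contra hne
  obtain ⟨x, hx, q, hq⟩ := hy l.support hl (Finsupp.support_nonempty_iff.2 hne)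
  have key := DFunLike.congr_fun hl0 (q, y q x)
  rw [Finsupp.linearCombination_apply, Finsupp.sum, Finsupp.finsetSum_apply,
    Finset.sum_eq_single x (fun x' hx' hne' => by
      rw [Finsupp.smul_apply, sum_single_apply, Finsupp.single_eq_of_ne (hq x' hx' hne').symm,
        smul_zero])
      (fun h => absurd hx h),
    Finsupp.smul_apply, sum_single_apply, Finsupp.single_eq_same, smul_eq_mul, mul_one] at key
  exact Finsupp.mem_support_iff.1 hx key

theorem HasPrivateSlots.exists_sum_comp_eq {S : Set X} {y : ι → X → β}
    (hy : HasPrivateSlots S y) (f : X → K) :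
    ∃ g : ι → β → K, ∀ x ∈ S, f x = ∑ q, g q (y q x) := by
  obtain ⟨L, hL⟩ := exists_linearMap_apply_eq_of_linearIndepOn (hy.linearIndepOn (K := K)) f
  refine ⟨fun q b => L (Finsupp.single (q, b) 1), fun x hx => ?_⟩
  rw [← hL x hx, map_sum]

end Linear

theorem two_mul_card_le_of_injOn {X β : Type*} [DecidableEq X] {F P : Finset X}
    (hPF : P ⊆ F) {f : X → β} (hf : InjOn f P)
    (hpartner : ∀ x ∈ P, ∃ x' ∈ F, x' ≠ x ∧ f x' = f x) : 2 * P.card ≤ F.card := by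
  choose! partner hpartner_mem hpartner_ne hpartner using hpartner
  have hmaps : MapsTo partner P (F \ P : Finset X) := fun x hx =>
    Finset.mem_sdiff.2 ⟨hpartner_mem x hx, fun h => hpartner_ne x hx (hf h hx (hpartner x hx))⟩
  have hinj : InjOn partner P := fun x hx x' hx' h =>
    hf hx hx' (by rw [← hpartner x hx, h, hpartner x' hx'])
  have := Finset.card_le_card_of_injOn partner hmaps hinj
  rw [Finset.card_sdiff_of_subset hPF] at this
  have := Finset.card_le_card hPF
  omega

theorem exists_pos_forall_two_mul_le_dist {X : Type*} [MetricSpace X] (F : Finset X) :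
    ∃ δ > 0, ∀ x ∈ F, ∀ x' ∈ F, x ≠ x' → 2 * δ ≤ dist x x' := by
  have : ∀ᶠ δ in 𝓝[>] (0 : ℝ), ∀ p ∈ F.offDiag, 2 * δ ≤ dist p.1 p.2 := by
    refine (Filter.eventually_all_finset _).2 fun p hp => ?_
    have hp : 0 < dist p.1 p.2 := dist_pos.2 (Finset.mem_offDiag.1 hp).2.2
    filter_upwards [(eventually_lt_nhds (half_pos hp)).filter_mono nhdsWithin_le_nhds]
      with δ hδ using by linarith
  obtain ⟨δ, hδF, hδ⟩ := (this.and self_mem_nhdsWithin).exists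
  exact ⟨δ, hδ, fun x hx x' hx' hne => hδF (x, x') (Finset.mem_offDiag.2 ⟨hx, hx', hne⟩)⟩

def plateau (a w v : ℝ) : ℝ := clamp01 (2 - |v - a| / w)

theorem plateau_eq_one {a w v : ℝ} (hw : 0 < w) (h : |v - a| ≤ w) : plateau a w v = 1 :=
  clamp01_eq_one (by linarith [(div_le_one hw).2 h])

theorem plateau_eq_zero {a w v : ℝ} (hw : 0 < w) (h : 2 * w ≤ |v - a|) : plateau a w v = 0 :=
  clamp01_eq_zero (by linarith [(le_div_iff₀ hw).2 h])

theorem plateau_mem_Icc (a w v : ℝ) : plateau a w v ∈ Icc (0 : ℝ) 1 := clamp01_mem_Icc _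

@[fun_prop]
theorem continuous_plateau (a w : ℝ) : Continuous (plateau a w) := by
  unfold plateau; fun_prop

section Cover

variable {X ι : Type*} [MetricSpace X]

/-- The only property of the inner sums `y` that the representation theorems use. -/
structure SeparatingCover (S : Set X) (y : ι → X → ℝ) (r : ℕ) (δ : ℝ) (κ : Type*) where
  index : Finset κ
  brick : ι → κ → Set X
  center : ι → κ → X
  level : ι → κ → ℝ
  margin : ℝ
  margin_pos : 0 < margin
  center_mem : ∀ q j, center q j ∈ S
  dist_center_lt : ∀ q, ∀ j ∈ index, ∀ x ∈ brick q j, dist x (center q j) < δ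
  abs_sub_level_le : ∀ q, ∀ j ∈ index, ∀ x ∈ brick q j, |y q x - level q j| ≤ margin / 8
  margin_le_abs_level_sub :
    ∀ q, ∀ j ∈ index, ∀ j' ∈ index, j ≠ j' → margin ≤ |level q j - level q j'|
  covered : ∀ x ∈ S, ∃ Q : Finset ι, r ≤ Q.card ∧ ∀ q ∈ Q, ∃ j ∈ index, x ∈ brick q j

namespace SeparatingCover

variable {κ : Type*} {S : Set X} {y : ι → X → ℝ} {r : ℕ} {δ : ℝ} (C : SeparatingCover S y r δ κ)

theorem apply_ne_of_two_mul_le_dist {q : ι} {x x' : X} (hx : ∃ j ∈ C.index, x ∈ C.brick q j)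
    (hx' : ∃ j ∈ C.index, x' ∈ C.brick q j) (hxx' : 2 * δ ≤ dist x x') : y q x ≠ y q x' := by
  obtain ⟨j, hj, hx⟩ := hx
  obtain ⟨j', hj', hx'⟩ := hx'
  have hne : j ≠ j' := by
    rintro rfl
    have := dist_triangle_right x x' (C.center q j)
    linarith [C.dist_center_lt q j hj x hx, C.dist_center_lt q j hj x' hx']
  intro hyy
  have h := C.margin_le_abs_level_sub q j hj j' hj' hne
  have h₁ := C.abs_sub_level_le q j hj x hx
  have h₂ := C.abs_sub_level_le q j' hj' x' hx'
  rw [hyy, abs_sub_comm] at h₁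
  linarith [abs_sub_le (C.level q j) (y q x') (C.level q j'), C.margin_pos]

def outer (f : X → ℝ) (q : ι) (v : ℝ) : ℝ :=
  ∑ j ∈ C.index, f (C.center q j) / r * plateau (C.level q j) (C.margin / 8) v

theorem continuous_outer (f : X → ℝ) (q : ι) : Continuous (C.outer f q) := by
  unfold outer; fun_prop

theorem plateau_level_eq_zero {q : ι} {j j' : κ} (hj : j ∈ C.index) (hj' : j' ∈ C.index)
    (hne : j ≠ j') {v : ℝ} (hv : |v - C.level q j'| < 3 * C.margin / 4) :
    plateau (C.level q j) (C.margin / 8) v = 0 := by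
  refine plateau_eq_zero (by linarith [C.margin_pos]) ?_
  have := C.margin_le_abs_level_sub q j hj j' hj' hne
  have := abs_sub_le (C.level q j) v (C.level q j')
  rw [abs_sub_comm (C.level q j) v] at this
  linarith

theorem abs_outer_le {f : X → ℝ} {M : ℝ} (hM : ∀ x ∈ S, |f x| ≤ M) (hM₀ : 0 ≤ M) (q : ι)
    (v : ℝ) : |C.outer f q v| ≤ M / r := by
  by_cases h : ∃ j' ∈ C.index, |v - C.level q j'| < 3 * C.margin / 4
  · obtain ⟨j', hj', hv⟩ := h
    rw [outer, Finset.sum_eq_single_of_mem j' hj' fun j hj hne => by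
      rw [C.plateau_level_eq_zero hj hj' hne hv, mul_zero], abs_mul, abs_div, Nat.abs_cast,
      abs_of_nonneg (plateau_mem_Icc _ _ _).1]
    calc |f (C.center q j')| / r * plateau (C.level q j') (C.margin / 8) v ≤ M / r * 1 := by
          gcongr
          exacts [(plateau_mem_Icc _ _ _).1, hM _ (C.center_mem q j'), (plateau_mem_Icc _ _ _).2]
      _ = M / r := mul_one _
  · push Not at h
    rw [outer, Finset.sum_eq_zero fun j hj => by
      rw [plateau_eq_zero (by linarith [C.margin_pos]) (by linarith [h j hj, C.margin_pos]),
        mul_zero], abs_zero]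
    positivity

theorem outer_apply_of_mem_brick (f : X → ℝ) {q : ι} {j : κ} (hj : j ∈ C.index) {x : X}
    (hx : x ∈ C.brick q j) : C.outer f q (y q x) = f (C.center q j) / r := by
  have hx' := C.abs_sub_level_le q j hj x hx
  rw [outer, Finset.sum_eq_single_of_mem j hj fun j' hj' hne => by
    rw [C.plateau_level_eq_zero hj' hj hne (by linarith [C.margin_pos]), mul_zero],
    plateau_eq_one (by linarith [C.margin_pos]) hx', mul_one]

variable [Fintype ι]

theorem abs_sub_sum_outer_le (hr : 0 < r) {f : X → ℝ} {ε M : ℝ}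
    (hf : ∀ x ∈ S, ∀ x' ∈ S, dist x x' < δ → |f x - f x'| ≤ ε) (hM : ∀ x ∈ S, |f x| ≤ M)
    (hM₀ : 0 ≤ M) {x : X} (hx : x ∈ S) :
    |f x - ∑ q, C.outer f q (y q x)| ≤ ε + (Fintype.card ι - r) * M / r := by
  classical
  obtain ⟨Q₀, hQ₀r, hQ₀⟩ := C.covered x hx
  obtain ⟨Q, hQQ₀, hQr⟩ := Finset.le_card_iff_exists_subset_card.1 hQ₀r
  have : Nonempty κ := by
    obtain ⟨q, hq⟩ := Finset.card_pos.1 (hQr ▸ hr)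
    exact ⟨(hQ₀ q (hQQ₀ hq)).choose⟩
  choose! j hj hxj using fun q hq => hQ₀ q (hQQ₀ hq)
  have hr' : (0 : ℝ) < r := by exact_mod_cast hr
  have hgood : ∑ q ∈ Q, C.outer f q (y q x) = ∑ q ∈ Q, f (C.center q (j q)) / r :=
    Finset.sum_congr rfl fun q hq => C.outer_apply_of_mem_brick f (hj q hq) (hxj q hq)
  have hsplit : f x - ∑ q, C.outer f q (y q x) =
      ∑ q ∈ Q, (f x - f (C.center q (j q))) / r - ∑ q ∈ Finset.univ \ Q, C.outer f q (y q x) := by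
    rw [← Finset.sum_sdiff (Finset.subset_univ Q), hgood]
    simp only [sub_div, Finset.sum_sub_distrib, Finset.sum_const, hQr, nsmul_eq_mul]
    field_simp
    ring
  have hnear : |∑ q ∈ Q, (f x - f (C.center q (j q))) / r| ≤ ε :=
    calc _ ≤ ∑ q ∈ Q, |f x - f (C.center q (j q))| / r :=
          (Finset.abs_sum_le_sum_abs _ _).trans_eq (by simp only [abs_div, Nat.abs_cast])
      _ ≤ ∑ _q ∈ Q, ε / r := Finset.sum_le_sum fun q hq => by
          gcongr
          exact hf x hx _ (C.center_mem q (j q)) (C.dist_center_lt q _ (hj q hq) x (hxj q hq))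
      _ = ε := by rw [Finset.sum_const, hQr, nsmul_eq_mul]; field_simp
  have hfar : |∑ q ∈ Finset.univ \ Q, C.outer f q (y q x)| ≤ (Fintype.card ι - r) * M / r :=
    calc _ ≤ ∑ q ∈ Finset.univ \ Q, |C.outer f q (y q x)| := Finset.abs_sum_le_sum_abs _ _
      _ ≤ ∑ _q ∈ Finset.univ \ Q, M / r := Finset.sum_le_sum fun q _ => C.abs_outer_le hM hM₀ q _
      _ = (Fintype.card ι - r) * M / r := by
          rw [Finset.sum_const, Finset.card_sdiff_of_subset (Finset.subset_univ Q), hQr,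
            Finset.card_univ, nsmul_eq_mul, Nat.cast_sub (hQr ▸ Finset.card_le_univ Q)]
          ring
  rw [hsplit]
  exact (abs_sub _ _).trans (add_le_add hnear hfar)

-- If every slot of every point of `F` were shared, the points of `F` lying in bricks of a fixed
-- `q` would pair off injectively with points outside those bricks, so at most half of `F` would
-- lie in bricks of `q`; but every point lies in bricks of more than half of the `q`.
theorem hasPrivateSlots (hr : Fintype.card ι < 2 * r)
    (hC : ∀ δ > 0, Nonempty (SeparatingCover S y r δ κ)) :
    HasPrivateSlots S y := by
  classical
  intro F hFS hF
  obtain ⟨δ, hδ, hδF⟩ := exists_pos_forall_two_mul_le_dist F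
  obtain ⟨C⟩ := hC δ hδ
  choose! Q hQr hQ using C.covered
  by_contra! hshared
  let P : ι → Finset X := fun q => F.filter fun x => q ∈ Q x
  have hP : ∀ q, 2 * (P q).card ≤ F.card := fun q =>
    two_mul_card_le_of_injOn (Finset.filter_subset _ _)
      (fun x hx x' hx' h => by
        by_contra hne
        simp only [P, Finset.mem_coe, Finset.mem_filter] at hx hx'
        exact C.apply_ne_of_two_mul_le_dist (hQ x (hFS hx.1) q hx.2) (hQ x' (hFS hx'.1) q hx'.2)
          (hδF x hx.1 x' hx'.1 hne) h)
      fun x hx => hshared x (Finset.mem_filter.1 hx).1 q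
  have hsum : ∑ q, (P q).card = ∑ x ∈ F, (Q x).card := by
    simpa [Finset.bipartiteAbove, Finset.bipartiteBelow, P] using
      (Finset.sum_card_bipartiteAbove_eq_sum_card_bipartiteBelow (fun x q => q ∈ Q x)
        (s := F) (t := Finset.univ)).symm
  have h₁ : r * F.card ≤ ∑ q, (P q).card :=
    calc r * F.card = ∑ _x ∈ F, r := by simp [mul_comm]
      _ ≤ ∑ x ∈ F, (Q x).card := Finset.sum_le_sum fun x hx => hQr x (hFS hx)
      _ = ∑ q, (P q).card := hsum.symm
  have h₂ : 2 * ∑ q, (P q).card ≤ Fintype.card ι * F.card :=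
    calc 2 * ∑ q, (P q).card = ∑ q, 2 * (P q).card := Finset.mul_sum _ _ _
      _ ≤ ∑ _q : ι, F.card := Finset.sum_le_sum fun q _ => hP q
      _ = Fintype.card ι * F.card := by simp
  have : 0 < F.card := hF.card_pos
  nlinarith

end SeparatingCover

end Cover

theorem sum_tsum_eq_of_tendsto {ι : Type*} [Fintype ι] {a : ℕ → ι → ℝ}
    (ha : ∀ q, Summable fun k => a k q) {s : ℝ} {res : ℕ → ℝ} (hres : Tendsto res atTop (𝓝 0))
    (hpartial : ∀ K, ∑ k ∈ Finset.range K, ∑ q, a k q = s - res K) :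
    ∑ q, ∑' k, a k q = s := by
  rw [← Summable.tsum_finsetSum fun q _ => ha q]
  refine tendsto_nhds_unique ?_ (by simpa using tendsto_const_nhds.sub hres)
  simpa only [hpartial] using
    (summable_sum (s := Finset.univ) fun q _ => ha q).hasSum.tendsto_sum_nat

theorem exists_continuous_sum_comp_eq_of_approx {X ι : Type*} [TopologicalSpace X] [Fintype ι]
    {S : Set X} {y : ι → X → ℝ} (hy : ∀ q, ContinuousOn (y q) S) {θ C : ℝ} (hθ₀ : 0 < θ)
    (hθ : θ < 1)
    (step : ∀ h : X → ℝ, ∀ M > 0, ContinuousOn h S → (∀ x ∈ S, |h x| ≤ M) →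
      ∃ g : ι → ℝ → ℝ, (∀ q, Continuous (g q)) ∧ (∀ q v, |g q v| ≤ C * M) ∧
        ∀ x ∈ S, |h x - ∑ q, g q (y q x)| ≤ θ * M)
    {f : X → ℝ} (hf : ContinuousOn f S) {M : ℝ} (hM : 0 < M) (hfM : ∀ x ∈ S, |f x| ≤ M) :
    ∃ g : ι → ℝ → ℝ, (∀ q, Continuous (g q)) ∧ ∀ x ∈ S, f x = ∑ q, g q (y q x) := by
  choose! G hGc hGb hGa using step
  let res : ℕ → X → ℝ := fun k =>
    Nat.rec f (fun k h x => h x - ∑ q, G h (θ ^ k * M) q (y q x)) k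
  let g : ℕ → ι → ℝ → ℝ := fun k => G (res k) (θ ^ k * M)
  have hMk : ∀ k, 0 < θ ^ k * M := fun k => by positivity
  have hres : ∀ k, ContinuousOn (res k) S ∧ ∀ x ∈ S, |res k x| ≤ θ ^ k * M := by
    intro k
    induction k with
    | zero => simpa [res] using ⟨hf, hfM⟩
    | succ k ih =>
      refine ⟨ih.1.sub (continuousOn_finsetSum _ fun q _ =>
        (hGc _ _ (hMk k) ih.1 ih.2 q).comp_continuousOn (hy q)), fun x hx => ?_⟩
      calc |res (k + 1) x| = |res k x - ∑ q, g k q (y q x)| := rfl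
        _ ≤ θ * (θ ^ k * M) := hGa _ _ (hMk k) ih.1 ih.2 x hx
        _ = θ ^ (k + 1) * M := by ring
  have hg : ∀ k q v, ‖g k q v‖ ≤ C * (θ ^ k * M) := fun k q v =>
    hGb _ _ (hMk k) (hres k).1 (hres k).2 q v
  have hu : Summable fun k : ℕ => C * (θ ^ k * M) :=
    ((summable_geometric_of_lt_one hθ₀.le hθ).mul_right M).mul_left C
  refine ⟨fun q v => ∑' k, g k q v,
    fun q => continuous_tsum (fun k => hGc _ _ (hMk k) (hres k).1 (hres k).2 q) hu (hg · q),
    fun x hx => ?_⟩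
  refine (sum_tsum_eq_of_tendsto (fun q => Summable.of_norm_bounded hu fun k => hg k q _)
    (squeeze_zero_norm (fun K => (hres K).2 x hx)
      (by simpa using (tendsto_pow_atTop_nhds_zero_of_lt_one hθ₀.le hθ).mul_const M))
    fun K => ?_).symm
  induction K with
  | zero => simp [res]
  | succ K ih =>
    rw [Finset.sum_range_succ, ih]
    change _ = f x - (res K x - ∑ q, g K q (y q x))
    ring

theorem exists_continuous_sum_comp_eq_of_cover {X ι κ : Type*} [MetricSpace X] [Fintype ι]
    {S : Set X} (hS : IsCompact S) {y : ι → X → ℝ} (hy : ∀ q, ContinuousOn (y q) S) {r : ℕ}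
    (hr : Fintype.card ι < 2 * r) (hC : ∀ δ > 0, Nonempty (SeparatingCover S y r δ κ))
    {f : X → ℝ} (hf : ContinuousOn f S) :
    ∃ g : ι → ℝ → ℝ, (∀ q, Continuous (g q)) ∧ ∀ x ∈ S, f x = ∑ q, g q (y q x) := by
  have hr' : (1 : ℝ) ≤ r := by exact_mod_cast (by omega : 1 ≤ r)
  have hn : (Fintype.card ι : ℝ) + 1 ≤ 2 * r := by
    exact_mod_cast (by omega : Fintype.card ι + 1 ≤ 2 * r)
  obtain ⟨M, hM⟩ := hS.exists_bound_of_continuousOn hf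
  refine exists_continuous_sum_comp_eq_of_approx hy (θ := 1 - 1 / (2 * r)) (C := 1 / r)
    (by rw [sub_pos, div_lt_one (by positivity)]; linarith)
    (sub_lt_self _ (div_pos one_pos (by positivity))) ?_ hf
    (by positivity : 0 < |M| + 1) fun x hx => (hM x hx).trans (by linarith [le_abs_self M])
  intro h M hM₀ hh hhM
  obtain ⟨δ, hδ, hδh⟩ := Metric.uniformContinuousOn_iff.1 (hS.uniformContinuousOn_of_continuous hh)
    (M / (2 * r)) (by positivity)
  obtain ⟨C⟩ := hC δ hδ
  refine ⟨C.outer h, C.continuous_outer h, fun q v => ?_, fun x hx => ?_⟩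
  · simpa [div_eq_inv_mul] using C.abs_outer_le hhM hM₀.le q v
  · refine (C.abs_sub_sum_outer_le (by omega) (fun x hx x' hx' hxx' => (hδh x hx x' hx' hxx').le)
      hhM hM₀.le hx).trans ?_
    rw [show (1 - 1 / (2 * r)) * M = M / (2 * r) + (r - 1) * M / r by field_simp; ring]
    have : ((Fintype.card ι : ℝ) - r) * M ≤ (r - 1) * M :=
      mul_le_mul_of_nonneg_right (by linarith) hM₀.le
    linarith [div_le_div_of_nonneg_right this (by positivity : (0 : ℝ) ≤ r)]

section Grid

variable {m N : ℕ}

-- Grid `q` has its gaps centred at the points `k / (N * (m + 2))` with `k ≡ q + 1 [ZMOD m + 2]`;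
-- hence gaps of distinct grids are disjoint.
def gapIndex (m : ℕ) (q : Fin m) (i : ℕ) : ℤ := ((i : ℤ) - 1) * (m + 2) + (q + 1)

def gapCenter (m N : ℕ) (q : Fin m) (i : ℕ) : ℝ := gapIndex m q i / (N * (m + 2))

def halfGap (m N : ℕ) : ℝ := 1 / (4 * N * (m + 2))

def gridCell (m N : ℕ) (q : Fin m) (i : ℕ) : Set ℝ :=
  Icc (gapCenter m N q i + halfGap m N) (gapCenter m N q (i + 1) - halfGap m N)

def gridGap (m N : ℕ) (q : Fin m) (i : ℕ) : Set ℝ :=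
  Ioo (gapCenter m N q i - halfGap m N) (gapCenter m N q i + halfGap m N)

def cellMid (m N : ℕ) (q : Fin m) (i : ℕ) : ℝ := gapCenter m N q i + 1 / (2 * N)

theorem gapCenter_eq (q : Fin m) (i : ℕ) :
    gapCenter m N q i = ((i : ℝ) - 1 + (q + 1) / (m + 2)) / N := by
  unfold gapCenter gapIndex
  push_cast
  field_simp

theorem gapCenter_succ (hN : 0 < N) (q : Fin m) (i : ℕ) :
    gapCenter m N q (i + 1) = gapCenter m N q i + 1 / N := by
  simp only [gapCenter_eq]
  push_cast
  field_simp
  ring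

theorem gapCenter_mono (q : Fin m) {i j : ℕ} (h : i ≤ j) :
    gapCenter m N q i ≤ gapCenter m N q j := by
  simp only [gapCenter_eq]
  gcongr

theorem halfGap_pos (hN : 0 < N) : 0 < halfGap m N := by
  unfold halfGap; positivity

theorem four_mul_halfGap_le (hN : 0 < N) : 4 * halfGap m N ≤ 1 / N := by
  unfold halfGap
  rw [show 4 * (1 / (4 * (N : ℝ) * (m + 2))) = 1 / N * (1 / (m + 2)) by field_simp]
  exact mul_le_of_le_one_right (by positivity) ((div_le_one (by positivity)).2 (by linarith))

theorem gapIndex_emod (q : Fin m) (i : ℕ) : gapIndex m q i % (m + 2) = q + 1 := by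
  rw [gapIndex, add_comm, Int.add_mul_emod_self_right, Int.emod_eq_of_lt (by positivity) (by omega)]

theorem eq_of_mem_gridGap (hN : 0 < N) {q q' : Fin m} {i i' : ℕ} {t : ℝ}
    (h : t ∈ gridGap m N q i) (h' : t ∈ gridGap m N q' i') : q = q' := by
  have hL : (0 : ℝ) < N * (m + 2) := by positivity
  have hclose : |gapCenter m N q i - gapCenter m N q' i'| < 2 * halfGap m N := by
    rw [abs_lt]; constructor <;> linarith [h.1, h.2, h'.1, h'.2]
  rw [gapCenter, gapCenter, ← sub_div, abs_div, abs_of_pos hL, div_lt_iff₀ hL, halfGap,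
    show 2 * (1 / (4 * (N : ℝ) * (m + 2))) * (N * (m + 2)) = 1 / 2 by field_simp; ring,
    ← Int.cast_sub, ← Int.cast_abs] at hclose
  have hidx : gapIndex m q i = gapIndex m q' i' := by
    have : |gapIndex m q i - gapIndex m q' i'| < 1 := by exact_mod_cast hclose.trans one_half_lt_one
    rw [abs_lt] at this
    omega
  have := gapIndex_emod q i
  rw [hidx, gapIndex_emod] at this
  exact Fin.ext (by omega)

theorem gapCenter_zero_add_halfGap_neg (hN : 0 < N) (q : Fin m) :
    gapCenter m N q 0 + halfGap m N < 0 := by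
  have hq : ((q : ℕ) : ℝ) + 1 ≤ m := by exact_mod_cast q.2
  rw [gapCenter_eq, halfGap, show ((0 : ℕ) - 1 + (q + 1) / (m + 2)) / N + 1 / (4 * N * (m + 2)) =
    (4 * q + 1 - 4 * (m + 2) + 4) / (4 * (m + 2)) / (N : ℝ) by push_cast; field_simp; ring]
  exact div_neg_of_neg_of_pos (div_neg_of_neg_of_pos (by linarith) (by positivity))
    (by exact_mod_cast hN)

theorem exists_gapCenter_le_lt (hN : 0 < N) (q : Fin m) {t : ℝ} (ht : t ∈ Icc (0 : ℝ) 1) :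
    ∃ i ≤ N, gapCenter m N q i ≤ t ∧ t < gapCenter m N q (i + 1) := by
  have hNr : (0 : ℝ) < N := by exact_mod_cast hN
  have hs : (q + 1 : ℝ) / (m + 2) < 1 :=
    (div_lt_one (by positivity)).2 (by linarith [show ((q : ℕ) : ℝ) + 1 ≤ m by exact_mod_cast q.2])
  have hpos : 0 ≤ t * N + 1 - (q + 1) / (m + 2) := by nlinarith [ht.1]
  have hi₁ := Nat.floor_le hpos
  have hi₂ := Nat.lt_floor_add_one (t * N + 1 - (q + 1) / (m + 2))
  refine ⟨⌊t * N + 1 - (q + 1) / (m + 2)⌋₊, ?_, ?_, ?_⟩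
  · have : (⌊t * N + 1 - (q + 1) / (m + 2)⌋₊ : ℝ) < N + 1 := by
      nlinarith [ht.2, show (0 : ℝ) < (q + 1) / (m + 2) by positivity]
    exact_mod_cast Nat.lt_succ_iff.1 (by exact_mod_cast this)
  · rw [gapCenter_eq, div_le_iff₀ hNr]; linarith
  · rw [gapCenter_eq, lt_div_iff₀ hNr]; push_cast; linarith

theorem exists_mem_gridCell_or_gridGap (hN : 0 < N) (q : Fin m) {t : ℝ} (ht : t ∈ Icc (0 : ℝ) 1) :
    ∃ i ≤ N + 1, t ∈ gridCell m N q i ∨ (1 ≤ i ∧ t ∈ gridGap m N q i) := by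
  obtain ⟨i, hiN, hlow, hup⟩ := exists_gapCenter_le_lt hN q ht
  have hγ := halfGap_pos (m := m) hN
  by_cases h₁ : t < gapCenter m N q i + halfGap m N
  · refine ⟨i, by omega, Or.inr ⟨Nat.one_le_iff_ne_zero.2 fun h0 => ?_, by linarith, h₁⟩⟩
    subst h0
    linarith [gapCenter_zero_add_halfGap_neg hN q, ht.1]
  by_cases h₂ : gapCenter m N q (i + 1) - halfGap m N < t
  · exact ⟨i + 1, by omega, Or.inr ⟨by omega, h₂, by linarith⟩⟩
  · exact ⟨i, by omega, Or.inl ⟨not_lt.1 h₁, not_lt.1 h₂⟩⟩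

theorem abs_sub_cellMid_le_of_mem_gridCell (hN : 0 < N) {q : Fin m} {i : ℕ} {t : ℝ}
    (h : t ∈ gridCell m N q i) : |t - cellMid m N q i| ≤ 1 / N := by
  have hNr : (0 : ℝ) < N := by exact_mod_cast hN
  have := halfGap_pos (m := m) hN
  have h₁ := h.1
  have h₂ := h.2
  rw [gapCenter_succ hN] at h₂
  rw [cellMid, abs_le]
  constructor <;> nlinarith [one_div_pos.2 hNr, show 1 / (2 * (N : ℝ)) = 1 / N / 2 by ring]

theorem abs_sub_cellMid_le_of_mem_gridGap (hN : 0 < N) {q : Fin m} {i : ℕ} (hi : 1 ≤ i) {t : ℝ}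
    (h : t ∈ gridGap m N q i) :
    |t - cellMid m N q (i - 1)| ≤ 1 / N ∧ |t - cellMid m N q i| ≤ 1 / N := by
  have hγ := four_mul_halfGap_le (m := m) hN
  have hprev : gapCenter m N q (i - 1) = gapCenter m N q i - 1 / N := by
    have := gapCenter_succ (m := m) hN q (i - 1)
    rw [Nat.sub_add_cancel hi] at this
    linarith
  have hhalf : 1 / (2 * (N : ℝ)) = 1 / N / 2 := by ring
  have h₁ := h.1
  have h₂ := h.2
  simp only [cellMid, hprev, abs_le]
  refine ⟨⟨?_, ?_⟩, ⟨?_, ?_⟩⟩ <;> linarith [halfGap_pos (m := m) hN]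

theorem cellMid_mem_Icc (hN : 0 < N) (q : Fin m) {i : ℕ} (hi : i ≤ N + 1) :
    cellMid m N q i ∈ Icc (-1 : ℝ) 3 := by
  have hNr : (1 : ℝ) ≤ N := by exact_mod_cast hN
  have hq : ((q : ℕ) : ℝ) + 1 ≤ m := by exact_mod_cast q.2
  have hs : (q + 1 : ℝ) / (m + 2) ≤ 1 := (div_le_one (by positivity)).2 (by linarith)
  have hi' : (i : ℝ) ≤ N + 1 := by exact_mod_cast hi
  rw [cellMid, gapCenter_eq]
  constructor
  · have : (-1 : ℝ) / N ≤ ((i : ℝ) - 1 + (q + 1) / (m + 2)) / N := by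
      gcongr
      linarith [show (0 : ℝ) ≤ i from Nat.cast_nonneg i,
        show (0 : ℝ) ≤ (q + 1) / (m + 2) by positivity]
    have : (-1 : ℝ) ≤ -1 / N := by
      rw [neg_div, neg_le_neg_iff, div_le_one (by positivity)]; exact hNr
    linarith [show (0 : ℝ) ≤ 1 / (2 * N) by positivity]
  · have : ((i : ℝ) - 1 + (q + 1) / (m + 2)) / N ≤ (N + 1) / N := by gcongr; linarith
    have : ((N : ℝ) + 1) / N ≤ 2 := by rw [div_le_iff₀ (by positivity)]; linarith
    have : 1 / (2 * (N : ℝ)) ≤ 1 := by rw [div_le_one (by positivity)]; linarith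
    linarith

end Grid

section Interpolation

variable {m N : ℕ}

theorem add_sum_range_sub_mul_eq {c w : ℕ → ℝ} {n a : ℕ} (ha : a < n) (h₁ : ∀ i < a, w i = 1)
    (h₀ : ∀ i < n, a < i → w i = 0) :
    c 0 + ∑ i ∈ Finset.range n, (c (i + 1) - c i) * w i = c a + (c (a + 1) - c a) * w a := by
  rw [← Finset.sum_range_add_sum_Ico _ (show a + 1 ≤ n by omega),
    Finset.sum_eq_zero (s := Finset.Ico (a + 1) n) fun i hi => by
      rw [Finset.mem_Ico] at hi; rw [h₀ i hi.2 (by omega), mul_zero],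
    add_zero, Finset.sum_range_succ,
    Finset.sum_congr rfl fun i hi => by rw [h₁ i (Finset.mem_range.1 hi), mul_one],
    Finset.sum_range_sub]
  ring

theorem clamp01_ramp_eq_one {x γ t : ℝ} (hγ : 0 < γ) (h : x + γ ≤ t) :
    clamp01 ((t - (x - γ)) / (2 * γ)) = 1 :=
  clamp01_eq_one ((le_div_iff₀ (by positivity)).2 (by linarith))

theorem clamp01_ramp_eq_zero {x γ t : ℝ} (hγ : 0 < γ) (h : t ≤ x - γ) :
    clamp01 ((t - (x - γ)) / (2 * γ)) = 0 :=
  clamp01_eq_zero (div_nonpos_of_nonpos_of_nonneg (by linarith) (by positivity))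

def interp (m N : ℕ) (q : Fin m) (c : ℕ → ℝ) (t : ℝ) : ℝ :=
  c 0 + ∑ i ∈ Finset.range (N + 2), (c (i + 1) - c i) *
    clamp01 ((t - (gapCenter m N q (i + 1) - halfGap m N)) / (2 * halfGap m N))

theorem continuous_interp (q : Fin m) (c : ℕ → ℝ) : Continuous (interp m N q c) := by
  unfold interp
  fun_prop

theorem interp_eq_of_mem_gridCell (hN : 0 < N) (q : Fin m) (c : ℕ → ℝ) {i : ℕ} (hi : i ≤ N + 1)
    {t : ℝ} (ht : t ∈ gridCell m N q i) : interp m N q c t = c i := by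
  have hγ := halfGap_pos (m := m) hN
  rw [interp, add_sum_range_sub_mul_eq (a := i) (by omega), clamp01_ramp_eq_zero hγ ht.2, mul_zero,
    add_zero]
  · intro i' hi'
    have := gapCenter_mono q (show i' + 1 ≤ i by omega) (N := N)
    exact clamp01_ramp_eq_one hγ (by linarith [ht.1])
  · intro i' _ hi'
    have := gapCenter_mono q (show i + 1 ≤ i' + 1 by omega) (N := N)
    exact clamp01_ramp_eq_zero hγ (by linarith [ht.2])

theorem exists_interp_eq_of_mem_gridGap (hN : 0 < N) (q : Fin m) (c : ℕ → ℝ) {i : ℕ} (hi₁ : 1 ≤ i)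
    (hi : i ≤ N + 1) {t : ℝ} (ht : t ∈ gridGap m N q i) :
    ∃ s ∈ Icc (0 : ℝ) 1, interp m N q c t = c (i - 1) + (c i - c (i - 1)) * s := by
  have hγ := halfGap_pos (m := m) hN
  have h4γ := four_mul_halfGap_le (m := m) hN
  refine ⟨clamp01 ((t - (gapCenter m N q i - halfGap m N)) / (2 * halfGap m N)),
    clamp01_mem_Icc _, ?_⟩
  rw [interp, add_sum_range_sub_mul_eq (a := i - 1) (by omega), Nat.sub_add_cancel hi₁]
  · intro i' hi'
    refine clamp01_ramp_eq_one hγ ?_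
    have := gapCenter_mono q (show i' + 1 + 1 ≤ i by omega) (N := N)
    rw [gapCenter_succ hN] at this
    linarith [ht.1]
  · intro i' _ hi'
    refine clamp01_ramp_eq_zero hγ ?_
    have := gapCenter_mono q (show i + 1 ≤ i' + 1 by omega) (N := N)
    rw [gapCenter_succ hN] at this
    linarith [ht.2]

theorem abs_add_sub_mul_sub_le {x y a e s : ℝ} (hs : s ∈ Icc (0 : ℝ) 1) (hx : |x - a| ≤ e)
    (hy : |y - a| ≤ e) : |x + (y - x) * s - a| ≤ e :=
  calc |x + (y - x) * s - a| = |(1 - s) * (x - a) + s * (y - a)| := by ring_nf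
    _ ≤ (1 - s) * |x - a| + s * |y - a| := by
        refine (abs_add_le _ _).trans_eq ?_
        rw [abs_mul, abs_mul, abs_of_nonneg (sub_nonneg.2 hs.2), abs_of_nonneg hs.1]
    _ ≤ (1 - s) * e + s * e := by gcongr <;> linarith [hs.2, hs.1]
    _ = e := by ring

theorem abs_interp_sub_le (hN : 0 < N) (q : Fin m) {c : ℕ → ℝ} {t a e : ℝ} (ht : t ∈ Icc (0 : ℝ) 1)
    (hc : ∀ i ≤ N + 1, |t - cellMid m N q i| ≤ 1 / N → |c i - a| ≤ e) :
    |interp m N q c t - a| ≤ e := by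
  obtain ⟨i, hi, hcell | ⟨hi₁, hgap⟩⟩ := exists_mem_gridCell_or_gridGap hN q ht
  · rw [interp_eq_of_mem_gridCell hN q c hi hcell]
    exact hc i hi (abs_sub_cellMid_le_of_mem_gridCell hN hcell)
  · obtain ⟨s, hs, heq⟩ := exists_interp_eq_of_mem_gridGap hN q c hi₁ hi hgap
    obtain ⟨h₁, h₂⟩ := abs_sub_cellMid_le_of_mem_gridGap hN hi₁ hgap
    rw [heq]
    exact abs_add_sub_mul_sub_le hs (hc _ (by omega) h₁) (hc i hi h₂)

end Interpolation

section Encoding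

variable {d B : ℕ}

def digitSum (B : ℕ) (J : Fin d → ℕ) : ℕ := ∑ p, J p * B ^ (p : ℕ)

theorem digitSum_eq_finFunctionFinEquiv {J : Fin d → ℕ} (hJ : ∀ p, J p < B) :
    digitSum B J = finFunctionFinEquiv (fun p => (⟨J p, hJ p⟩ : Fin B)) := by
  rw [finFunctionFinEquiv_apply, digitSum]

theorem digitSum_lt {J : Fin d → ℕ} (hJ : ∀ p, J p < B) : digitSum B J < B ^ d := by
  rw [digitSum_eq_finFunctionFinEquiv hJ]; exact Fin.isLt _

theorem eq_of_digitSum_eq {J J' : Fin d → ℕ} (hJ : ∀ p, J p < B) (hJ' : ∀ p, J' p < B)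
    (h : digitSum B J = digitSum B J') : J = J' := by
  rw [digitSum_eq_finFunctionFinEquiv hJ, digitSum_eq_finFunctionFinEquiv hJ'] at h
  funext p
  exact congrArg Fin.val (congrFun (finFunctionFinEquiv.injective (Fin.ext h)) p)

-- `a` rounded to `ν * B ^ d * ℤ`, plus the digit `i` in place `p`: the sum over `p` is `ν` times
-- an integer whose residue modulo `B ^ d` determines the digits.
def plateauValue (ν : ℝ) (B : ℕ) (p : Fin d) (a : ℝ) (i : ℕ) : ℝ :=
  ν * (B ^ d * ⌊a / (ν * B ^ d)⌋ + i * B ^ (p : ℕ))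

theorem abs_plateauValue_sub_le {ν : ℝ} (hν : 0 < ν) (p : Fin d) (a : ℝ) {i : ℕ} (hi : i < B) :
    |plateauValue ν B p a i - a| ≤ 2 * ν * B ^ d := by
  have hK : (0 : ℝ) < ν * B ^ d := by
    have : (0 : ℝ) < B := by exact_mod_cast (show 0 < B by omega)
    positivity
  have hfl₁ := Int.floor_le (a / (ν * B ^ d))
  have hfl₂ := Int.lt_floor_add_one (a / (ν * B ^ d))
  rw [le_div_iff₀ hK] at hfl₁
  rw [div_lt_iff₀ hK] at hfl₂
  have hoff : (i : ℝ) * B ^ (p : ℕ) ≤ B ^ d := by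
    calc (i : ℝ) * B ^ (p : ℕ) ≤ B * B ^ (p : ℕ) := by gcongr
      _ = B ^ ((p : ℕ) + 1) := by ring
      _ ≤ B ^ d := pow_le_pow_right₀ (by exact_mod_cast (show 1 ≤ B by omega)) p.2
  have : 0 ≤ ν * ((i : ℝ) * B ^ (p : ℕ)) := by positivity
  rw [plateauValue, abs_le]
  constructor <;> nlinarith

theorem le_abs_sum_plateauValue_sub {ν : ℝ} (hν : 0 < ν) {J J' : Fin d → ℕ} (hJ : ∀ p, J p < B)
    (hJ' : ∀ p, J' p < B) (hne : J ≠ J') (a a' : Fin d → ℝ) :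
    ν ≤ |∑ p, plateauValue ν B p (a p) (J p) - ∑ p, plateauValue ν B p (a' p) (J' p)| := by
  have hsum : ∀ (J : Fin d → ℕ) (a : Fin d → ℝ), ∑ p, plateauValue ν B p (a p) (J p) =
      ν * ((B ^ d * ∑ p, ⌊a p / (ν * B ^ d)⌋ + digitSum B J : ℤ) : ℝ) := by
    intro J a
    simp only [plateauValue, digitSum, ← Finset.mul_sum, Finset.sum_add_distrib]
    push_cast
    rw [Finset.mul_sum]
  set n : ℤ := (B ^ d * ∑ p, ⌊a p / (ν * B ^ d)⌋ + digitSum B J) -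
    (B ^ d * ∑ p, ⌊a' p / (ν * B ^ d)⌋ + digitSum B J') with hn
  have hn0 : n ≠ 0 := by
    intro h0
    have hdvd : ((B ^ d : ℕ) : ℤ) ∣ (digitSum B J' : ℤ) - digitSum B J :=
      ⟨∑ p, ⌊a p / (ν * B ^ d)⌋ - ∑ p, ⌊a' p / (ν * B ^ d)⌋, by push_cast; linarith⟩
    have hlt : |(digitSum B J' : ℤ) - digitSum B J| < ((B ^ d : ℕ) : ℤ) := by
      have := digitSum_lt hJ
      have := digitSum_lt hJ'
      rw [abs_lt]; constructor <;> omega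
    have := Int.eq_zero_of_abs_lt_dvd hdvd hlt
    exact hne (eq_of_digitSum_eq hJ hJ' (by omega))
  rw [hsum, hsum, ← mul_sub, ← Int.cast_sub, ← hn, abs_mul, abs_of_pos hν, ← Int.cast_abs]
  exact le_mul_of_one_le_right hν.le (by exact_mod_cast Int.one_le_abs hn0)

end Encoding

theorem exists_continuous_limit {α E : Type*} [TopologicalSpace α] [MetricSpace E] [CompleteSpace E]
    {u : ℕ → α → E} (hu : ∀ k, Continuous (u k)) {τ : ℕ → ℝ} (hτ : ∀ k, τ (k + 1) ≤ τ k / 2)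
    (hdist : ∀ k x, dist (u k x) (u (k + 1) x) ≤ τ k) :
    ∃ Φ : α → E, Continuous Φ ∧ ∀ k x, dist (u k x) (Φ x) ≤ 2 * τ k := by
  have hτj : ∀ k j, τ (k + j) ≤ τ k / 2 ^ j := by
    intro k j
    induction j with
    | zero => simp
    | succ j ih =>
      calc τ (k + (j + 1)) ≤ τ (k + j) / 2 := hτ _
        _ ≤ τ k / 2 ^ j / 2 := by gcongr
        _ = τ k / 2 ^ (j + 1) := by ring
  have hgeom : ∀ k x j, dist (u (k + j) x) (u (k + j + 1) x) ≤ 2 * τ k / 2 / 2 ^ j := fun k x j =>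
    (hdist _ x).trans ((hτj k j).trans_eq (by ring))
  have hcauchy : ∀ x, CauchySeq fun j => u j x := fun x =>
    cauchySeq_of_le_geometric_two (C := 2 * τ 0) fun j => by simpa using hgeom 0 x j
  choose Φ hΦ using fun x => cauchySeq_tendsto_of_complete (hcauchy x)
  have hbound : ∀ k x, dist (u k x) (Φ x) ≤ 2 * τ k := fun k x =>
    dist_le_of_le_geometric_two_of_tendsto₀ (f := fun j => u (k + j) x) (hgeom k x)
      (by simpa only [add_comm, Function.comp_def] using (hΦ x).comp (tendsto_add_atTop_nat k))
  refine ⟨Φ, TendstoUniformly.continuous (p := atTop) ?_ (Frequently.of_forall hu), hbound⟩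
  rw [Metric.tendstoUniformly_iff]
  intro ε hε
  have h2 : Tendsto (fun k : ℕ => 2 * (τ 0 / 2 ^ k)) atTop (𝓝 0) := by
    simpa using (tendsto_const_nhds (x := τ 0)).div_atTop
      (tendsto_pow_atTop_atTop_of_one_lt (one_lt_two (α := ℝ))) |>.const_mul 2
  filter_upwards [h2.eventually (gt_mem_nhds hε)] with k hk x
  rw [dist_comm]
  refine (hbound k x).trans_lt (lt_of_le_of_lt ?_ hk)
  linarith [zero_add k ▸ hτj 0 k]

theorem eventually_abs_sub_le_of_continuousOn {K : Set ℝ} (hK : IsCompact K) {ψ : ℝ → ℝ}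
    (hψ : ContinuousOn ψ K) {e : ℝ} (he : 0 < e) :
    ∀ᶠ N : ℕ in atTop, ∀ s ∈ K, ∀ t ∈ K, |s - t| ≤ 1 / N → |ψ s - ψ t| ≤ e := by
  obtain ⟨δ, hδ, hψδ⟩ := Metric.uniformContinuousOn_iff.1
    (hK.uniformContinuousOn_of_continuous hψ) e he
  filter_upwards [tendsto_one_div_atTop_nhds_zero_nat.eventually (gt_mem_nhds hδ)] with N hN
  intro s hs t ht hst
  exact (hψδ s hs t ht ((Real.dist_eq s t).trans_le hst |>.trans_lt hN)).le

structure Stage (d : ℕ) where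
  φ : Fin d → Fin (2 * d + 1) → ℝ → ℝ
  continuous_φ : ∀ p q, Continuous (φ p q)
  N : ℕ
  N_pos : 0 < N
  value : Fin (2 * d + 1) → Fin d → ℕ → ℝ
  margin : ℝ
  margin_pos : 0 < margin
  φ_eq_value : ∀ p q, ∀ i ≤ N + 1, ∀ t ∈ gridCell (2 * d + 1) N q i, φ p q t = value q p i
  margin_le_abs_sum_sub : ∀ q (J J' : Fin d → ℕ), (∀ p, J p ≤ N + 1) → (∀ p, J' p ≤ N + 1) →
    J ≠ J' → margin ≤ |∑ p, value q p (J p) - ∑ p, value q p (J' p)|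

theorem exists_refinement {d : ℕ} (ψ : Fin d → Fin (2 * d + 1) → ℝ → ℝ)
    (hψ : ∀ p q, Continuous (ψ p q)) {e : ℝ} (he : 0 < e) (j : ℕ) :
    ∃ S : Stage d, j ≤ S.N ∧ S.margin ≤ e ∧
      ∀ p q, ∀ t ∈ Icc (0 : ℝ) 1, |S.φ p q t - ψ p q t| ≤ e := by
  obtain ⟨N, hN₁, hψN⟩ := ((eventually_ge_atTop (max j 1)).and (Filter.eventually_all.2
    fun pq : Fin d × Fin (2 * d + 1) => eventually_abs_sub_le_of_continuousOn (K := Icc (-1) 3)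
      isCompact_Icc (hψ pq.1 pq.2).continuousOn (half_pos he))).exists
  have hjN : j ≤ N := le_of_max_le_left hN₁
  have hN : 0 < N := le_of_max_le_right hN₁
  set B := N + 2
  have hB : (0 : ℝ) < (B : ℝ) ^ d := by positivity
  set ν := e / (4 * (B : ℝ) ^ d) with hν
  have hν₀ : 0 < ν := by positivity
  let value : Fin (2 * d + 1) → Fin d → ℕ → ℝ := fun q p i =>
    plateauValue ν B p (ψ p q (cellMid (2 * d + 1) N q i)) i
  refine ⟨⟨fun p q => interp (2 * d + 1) N q (value q p), fun p q => continuous_interp q _, N, hN,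
    value, ν, hν₀, fun p q i hi t ht => interp_eq_of_mem_gridCell hN q _ hi ht,
    fun q J J' hJ hJ' hne => le_abs_sum_plateauValue_sub hν₀ (fun p => by have := hJ p; omega)
      (fun p => by have := hJ' p; omega) hne _ _⟩, hjN, ?_, ?_⟩
  · change ν ≤ e
    rw [hν, div_le_iff₀ (by positivity)]
    nlinarith [one_le_pow₀ (show (1 : ℝ) ≤ B by exact_mod_cast (show 1 ≤ B by omega)) (n := d)]
  · intro p q t ht
    refine abs_interp_sub_le hN q ht fun i hi hti => ?_
    have hval := abs_plateauValue_sub_le hν₀ p (ψ p q (cellMid (2 * d + 1) N q i))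
      (show i < B by omega)
    have hosc := hψN (p, q) _ (cellMid_mem_Icc hN q hi) t ⟨by linarith [ht.1], by linarith [ht.2]⟩
      (by rwa [abs_sub_comm])
    have : 2 * ν * (B : ℝ) ^ d = e / 2 := by rw [hν]; field_simp; ring
    calc |value q p i - ψ p q t|
        ≤ |value q p i - ψ p q (cellMid (2 * d + 1) N q i)| +
          |ψ p q (cellMid (2 * d + 1) N q i) - ψ p q t| := abs_sub_le _ _ _
      _ ≤ e := by linarith

section Bricks

variable {d m N : ℕ}

def cellBox (d N : ℕ) : Finset (Fin d → ℕ) := Fintype.piFinset fun _ => Finset.range (N + 2)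

theorem mem_cellBox {J : Fin d → ℕ} : J ∈ cellBox d N ↔ ∀ p, J p ≤ N + 1 := by
  simp [cellBox, Nat.lt_succ_iff]

def brick (m N : ℕ) (q : Fin m) (J : Fin d → ℕ) : Set (Fin d → ℝ) :=
  {x | x ∈ Icc 0 1 ∧ ∀ p, x p ∈ gridCell m N q (J p)}

theorem exists_card_add_le_forall_mem_brick (hN : 0 < N) {x : Fin d → ℝ} (hx : x ∈ Icc 0 1) :
    ∃ Q : Finset (Fin m), m ≤ Q.card + d ∧ ∀ q ∈ Q, ∃ J ∈ cellBox d N, x ∈ brick m N q J := by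
  classical
  let Q := Finset.univ.filter fun q : Fin m => ∀ p, ∃ i ≤ N + 1, x p ∈ gridCell m N q i
  refine ⟨Q, ?_, fun q hq => ?_⟩
  · have hcard := Finset.card_le_card_of_forall_subsingleton
      (s := Finset.univ.filter (· ∉ Q)) (t := Finset.univ) (fun q p => ∃ i, x p ∈ gridGap m N q i)
      (fun q hq => by
        simp only [Q, Finset.mem_filter, Finset.mem_univ, true_and, not_forall, not_exists,
          not_and] at hq
        obtain ⟨p, hp⟩ := hq
        obtain ⟨i, hi, h | ⟨-, h⟩⟩ := exists_mem_gridCell_or_gridGap hN q ⟨hx.1 p, hx.2 p⟩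
        exacts [absurd h (hp i hi), ⟨p, Finset.mem_univ _, i, h⟩])
      fun p _ q ⟨_, i, hi⟩ q' ⟨_, i', hi'⟩ => eq_of_mem_gridGap hN hi hi'
    have := Finset.card_filter_add_card_filter_not (s := Finset.univ) (· ∈ Q)
    simp only [Finset.card_univ, Fintype.card_fin, Finset.filter_mem_eq_inter,
      Finset.univ_inter] at hcard this
    omega
  · simp only [Q, Finset.mem_filter, Finset.mem_univ, true_and] at hq
    choose J hJ hxJ using hq
    exact ⟨J, mem_cellBox.2 hJ, hx, hxJ⟩

theorem dist_clamp01_cellMid_lt (hN : 0 < N) {q : Fin m} {J : Fin d → ℕ} {x : Fin d → ℝ}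
    (hx : x ∈ brick m N q J) {δ : ℝ} (hδ : 1 / N < δ) :
    dist x (fun p => clamp01 (cellMid m N q (J p))) < δ := by
  refine (dist_pi_lt_iff ((by positivity : (0 : ℝ) ≤ 1 / N).trans_lt hδ)).2 fun p => ?_
  rw [Real.dist_eq]
  exact ((abs_sub_clamp01_le ⟨hx.1.1 p, hx.1.2 p⟩ _).trans
    (abs_sub_cellMid_le_of_mem_gridCell hN (hx.2 p))).trans_lt hδ

end Bricks

namespace Stage

variable {d : ℕ} (S : Stage d)

theorem abs_sum_sub_sum_value_le {Φ : Fin d → Fin (2 * d + 1) → ℝ → ℝ}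
    (hΦ : ∀ p q, ∀ t ∈ Icc (0 : ℝ) 1, |Φ p q t - S.φ p q t| ≤ S.margin / (8 * (d + 1)))
    {q : Fin (2 * d + 1)} {J : Fin d → ℕ} (hJ : J ∈ cellBox d S.N) {x : Fin d → ℝ}
    (hx : x ∈ brick (2 * d + 1) S.N q J) :
    |∑ p, Φ p q (x p) - ∑ p, S.value q p (J p)| ≤ S.margin / 8 := by
  rw [← Finset.sum_sub_distrib]
  refine (Finset.abs_sum_le_sum_abs _ _).trans ?_
  calc ∑ p, |Φ p q (x p) - S.value q p (J p)| ≤ ∑ _p : Fin d, S.margin / (8 * (d + 1)) :=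
        Finset.sum_le_sum fun p _ => by
          have := S.φ_eq_value p q _ (mem_cellBox.1 hJ p) _ (hx.2 p)
          rw [← this]
          exact hΦ p q _ ⟨hx.1.1 p, hx.1.2 p⟩
    _ = d / (d + 1) * (S.margin / 8) := by
        rw [Finset.sum_const, Finset.card_univ, Fintype.card_fin, nsmul_eq_mul]; field_simp
    _ ≤ S.margin / 8 :=
        mul_le_of_le_one_left (by linarith [S.margin_pos])
          ((div_le_one (by positivity)).2 (by linarith))

def separatingCover {Φ : Fin d → Fin (2 * d + 1) → ℝ → ℝ}
    (hΦ : ∀ p q, ∀ t ∈ Icc (0 : ℝ) 1, |Φ p q t - S.φ p q t| ≤ S.margin / (8 * (d + 1)))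
    {δ : ℝ} (hδ : 1 / S.N < δ) :
    SeparatingCover (Icc (0 : Fin d → ℝ) 1) (fun q x => ∑ p, Φ p q (x p)) (d + 1) δ
      (Fin d → ℕ) where
  index := cellBox d S.N
  brick := brick (2 * d + 1) S.N
  center q J p := clamp01 (cellMid (2 * d + 1) S.N q (J p))
  level q J := ∑ p, S.value q p (J p)
  margin := S.margin
  margin_pos := S.margin_pos
  center_mem _ _ := ⟨fun _ => (clamp01_mem_Icc _).1, fun _ => (clamp01_mem_Icc _).2⟩
  dist_center_lt _ _ _ _ hx := dist_clamp01_cellMid_lt S.N_pos hx hδ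
  abs_sub_level_le _ _ hJ _ hx := S.abs_sum_sub_sum_value_le hΦ hJ hx
  margin_le_abs_level_sub q J hJ J' hJ' hne :=
    S.margin_le_abs_sum_sub q J J' (mem_cellBox.1 hJ) (mem_cellBox.1 hJ') hne
  covered _ hx := (exists_card_add_le_forall_mem_brick S.N_pos hx).imp fun _ hQ => ⟨by omega, hQ.2⟩

-- All later stages together move `φ` by at most `2 * tolerance`, which summed over the `d`
-- coordinates keeps the inner sums within `margin / 8` of the levels.
def tolerance : ℝ := S.margin / (16 * (d + 1))

theorem tolerance_pos : 0 < S.tolerance := by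
  unfold tolerance; have := S.margin_pos; positivity

end Stage

def stage (d : ℕ) : ℕ → Stage d
  | 0 => (exists_refinement (fun _ _ _ => 0) (fun _ _ => continuous_const) one_pos 0).choose
  | k + 1 => (exists_refinement (stage d k).φ (stage d k).continuous_φ (stage d k).tolerance_pos
      (k + 1)).choose

theorem stage_succ_spec (d k : ℕ) :
    k + 1 ≤ (stage d (k + 1)).N ∧ (stage d (k + 1)).margin ≤ (stage d k).tolerance ∧
      ∀ p q, ∀ t ∈ Icc (0 : ℝ) 1,
        |(stage d (k + 1)).φ p q t - (stage d k).φ p q t| ≤ (stage d k).tolerance :=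
  (exists_refinement (stage d k).φ (stage d k).continuous_φ (stage d k).tolerance_pos
    (k + 1)).choose_spec

theorem tolerance_stage_succ_le (d k : ℕ) :
    (stage d (k + 1)).tolerance ≤ (stage d k).tolerance / 2 := by
  have h := (stage_succ_spec d k).2.1
  have := (stage d k).tolerance_pos
  unfold Stage.tolerance at *
  rw [div_le_iff₀ (by positivity)]
  nlinarith

theorem exists_continuous_abs_sub_stage_le (d : ℕ) :
    ∃ Φ : Fin d → Fin (2 * d + 1) → ℝ → ℝ, (∀ p q, Continuous (Φ p q)) ∧
      ∀ k p q, ∀ t ∈ Icc (0 : ℝ) 1,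
        |Φ p q t - (stage d k).φ p q t| ≤ 2 * (stage d k).tolerance := by
  have h : ∀ p q, ∃ Φ : ℝ → ℝ, Continuous Φ ∧
      ∀ k t, dist ((stage d k).φ p q (clamp01 t)) (Φ t) ≤ 2 * (stage d k).tolerance := fun p q =>
    exists_continuous_limit (fun k => ((stage d k).continuous_φ p q).comp continuous_clamp01)
      (tolerance_stage_succ_le d) fun k t => by
        rw [Real.dist_eq, abs_sub_comm]
        exact (stage_succ_spec d k).2.2 p q _ (clamp01_mem_Icc t)
  choose Φ hΦ hΦk using h
  refine ⟨Φ, hΦ, fun k p q t ht => ?_⟩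
  have := hΦk p q k t
  rwa [clamp01_of_mem ht, Real.dist_eq, abs_sub_comm] at this

theorem exists_continuous_nonempty_separatingCover (d : ℕ) :
    ∃ Φ : Fin d → Fin (2 * d + 1) → ℝ → ℝ, (∀ p q, Continuous (Φ p q)) ∧ ∀ δ > 0,
      Nonempty (SeparatingCover (Icc (0 : Fin d → ℝ) 1) (fun q x => ∑ p, Φ p q (x p)) (d + 1) δ
        (Fin d → ℕ)) := by
  obtain ⟨Φ, hΦ, hΦk⟩ := exists_continuous_abs_sub_stage_le d
  refine ⟨Φ, hΦ, fun δ hδ => ?_⟩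
  obtain ⟨k, hk⟩ := exists_nat_one_div_lt hδ
  have hN : (k : ℝ) + 1 ≤ (stage d (k + 1)).N := by exact_mod_cast (stage_succ_spec d k).1
  refine ⟨(stage d (k + 1)).separatingCover (fun p q t ht => (hΦk (k + 1) p q t ht).trans_eq ?_)
    ((one_div_le_one_div_of_le (by positivity) hN).trans_lt hk)⟩
  unfold Stage.tolerance
  field_simp
  ring

end KolmogorovSuperposition

end

theorem stmt17_general (d : ℕ) :
    ∃ φ : Fin d → Fin (2 * d + 1) → ℝ → ℝ,
      (∀ p q, ContinuousOn (φ p q) (Set.Icc (0 : ℝ) 1)) ∧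
      (∀ f : (Fin d → ℝ) → ℝ, ContinuousOn f (Set.Icc (0 : Fin d → ℝ) 1) →
        ∃ g : Fin (2 * d + 1) → ℝ → ℝ, (∀ q, Continuous (g q)) ∧
          ∀ x ∈ Set.Icc (0 : Fin d → ℝ) 1, f x = ∑ q, g q (∑ p, φ p q (x p))) ∧
      (∀ f : (Fin d → ℝ) → ℝ,
        ∃ g : Fin (2 * d + 1) → ℝ → ℝ,
          ∀ x ∈ Set.Icc (0 : Fin d → ℝ) 1, f x = ∑ q, g q (∑ p, φ p q (x p))) := by
  obtain ⟨Φ, hΦ, hC⟩ := KolmogorovSuperposition.exists_continuous_nonempty_separatingCover d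
  have hcard : Fintype.card (Fin (2 * d + 1)) < 2 * (d + 1) := by simp; omega
  refine ⟨Φ, fun p q => (hΦ p q).continuousOn, fun f hf => ?_, fun f => ?_⟩
  · exact KolmogorovSuperposition.exists_continuous_sum_comp_eq_of_cover isCompact_Icc
      (fun q => (continuous_finsetSum _ fun p _ => (hΦ p q).comp (continuous_apply p)).continuousOn)
      hcard hC hf
  · exact (KolmogorovSuperposition.SeparatingCover.hasPrivateSlots hcard hC).exists_sum_comp_eq f

/-- There exist universal continuous inner functions `φ_{pq} : [0,1] → ℝ`
(`p = 1,...,d`, `q = 1,...,2d+1`) such that (a) every continuous function on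
the cube `[0,1]^d` is represented as `∑_q g_q(∑_p φ_{pq}(x_p))` with continuous
outer functions `g_q` (Kolmogorov's superposition theorem), and (b) every
function on `[0,1]^d`, without any regularity assumption, is represented in
the same form with (generally discontinuous) outer functions `g_q`. -/
theorem stmt17 (d : ℕ) (hd : 2 ≤ d) :
    ∃ φ : Fin d → Fin (2 * d + 1) → ℝ → ℝ,
      (∀ p q, ContinuousOn (φ p q) (Set.Icc (0 : ℝ) 1)) ∧
      (∀ f : (Fin d → ℝ) → ℝ, ContinuousOn f (Set.Icc (0 : Fin d → ℝ) 1) →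
        ∃ g : Fin (2 * d + 1) → ℝ → ℝ, (∀ q, Continuous (g q)) ∧
          ∀ x ∈ Set.Icc (0 : Fin d → ℝ) 1, f x = ∑ q, g q (∑ p, φ p q (x p))) ∧
      (∀ f : (Fin d → ℝ) → ℝ,
        ∃ g : Fin (2 * d + 1) → ℝ → ℝ,
          ∀ x ∈ Set.Icc (0 : Fin d → ℝ) 1, f x = ∑ q, g q (∑ p, φ p q (x p))) :=
  stmt17_general d
end
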